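/- arXiv:1201.1308 — 11 statements merged into one kernel-verified Lean document; each statement's English description precedes it below -/
import Mathlib

section
/- Let X be a Banach space and (X_k) a sequence of closed subspaces. Define D_c as the space of sequences ξ = (x_1, x_2, ...) with x_k ∈ X_k such that the series Σ x_k converges in X, equipped with the norm ‖ξ‖ = sup_{k≥1} ‖x_1 + ... + x_k‖. Then D_c is a Banach space. -/
open Filter Finset

/-- `f` is a member of `D_c`: each term lies in the corresponding subspace and the
series `Σ f k` converges in `X`. -/
def MemDc {E : Type*} [NormedAddCommGroup E] [NormedSpace ℝ E]
    (X : ℕ → Submodule ℝ E) (f : ℕ → E) : Prop :=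
  (∀ k, f k ∈ X k) ∧ ∃ x : E, Tendsto (fun n => ∑ k ∈ Finset.range n, f k) atTop (nhds x)

/-- The norm on `D_c`: the supremum of the norms of the partial sums. -/
noncomputable def DcNorm {E : Type*} [NormedAddCommGroup E] (f : ℕ → E) : ℝ :=
  ⨆ n : ℕ, ‖∑ k ∈ Finset.range (n + 1), f k‖

/-!
Through its partial sums `m ↦ ∑ k < m, ξ k`, an element `ξ` of `D_c` becomes a convergent
sequence in `E`, and `DcNorm` becomes the sup norm. A `DcNorm`-Cauchy sequence therefore has
uniformly Cauchy partial sums, which converge uniformly to some `T : ℕ → E` because `E` is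
complete. A uniform limit of Cauchy sequences is Cauchy, so `T` converges, and the increments
`T (k + 1) - T k` lie in `X k` since they are limits of terms of the `k`-th subspace, which is
closed. These increments form the limit in `D_c`.
-/

section UniformLimit

variable {α β ι : Type*} [PseudoMetricSpace β]

theorem TendstoUniformly.cauchySeq_of_forall_cauchySeq [Nonempty α] [SemilatticeSup α]
    {p : Filter ι} [p.NeBot] {F : ι → α → β} {f : α → β}
    (h : TendstoUniformly F f p) (hF : ∀ i, CauchySeq (F i)) : CauchySeq f := by
  rw [Metric.cauchySeq_iff']
  intro ε hε
  obtain ⟨i, hi⟩ := (Metric.tendstoUniformly_iff.1 h (ε / 3) (by positivity)).exists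
  obtain ⟨N, hN⟩ := Metric.cauchySeq_iff'.1 (hF i) (ε / 3) (by positivity)
  refine ⟨N, fun n hn => ?_⟩
  calc dist (f n) (f N) ≤ dist (f n) (F i n) + dist (F i n) (F i N) + dist (F i N) (f N) :=
        dist_triangle4 _ _ _ _
    _ < ε / 3 + ε / 3 + ε / 3 := by
        gcongr
        · exact hi n
        · exact hN n hn
        · rw [dist_comm]; exact hi N
    _ = ε := by ring

theorem UniformCauchySeqOn.exists_tendstoUniformly [CompleteSpace β] [Nonempty ι]
    [SemilatticeSup ι] {F : ι → α → β} (h : UniformCauchySeqOn F atTop Set.univ) :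
    ∃ f : α → β, TendstoUniformly F f atTop := by
  choose f hf using fun x => cauchySeq_tendsto_of_complete (h.cauchySeq (Set.mem_univ x))
  exact ⟨f, tendstoUniformlyOn_univ.1 (h.tendstoUniformlyOn_of_tendsto fun x _ => hf x)⟩

end UniformLimit

section DcNorm

variable {E : Type*} [NormedAddCommGroup E] {f : ℕ → E}

theorem bddAbove_norm_sum_range_succ_of_tendsto {x : E}
    (hf : Tendsto (fun n => ∑ k ∈ range n, f k) atTop (nhds x)) :
    BddAbove (Set.range fun n => ‖∑ k ∈ range (n + 1), f k‖) :=
  (hf.comp (tendsto_add_atTop_nat 1)).norm.bddAbove_range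

-- If the partial sums are unbounded, `DcNorm f` is the junk value `0`, hence `hf`.
theorem norm_sum_range_le_DcNorm
    (hf : BddAbove (Set.range fun n => ‖∑ k ∈ range (n + 1), f k‖)) (m : ℕ) :
    ‖∑ k ∈ range m, f k‖ ≤ DcNorm f := by
  cases m with
  | zero =>
    simpa [DcNorm] using Real.iSup_nonneg fun n => norm_nonneg (∑ k ∈ range (n + 1), f k)
  | succ m => exact le_ciSup hf m

theorem DcNorm_le_of_forall {ε : ℝ} (h : ∀ m, ‖∑ k ∈ range m, f k‖ ≤ ε) :
    DcNorm f ≤ ε :=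
  ciSup_le fun n => h (n + 1)

end DcNorm

/-- `D_c` is a Banach space: every Cauchy sequence (with respect to the norm `DcNorm`)
of elements of `D_c` converges in `D_c`. -/
theorem Dc_complete {E : Type*} [NormedAddCommGroup E] [NormedSpace ℝ E] [CompleteSpace E]
    (X : ℕ → Submodule ℝ E) (hX : ∀ k, IsClosed (X k : Set E))
    (F : ℕ → ℕ → E) (hF : ∀ n, MemDc X (F n))
    (hcauchy : ∀ ε : ℝ, 0 < ε → ∃ N, ∀ m ≥ N, ∀ n ≥ N,
      DcNorm (fun k => F m k - F n k) ≤ ε) :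
    ∃ f : ℕ → E, MemDc X f ∧
      ∀ ε : ℝ, 0 < ε → ∃ N, ∀ n ≥ N, DcNorm (fun k => F n k - f k) ≤ ε := by
  set S : ℕ → ℕ → E := fun n m => ∑ k ∈ range m, F n k
  choose y hy using fun n => (hF n).2
  have hS : UniformCauchySeqOn S atTop Set.univ := by
    refine Metric.uniformCauchySeqOn_iff.2 fun ε hε => ?_
    obtain ⟨N, hN⟩ := hcauchy (ε / 2) (half_pos hε)
    refine ⟨N, fun a ha b hb m _ => ?_⟩
    have hbdd := bddAbove_norm_sum_range_succ_of_tendsto (f := fun k => F a k - F b k) (by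
      simpa only [sum_sub_distrib] using (hy a).sub (hy b))
    calc dist (S a m) (S b m) = ‖∑ k ∈ range m, (F a k - F b k)‖ := by
          rw [dist_eq_norm, sum_sub_distrib]
      _ ≤ ε / 2 := (norm_sum_range_le_DcNorm hbdd m).trans (hN a ha b hb)
      _ < ε := half_lt_self hε
  obtain ⟨T, hT⟩ := hS.exists_tendstoUniformly
  have hT_zero : T 0 = 0 := tendsto_nhds_unique (hT.tendsto_at 0) (by simp [S])
  obtain ⟨x, hx⟩ := cauchySeq_tendsto_of_complete
    (hT.cauchySeq_of_forall_cauchySeq fun n => (hy n).cauchySeq)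
  refine ⟨fun k => T (k + 1) - T k, ⟨fun k => ?_, x, ?_⟩, fun ε hε => ?_⟩
  · refine (hX k).mem_of_tendsto ((hT.tendsto_at (k + 1)).sub (hT.tendsto_at k))
      (Eventually.of_forall fun n => ?_)
    simpa only [S, sum_range_succ_sub_sum, SetLike.mem_coe] using (hF n).1 k
  · simpa only [sum_range_sub, hT_zero, sub_zero] using hx
  · obtain ⟨N, hN⟩ := eventually_atTop.1 (Metric.tendstoUniformly_iff.1 hT ε hε)
    refine ⟨N, fun n hn => DcNorm_le_of_forall fun m => ?_⟩
    rw [sum_sub_distrib, sum_range_sub, hT_zero, sub_zero, ← dist_eq_norm, dist_comm]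
    exact (hN n hn m).le
end

section
/- Let X be a Banach space and (X_k) closed subspaces forming a representing system (every x ∈ X can be written as a convergent series x = Σ x_k with x_k ∈ X_k). Then there exists M > 0 such that every x ∈ X admits a representation x = Σ x_k with x_k ∈ X_k and sup_{k≥1} ‖x_1 + ... + x_k‖ ≤ M‖x‖. -/
open Filter Finset

/-- `S = (X_k)` is a representing system of subspaces: every `x` is the sum of a
convergent series with `k`-th term in `X_k`. -/
def IsRSS {E : Type*} [NormedAddCommGroup E] [NormedSpace ℝ E]
    (X : ℕ → Submodule ℝ E) : Prop :=
  ∀ x : E, ∃ f : ℕ → E, (∀ k, f k ∈ X k) ∧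
    Tendsto (fun n => ∑ k ∈ Finset.range n, f k) atTop (nhds x)

/-!
Convergent sequences in `E` are the continuous maps `OnePoint ℕ → E`, a Banach space under the
sup norm. The partial-sum sequences of series with `k`-th term in `X k` form a closed subspace,
and the limit map (evaluation at `∞`) from it to `E` is bounded and, by the representing
property, surjective. The open mapping theorem gives preimages of norm at most `M‖x‖`, and the
norm of a preimage bounds all its partial sums.
-/

open OnePoint

section PartialSums

variable {𝕜 E : Type*} [NontriviallyNormedField 𝕜] [NormedAddCommGroup E] [NormedSpace 𝕜 E]

variable (𝕜) in
/-- The `k`-th term of the series whose partial sum `∑ k ∈ range (n + 1), _` is `g n`. -/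
noncomputable def seriesTermCLM : ℕ → C(OnePoint ℕ, E) →L[𝕜] E
  | 0 => ContinuousMap.evalCLM 𝕜 ((0 : ℕ) : OnePoint ℕ)
  | k + 1 => ContinuousMap.evalCLM 𝕜 ((k + 1 : ℕ) : OnePoint ℕ) -
      ContinuousMap.evalCLM 𝕜 ((k : ℕ) : OnePoint ℕ)

theorem sum_range_succ_seriesTermCLM (g : C(OnePoint ℕ, E)) (n : ℕ) :
    ∑ k ∈ range (n + 1), seriesTermCLM 𝕜 k g = g n := by
  induction n with
  | zero => simp [seriesTermCLM]
  | succ n ih =>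
    rw [sum_range_succ, ih]
    simp [seriesTermCLM]

theorem seriesTermCLM_eq_of_partialSums {g : C(OnePoint ℕ, E)} {f : ℕ → E}
    (hg : ∀ n : ℕ, g n = ∑ k ∈ range (n + 1), f k) (k : ℕ) :
    seriesTermCLM 𝕜 k g = f k := by
  cases k with
  | zero => simp [seriesTermCLM, hg]
  | succ k => simp [seriesTermCLM, hg, sum_range_succ_sub_sum]

noncomputable def partialSums (X : ℕ → Submodule 𝕜 E) : Submodule 𝕜 C(OnePoint ℕ, E) :=
  ⨅ k, (X k).comap (seriesTermCLM 𝕜 k).toLinearMap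

theorem mem_partialSums {X : ℕ → Submodule 𝕜 E} {g : C(OnePoint ℕ, E)} :
    g ∈ partialSums X ↔ ∀ k, seriesTermCLM 𝕜 k g ∈ X k := by
  simp [partialSums]

theorem isClosed_partialSums {X : ℕ → Submodule 𝕜 E} (hX : ∀ k, IsClosed (X k : Set E)) :
    IsClosed (partialSums X : Set C(OnePoint ℕ, E)) := by
  rw [partialSums, Submodule.coe_iInf]
  exact isClosed_iInter fun k => (hX k).preimage (seriesTermCLM _ k).continuous

noncomputable def limitCLM (X : ℕ → Submodule 𝕜 E) : partialSums X →L[𝕜] E :=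
  (ContinuousMap.evalCLM 𝕜 ∞).comp (partialSums X).subtypeL

end PartialSums

theorem IsRSS.surjective_limitCLM {E : Type*} [NormedAddCommGroup E] [NormedSpace ℝ E]
    {X : ℕ → Submodule ℝ E} (hS : IsRSS X) : Function.Surjective (limitCLM X) := by
  intro x
  obtain ⟨f, hfX, hf⟩ := hS x
  let g := continuousMapMkNat (fun n => ∑ k ∈ range (n + 1), f k) x
    ((tendsto_add_atTop_iff_nat 1).2 hf)
  have hterm : ∀ k, seriesTermCLM ℝ k g = f k := seriesTermCLM_eq_of_partialSums fun _ => rfl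
  exact ⟨⟨g, mem_partialSums.2 fun k => hterm k ▸ hfX k⟩, rfl⟩

/-- If `(X_k)` is a representing system of subspaces of a Banach space `X`, then there is
`M > 0` such that every `x` has a representation whose partial sums are all bounded by
`M‖x‖`. -/
theorem rss_bounded_representation {E : Type*} [NormedAddCommGroup E] [NormedSpace ℝ E]
    [CompleteSpace E] (X : ℕ → Submodule ℝ E) (hX : ∀ k, IsClosed (X k : Set E))
    (hS : IsRSS X) :
    ∃ M : ℝ, 0 < M ∧ ∀ x : E, ∃ f : ℕ → E, (∀ k, f k ∈ X k) ∧
      Tendsto (fun n => ∑ k ∈ Finset.range n, f k) atTop (nhds x) ∧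
      ∀ n : ℕ, ‖∑ k ∈ Finset.range (n + 1), f k‖ ≤ M * ‖x‖ := by
  have : CompleteSpace (partialSums X) := (isClosed_partialSums hX).completeSpace_coe
  obtain ⟨M, hM, hpre⟩ := (limitCLM X).exists_preimage_norm_le hS.surjective_limitCLM
  refine ⟨M, hM, fun x => ?_⟩
  obtain ⟨⟨g, hg⟩, rfl, hgM⟩ := hpre x
  refine ⟨fun k => seriesTermCLM ℝ k g, mem_partialSums.1 hg, ?_, fun n => ?_⟩
  · rw [← tendsto_add_atTop_iff_nat 1]
    simp only [sum_range_succ_seriesTermCLM]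
    exact (continuous_iff_from_nat g).1 g.continuous
  · rw [sum_range_succ_seriesTermCLM]
    exact (g.norm_coe_le_norm _).trans hgM
end

section
/- Let X be a Banach space and (X_k)_{k≥1} a representing system of subspaces of X. Define X_k' = ∩_{j≠k} X_j^⊥ ⊂ X* (the annihilators). Then there exists ε > 0 such that for all natural numbers n, m and all φ ∈ X_1' + ... + X_n', ψ ∈ X_{n+1}' + ... + X_{n+m}', one has ‖φ + ψ‖ ≥ ε‖φ‖. -/
open Filter Finset

/-- Annihilator of a subspace `Y ⊆ X` inside the continuous dual `X*`. -/
noncomputable def annih {E : Type*} [NormedAddCommGroup E] [NormedSpace ℝ E]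
    (Y : Submodule ℝ E) : Submodule ℝ (E →L[ℝ] ℝ) where
  carrier := {φ | ∀ x ∈ Y, φ x = 0}
  add_mem' := by intro φ ψ hφ hψ x hx; simp [hφ x hx, hψ x hx]
  zero_mem' := by intro x hx; simp
  smul_mem' := by intro a φ hφ x hx; simp [hφ x hx]

/-- The subspace `X_k' = ⋂_{j ≠ k} X_j^⊥` of the dual. -/
noncomputable def dualSystem {E : Type*} [NormedAddCommGroup E] [NormedSpace ℝ E]
    (X : ℕ → Submodule ℝ E) (k : ℕ) : Submodule ℝ (E →L[ℝ] ℝ) :=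
  ⨅ j ∈ {j | j ≠ k}, annih (X j)

/-!
Convergent sequences of partial sums of series `∑ x_k` with `x_k ∈ X k` form a Banach space under
the sup norm, and taking the sum is a bounded linear map onto `E` because the system is
representing. By the open mapping theorem every `x` is the sum of such a series whose partial sums
`s` satisfy `‖s‖ ≤ C ‖x‖`. A functional `φ ∈ X_0' + ⋯ + X_{n-1}'` kills `X k` for `k ≥ n` and
`ψ ∈ X_n' + ⋯ + X_{n+m-1}'` kills `X k` for `k < n`, so `φ x = φ (s n) = (φ + ψ) (s n)`, whence
`‖φ‖ ≤ C ‖φ + ψ‖`.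
-/

open OnePoint Topology

section

variable {E : Type*} [NormedAddCommGroup E] [NormedSpace ℝ E]

lemma iSup_dualSystem_le_annih (X : ℕ → Submodule ℝ E) {s : Finset ℕ} {j : ℕ} (hj : j ∉ s) :
    ⨆ k ∈ s, dualSystem X k ≤ annih (X j) :=
  iSup₂_le fun k hk => iInf₂_le j (show j ≠ k from fun h => hj (h ▸ hk))

lemma apply_eq_apply_of_mem_annih {X : ℕ → Submodule ℝ E} {s : ℕ → E}
    (hs : ∀ k, s (k + 1) - s k ∈ X k) {φ : E →L[ℝ] ℝ} {a b : ℕ} (hab : a ≤ b)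
    (hφ : ∀ k, a ≤ k → k < b → φ ∈ annih (X k)) :
    φ (s b) = φ (s a) := by
  induction b, hab using Nat.le_induction with
  | base => rfl
  | succ c hac ih =>
    have hinc : φ (s (c + 1) - s c) = 0 := hφ c hac c.lt_succ_self _ (hs c)
    rw [map_sub, sub_eq_zero] at hinc
    rw [hinc, ih fun k hak hkc => hφ k hak (hkc.trans c.lt_succ_self)]

/-- Continuous maps `s` on `ℕ ∪ {∞}` are the convergent sequences; here they are the partial sums
of a series `∑ x_k` with `x_k ∈ X k` and sum `s ∞`. -/
noncomputable def partialSumSpace (X : ℕ → Submodule ℝ E) : Submodule ℝ C(OnePoint ℕ, E) :=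
  let eval (n : ℕ) : C(OnePoint ℕ, E) →L[ℝ] E := ContinuousMap.evalCLM ℝ (n : OnePoint ℕ)
  LinearMap.ker (eval 0).toLinearMap ⊓ ⨅ k, (X k).comap (eval (k + 1) - eval k).toLinearMap

lemma mem_partialSumSpace {X : ℕ → Submodule ℝ E} {s : C(OnePoint ℕ, E)} :
    s ∈ partialSumSpace X ↔ s (0 : ℕ) = 0 ∧ ∀ k : ℕ, s (k + 1 : ℕ) - s k ∈ X k := by
  simp [partialSumSpace]

lemma isClosed_partialSumSpace (X : ℕ → Submodule ℝ E) (hX : ∀ k, IsClosed (X k : Set E)) :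
    IsClosed (partialSumSpace X : Set C(OnePoint ℕ, E)) := by
  simp only [partialSumSpace, Submodule.coe_inf, Submodule.coe_iInf, Submodule.comap_coe]
  exact (ContinuousLinearMap.isClosed_ker _).inter
    (isClosed_iInter fun k => (hX k).preimage (ContinuousLinearMap.continuous _))

lemma apply_eq_zero_of_mem_partialSumSpace {X : ℕ → Submodule ℝ E} {s : C(OnePoint ℕ, E)}
    (hs : s ∈ partialSumSpace X) {ψ : E →L[ℝ] ℝ} {n : ℕ} (hψ : ∀ k < n, ψ ∈ annih (X k)) :
    ψ (s n) = 0 := by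
  obtain ⟨hs0, hinc⟩ := mem_partialSumSpace.1 hs
  rw [apply_eq_apply_of_mem_annih (s := fun k : ℕ => s k) hinc n.zero_le fun k _ hk => hψ k hk,
    hs0, map_zero]

lemma apply_infty_eq_of_mem_partialSumSpace {X : ℕ → Submodule ℝ E} {s : C(OnePoint ℕ, E)}
    (hs : s ∈ partialSumSpace X) {φ : E →L[ℝ] ℝ} {n : ℕ} (hφ : ∀ k, n ≤ k → φ ∈ annih (X k)) :
    φ (s ∞) = φ (s n) := by
  have hlim : Tendsto (fun N : ℕ => φ (s N)) atTop (𝓝 (φ (s ∞))) :=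
    (φ.continuous.tendsto _).comp ((continuous_iff_from_nat s).1 s.continuous)
  refine tendsto_nhds_unique hlim (tendsto_const_nhds.congr' ?_)
  filter_upwards [eventually_ge_atTop n] with N hN
  exact (apply_eq_apply_of_mem_annih (s := fun k : ℕ => s k) (mem_partialSumSpace.1 hs).2 hN
    fun k hk _ => hφ k hk).symm

noncomputable def partialSumLimit (X : ℕ → Submodule ℝ E) : partialSumSpace X →L[ℝ] E :=
  (ContinuousMap.evalCLM ℝ ∞).comp (partialSumSpace X).subtypeL

lemma partialSumLimit_surjective {X : ℕ → Submodule ℝ E} (hS : IsRSS X) :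
    Function.Surjective (partialSumLimit X) := by
  intro x
  obtain ⟨f, hf, hconv⟩ := hS x
  refine ⟨⟨continuousMapMkNat _ x hconv, mem_partialSumSpace.2 ⟨?_, fun k => ?_⟩⟩, rfl⟩
  · exact sum_range_zero f
  · change ∑ i ∈ range (k + 1), f i - ∑ i ∈ range k, f i ∈ X k
    rw [sum_range_succ, add_sub_cancel_left]
    exact hf k

end

/-- If `(X_k)` is a representing system of subspaces of a Banach space `X`, then there is
`ε > 0` such that for all `n, m` and all `φ ∈ X_1' + ⋯ + X_n'`,
`ψ ∈ X_{n+1}' + ⋯ + X_{n+m}'` one has `‖φ + ψ‖ ≥ ε ‖φ‖`. -/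
theorem rss_dual_schauder_inequality {E : Type*} [NormedAddCommGroup E]
    [NormedSpace ℝ E] [CompleteSpace E] (X : ℕ → Submodule ℝ E)
    (hX : ∀ k, IsClosed (X k : Set E)) (hS : IsRSS X) :
    ∃ ε : ℝ, 0 < ε ∧ ∀ n m : ℕ, ∀ φ ∈ ⨆ k ∈ Finset.range n, dualSystem X k,
      ∀ ψ ∈ ⨆ k ∈ Finset.Ico n (n + m), dualSystem X k,
        ε * ‖φ‖ ≤ ‖φ + ψ‖ := by
  have := (isClosed_partialSumSpace X hX).completeSpace_coe
  obtain ⟨C, hC, hpre⟩ :=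
    (partialSumLimit X).exists_preimage_norm_le (partialSumLimit_surjective hS)
  refine ⟨C⁻¹, inv_pos.2 hC, fun n m φ hφ ψ hψ => ?_⟩
  rw [inv_mul_le_iff₀ hC]
  refine φ.opNorm_le_bound (by positivity) fun x => ?_
  obtain ⟨⟨s, hs⟩, rfl, hsC⟩ := hpre x
  have hφs : φ (s ∞) = φ (s n) := apply_infty_eq_of_mem_partialSumSpace hs fun k hk =>
    iSup_dualSystem_le_annih X (by simpa using hk) hφ
  have hψs : ψ (s n) = 0 := apply_eq_zero_of_mem_partialSumSpace hs fun k hk =>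
    iSup_dualSystem_le_annih X (by simp [hk]) hψ
  calc ‖φ (s ∞)‖ = ‖(φ + ψ) (s n)‖ := by rw [add_apply, hψs, add_zero, hφs]
    _ ≤ ‖φ + ψ‖ * ‖s‖ := (φ + ψ).le_opNorm_of_le (s.norm_coe_le_norm _)
    _ ≤ ‖φ + ψ‖ * (C * ‖s ∞‖) := by gcongr; exact hsC
    _ = C * ‖φ + ψ‖ * ‖s ∞‖ := by ring
end

section
/- Let X be a Banach space and (X_k)_{k≥1} a sequence of closed subspaces. Define Δ(S) = {x ∈ X : liminf_{k→∞} dist(x, X_k) = 0}. If the closure of the linear span of Δ(S) equals X, then (X_k) is a representing system of subspaces in X: every x ∈ X can be written as a convergent series x = Σ_{k=1}^∞ x_k with x_k ∈ X_k. -/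
open Filter Finset

/-- The set `Δ(S) = {x | liminf_k dist(x, X_k) = 0}`. -/
def DeltaSet {E : Type*} [NormedAddCommGroup E] [NormedSpace ℝ E]
    (X : ℕ → Submodule ℝ E) : Set E :=
  {x | Filter.liminf (fun k => Metric.infDist x (X k : Set E)) atTop = 0}

/-!
Say that `u` has blocks with error `δ` and bound `B` if, beyond any index, there is a finite
block of terms `y k ∈ X k` whose sum is within `δ` of `u` and whose partial sums all have norm at
most `B`. An element of `Δ(S)` is approximated by a single term, and concatenating blocks shows
that every `u` in the span of `Δ(S)` has blocks with arbitrarily small error `δ` and bound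
`C + δ`, for some `C` depending on `u`. Splitting `u` into `p` equal pieces and concatenating
their blocks brings the bound down to `‖u‖ + ε`, and by density every vector has such blocks.
Approximating the successive residuals by blocks with errors `2⁻ʲ` and concatenating all of
them gives a series for `x`: inside block `j` the partial sum differs from `x` by at most twice
the current residual plus `2⁻ʲ`.
-/

open Function (support)

section Sums

variable {M : Type*} [AddCommMonoid M]

theorem sum_range_eq_of_support_subset_Iio {y : ℕ → M} {n m : ℕ}
    (hy : support y ⊆ Set.Iio n) (hnm : n ≤ m) :
    ∑ k ∈ range m, y k = ∑ k ∈ range n, y k :=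
  (sum_subset (range_subset_range.2 hnm) fun _ _ hk =>
    Function.notMem_support.1 fun h => hk (mem_range.2 (hy h))).symm

theorem sum_range_eq_zero_of_support_subset_Ici {y : ℕ → M} {n m : ℕ}
    (hy : support y ⊆ Set.Ici n) (hmn : m ≤ n) : ∑ k ∈ range m, y k = 0 :=
  sum_eq_zero fun _ hk =>
    Function.notMem_support.1 fun h => absurd (hy h) (by simp at hk ⊢; omega)


theorem sum_range_sum_eq_of_support_subset_Ico {y : ℕ → ℕ → M} {N : ℕ → ℕ} (hN : StrictMono N)
    (hy : ∀ j, support (y j) ⊆ Set.Ico (N j) (N (j + 1))) {J m : ℕ} (hJm : N J ≤ m)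
    (hmJ : m < N (J + 1)) :
    ∑ k ∈ range m, ∑ j ∈ range (k + 1), y j k =
      ∑ j ∈ range J, ∑ k ∈ range (N (j + 1)), y j k + ∑ k ∈ range m, y J k := by
  have hinner : ∀ k ∈ range m, ∑ j ∈ range (k + 1), y j k = ∑ j ∈ range (J + 1), y j k := by
    intro k hk
    have hsupp : support (fun j => y j k) ⊆ Set.Iio (min (k + 1) (J + 1)) := by
      intro j hj
      obtain ⟨hk_ge, hk_lt⟩ := hy j hj
      have hj_le : j ≤ N j := hN.id_le j
      have hJj : ¬ J + 1 ≤ j := fun h => by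
        have := hN.monotone h
        simp only [mem_range] at hk
        omega
      simp only [Set.mem_Iio, lt_min_iff]
      omega
    rw [sum_range_eq_of_support_subset_Iio hsupp (min_le_left _ _),
      sum_range_eq_of_support_subset_Iio hsupp (min_le_right _ _)]
  have hfull : ∀ j ∈ range J, ∑ k ∈ range m, y j k = ∑ k ∈ range (N (j + 1)), y j k :=
    fun j hj => sum_range_eq_of_support_subset_Iio ((hy j).trans Set.Ico_subset_Iio_self)
      ((hN.monotone (mem_range.1 hj)).trans hJm)
  rw [sum_congr rfl hinner, sum_comm, sum_range_succ, sum_congr rfl hfull]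

end Sums

theorem tendsto_of_norm_sub_le_on_blocks {E : Type*} [SeminormedAddCommGroup E] {S : ℕ → E}
    {x : E} {N : ℕ → ℕ} (hN : StrictMono N) {b : ℕ → ℝ} (hb : Tendsto b atTop (nhds 0))
    (h : ∀ J m, N J ≤ m → m < N (J + 1) → ‖S m - x‖ ≤ b J) : Tendsto S atTop (nhds x) := by
  rw [Metric.tendsto_atTop]
  intro ε hε
  obtain ⟨J₀, hJ₀⟩ := eventually_atTop.1 (hb.eventually (gt_mem_nhds hε))
  have hunbdd : ¬BddAbove (N '' Set.Ici J₀) := fun ⟨B, hB⟩ => by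
    have h₁ := hB ⟨B + J₀ + 1, Set.mem_Ici.2 (by omega), rfl⟩
    have h₂ := hN.id_le (B + J₀ + 1)
    simp only [id] at h₂
    omega
  refine ⟨N J₀, fun m hm => ?_⟩
  have hcover := biUnion_Ici_Ico_map_succ (fun i hi => hN.monotone hi) hunbdd
  have hm' : m ∈ Set.Ici (N J₀) := hm
  rw [← hcover] at hm'
  obtain ⟨J, hJm, hJ, hmJ⟩ : ∃ J, N J ≤ m ∧ J₀ ≤ J ∧ m < N (J + 1) := by
    simpa [Order.succ_eq_add_one] using hm'
  rw [dist_eq_norm]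
  exact (h J m hJm hmJ).trans_lt (hJ₀ J hJ)

section Blocks

variable {E : Type*} [NormedAddCommGroup E] [NormedSpace ℝ E] (X : ℕ → Submodule ℝ E)

def IsBlock (N M : ℕ) (y : ℕ → E) : Prop :=
  (∀ k, y k ∈ X k) ∧ support y ⊆ Set.Ico N M

def HasBlocks (u : E) (δ B : ℝ) : Prop :=
  ∀ N, ∃ M > N, ∃ y, IsBlock X N M y ∧ ‖u - ∑ k ∈ range M, y k‖ ≤ δ ∧
    ∀ m, ‖∑ k ∈ range m, y k‖ ≤ B

theorem isBlock_zero (N M : ℕ) : IsBlock X N M 0 :=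
  ⟨fun k => zero_mem (X k), by simp⟩

variable {X}

theorem isBlock_single {N k : ℕ} (hNk : N ≤ k) {v : E} (hv : v ∈ X k) :
    IsBlock X N (k + 1) (Pi.single k v) := by
  classical
  refine ⟨fun j => ?_, Pi.support_single_subset.trans (by simpa using hNk)⟩
  rcases eq_or_ne j k with rfl | hjk
  · simpa using hv
  · simp [hjk, zero_mem]

namespace IsBlock

variable {N M P m : ℕ} {y z : ℕ → E}

theorem sum_range_eq (hy : IsBlock X N M y) (hm : M ≤ m) :
    ∑ k ∈ range m, y k = ∑ k ∈ range M, y k :=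
  sum_range_eq_of_support_subset_Iio (hy.2.trans Set.Ico_subset_Iio_self) hm

theorem sum_range_eq_zero (hy : IsBlock X N M y) (hm : m ≤ N) : ∑ k ∈ range m, y k = 0 :=
  sum_range_eq_zero_of_support_subset_Ici (hy.2.trans Set.Ico_subset_Ici_self) hm

theorem add (hy : IsBlock X N M y) (hz : IsBlock X M P z) (hNM : N ≤ M) (hMP : M ≤ P) :
    IsBlock X N P (y + z) :=
  ⟨fun k => add_mem (hy.1 k) (hz.1 k), (Function.support_add y z).trans <|
    Set.union_subset (hy.2.trans (Set.Ico_subset_Ico_right hMP))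
      (hz.2.trans (Set.Ico_subset_Ico_left hNM))⟩

theorem smul (hy : IsBlock X N M y) (c : ℝ) : IsBlock X N M (c • y) :=
  ⟨fun k => Submodule.smul_mem _ c (hy.1 k), (Function.support_const_smul_subset c y).trans hy.2⟩

end IsBlock

theorem hasBlocks_zero : HasBlocks X 0 0 0 :=
  fun N => ⟨N + 1, lt_add_one N, 0, isBlock_zero X _ _, by simp, by simp⟩

namespace HasBlocks

variable {u a b : E} {δ δ' δ₁ δ₂ B B' B₁ B₂ : ℝ}

theorem nonneg (h : HasBlocks X u δ B) : 0 ≤ δ ∧ 0 ≤ B := by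
  obtain ⟨M, -, y, -, hδ, hB⟩ := h 0
  exact ⟨(norm_nonneg _).trans hδ, by simpa using hB 0⟩

theorem mono (h : HasBlocks X u δ B) (hδ : δ ≤ δ') (hB : B ≤ B') : HasBlocks X u δ' B' :=
  fun N => by
    obtain ⟨M, hNM, y, hy, hu, hS⟩ := h N
    exact ⟨M, hNM, y, hy, hu.trans hδ, fun m => (hS m).trans hB⟩

theorem of_norm_sub (h : HasBlocks X u δ B) (v : E) : HasBlocks X v (‖v - u‖ + δ) B :=
  fun N => by
    obtain ⟨M, hNM, y, hy, hu, hS⟩ := h N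
    exact ⟨M, hNM, y, hy, (norm_sub_le_norm_sub_add_norm_sub _ u _).trans (by gcongr), hS⟩

theorem smul (h : HasBlocks X u δ B) (c : ℝ) : HasBlocks X (c • u) (‖c‖ * δ) (‖c‖ * B) :=
  fun N => by
    obtain ⟨M, hNM, y, hy, hu, hS⟩ := h N
    refine ⟨M, hNM, c • y, hy.smul c, ?_, fun m => ?_⟩
    · simp only [Pi.smul_apply, ← smul_sum, ← smul_sub, norm_smul]
      gcongr
    · simp only [Pi.smul_apply, ← smul_sum, norm_smul]
      gcongr
      exact hS m

/-- During `b`'s block the partial sums are offset by the completed sum of `a`'s block, of norm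
at most `‖a‖ + δ₁`. -/
theorem add (ha : HasBlocks X a δ₁ B₁) (hb : HasBlocks X b δ₂ B₂) :
    HasBlocks X (a + b) (δ₁ + δ₂) (max B₁ (‖a‖ + δ₁ + B₂)) := by
  intro N
  obtain ⟨M₁, hNM₁, y, hy, hay, hyS⟩ := ha N
  obtain ⟨M₂, hM₁M₂, z, hz, hbz, hzS⟩ := hb M₁
  have hsum : ∀ m, ∑ k ∈ range m, (y + z) k = ∑ k ∈ range m, y k + ∑ k ∈ range m, z k :=
    fun m => sum_add_distrib
  refine ⟨M₂, hNM₁.trans hM₁M₂, y + z, hy.add hz hNM₁.le hM₁M₂.le, ?_, fun m => ?_⟩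
  · rw [hsum, hy.sum_range_eq hM₁M₂.le, add_sub_add_comm]
    exact (norm_add_le _ _).trans (add_le_add hay hbz)
  rcases le_total m M₁ with hm | hm
  · rw [hsum, hz.sum_range_eq_zero hm, add_zero]
    exact (hyS m).trans (le_max_left _ _)
  · rw [hsum, hy.sum_range_eq hm]
    have hy_end : ‖∑ k ∈ range M₁, y k‖ ≤ ‖a‖ + δ₁ := by
      rw [← norm_sub_rev] at hay
      linarith [norm_le_insert' (∑ k ∈ range M₁, y k) a]
    exact le_max_of_le_right ((norm_add_le _ _).trans (add_le_add hy_end (hzS m)))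

theorem nsmul (h : HasBlocks X u δ B) (p : ℕ) :
    HasBlocks X (p • u) (p * δ) (p * ‖u‖ + p * δ + B) := by
  obtain ⟨hδ, hB⟩ := h.nonneg
  induction p with
  | zero => simpa using hasBlocks_zero.mono le_rfl hB
  | succ p ih =>
    rw [succ_nsmul]
    refine (ih.add h).mono (by push_cast; linarith) (max_le ?_ ?_)
    · push_cast
      linarith [norm_nonneg u]
    · have := norm_nsmul_le (a := u) (n := p)
      push_cast
      linarith [norm_nonneg u]

end HasBlocks

end Blocks

section Delta

variable {E : Type*} [NormedAddCommGroup E] [NormedSpace ℝ E] {X : ℕ → Submodule ℝ E}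

theorem exists_norm_sub_lt_of_mem_deltaSet {d : E} (hd : d ∈ DeltaSet X) {δ : ℝ} (hδ : 0 < δ)
    (N : ℕ) : ∃ k ≥ N, ∃ v ∈ X k, ‖d - v‖ < δ := by
  have hbdd : IsCoboundedUnder (· ≥ ·) atTop (fun k => Metric.infDist d (X k : Set E)) :=
    isCoboundedUnder_ge_of_le atTop (x := ‖d‖) fun k => by
      simpa using Metric.infDist_le_dist_of_mem (Submodule.zero_mem (X k))
  have hfreq := frequently_lt_of_liminf_lt hbdd (show _ < δ by rwa [hd])
  obtain ⟨k, hNk, hk⟩ := frequently_atTop.1 hfreq N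
  obtain ⟨v, hv, hdv⟩ := (Metric.infDist_lt_iff ⟨0, zero_mem (X k)⟩).1 hk
  exact ⟨k, hNk, v, hv, by rwa [← dist_eq_norm]⟩

theorem hasBlocks_of_mem_deltaSet {d : E} (hd : d ∈ DeltaSet X) {δ : ℝ} (hδ : 0 < δ) :
    HasBlocks X d δ (‖d‖ + δ) := fun N => by
  classical
  obtain ⟨k, hNk, v, hv, hdv⟩ := exists_norm_sub_lt_of_mem_deltaSet hd hδ N
  refine ⟨k + 1, by omega, Pi.single k v, isBlock_single hNk hv,
    by simpa [sum_pi_single'] using hdv.le, fun m => ?_⟩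
  rw [sum_pi_single']
  split_ifs
  · linarith [norm_le_insert' v d, norm_sub_rev v d]
  · simpa using by positivity

theorem exists_hasBlocks_of_mem_span {u : E} (hu : u ∈ Submodule.span ℝ (DeltaSet X)) :
    ∃ C, ∀ δ > 0, HasBlocks X u δ (C + δ) := by
  induction hu using Submodule.span_induction with
  | mem d hd => exact ⟨‖d‖, fun δ hδ => hasBlocks_of_mem_deltaSet hd hδ⟩
  | zero => exact ⟨0, fun δ hδ => hasBlocks_zero.mono hδ.le (by simpa using hδ.le)⟩
  | add a b _ _ ha hb =>
    obtain ⟨Ca, ha⟩ := ha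
    obtain ⟨Cb, hb⟩ := hb
    refine ⟨max Ca (‖a‖ + Cb), fun δ hδ =>
      ((ha (δ / 2) (by positivity)).add (hb (δ / 2) (by positivity))).mono (by linarith) ?_⟩
    exact max_le (by linarith [le_max_left Ca (‖a‖ + Cb)])
      (by linarith [le_max_right Ca (‖a‖ + Cb)])
  | smul c u _ hu =>
    obtain ⟨C, hC⟩ := hu
    have hsmall : ∀ δ > 0, ‖c‖ * (δ / (‖c‖ + 1)) ≤ δ := fun δ hδ => by
      rw [mul_div_assoc', div_le_iff₀ (by positivity)]
      nlinarith [norm_nonneg c]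
    refine ⟨‖c‖ * C, fun δ hδ => ((hC (δ / (‖c‖ + 1)) (by positivity)).smul c).mono
      (hsmall δ hδ) ?_⟩
    rw [mul_add]
    linarith [hsmall δ hδ]

theorem hasBlocks_of_mem_span {u : E} (hu : u ∈ Submodule.span ℝ (DeltaSet X)) {ε : ℝ}
    (hε : 0 < ε) : HasBlocks X u ε (‖u‖ + ε) := by
  obtain ⟨C, hC⟩ := exists_hasBlocks_of_mem_span hu
  obtain ⟨p, hp⟩ := exists_nat_gt (max 0 (3 * C / ε))
  have hp0 : (0 : ℝ) < p := (le_max_left _ _).trans_lt hp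
  have hpC : C / p < ε / 3 := by
    rw [div_lt_iff₀ hp0]
    have := (le_max_right _ _).trans_lt hp
    rw [div_lt_iff₀ hε] at this
    linarith
  have hp1 : (1 : ℝ) ≤ p := Nat.one_le_cast.2 (Nat.cast_pos.1 hp0)
  have hsplit := ((hC (ε / 3) (by positivity)).smul (p : ℝ)⁻¹).nsmul p
  rw [← Nat.cast_smul_eq_nsmul ℝ, smul_smul, mul_inv_cancel₀ hp0.ne', one_smul] at hsplit
  refine hsplit.mono ?_ ?_
  · rw [norm_inv, Real.norm_natCast, ← mul_assoc, mul_inv_cancel₀ hp0.ne']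
    linarith
  · rw [norm_smul, norm_inv, Real.norm_natCast, ← mul_assoc, ← mul_assoc, mul_inv_cancel₀ hp0.ne',
      inv_mul_eq_div, add_div]
    have : ε / 3 / p ≤ ε / 3 := div_le_self (by positivity) hp1
    linarith

theorem hasBlocks_of_dense (hdense : (Submodule.span ℝ (DeltaSet X)).topologicalClosure = ⊤)
    (r : E) {ε : ℝ} (hε : 0 < ε) : HasBlocks X r ε (‖r‖ + ε) := by
  have hr : r ∈ closure (Submodule.span ℝ (DeltaSet X) : Set E) := by
    rw [← Submodule.topologicalClosure_coe, hdense]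
    trivial
  obtain ⟨u, hu, hru⟩ := Metric.mem_closure_iff.1 hr (ε / 2) (by positivity)
  rw [dist_eq_norm] at hru
  refine ((hasBlocks_of_mem_span hu (half_pos hε)).of_norm_sub r).mono (by linarith) ?_
  linarith [norm_le_insert' u r, norm_sub_rev u r]

end Delta

section Series

variable {E : Type*} [NormedAddCommGroup E] [NormedSpace ℝ E] {X : ℕ → Submodule ℝ E}

theorem exists_blocks_of_hasBlocks (h : ∀ r : E, ∀ ε > 0, HasBlocks X r ε (‖r‖ + ε)) (x : E) :
    ∃ (N : ℕ → ℕ) (z : ℕ → ℕ → E) (r : ℕ → E), StrictMono N ∧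
      (∀ j, IsBlock X (N j) (N (j + 1)) (z j)) ∧ r 0 = x ∧
      (∀ j, r (j + 1) = r j - ∑ k ∈ range (N (j + 1)), z j k) ∧
      (∀ j, ‖r (j + 1)‖ ≤ (1 / 2) ^ j) ∧
      ∀ j m, ‖∑ k ∈ range m, z j k‖ ≤ ‖r j‖ + (1 / 2) ^ j := by
  choose M hM y hy using fun (j N : ℕ) (r : E) => h r ((1 / 2) ^ j) (by positivity) N
  let s : ℕ → ℕ × E := fun j => Nat.rec (0, x)
    (fun j s => (M j s.1 s.2, s.2 - ∑ k ∈ range (M j s.1 s.2), y j s.1 s.2 k)) j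
  exact ⟨fun j => (s j).1, fun j => y j (s j).1 (s j).2, fun j => (s j).2,
    strictMono_nat_of_lt_succ fun j => hM j _ _, fun j => (hy j _ _).1, rfl, fun _ => rfl,
    fun j => (hy j _ _).2.1, fun j => (hy j _ _).2.2⟩

theorem exists_tendsto_sum_of_hasBlocks (h : ∀ r : E, ∀ ε > 0, HasBlocks X r ε (‖r‖ + ε))
    (x : E) : ∃ f : ℕ → E, (∀ k, f k ∈ X k) ∧
      Tendsto (fun n => ∑ k ∈ range n, f k) atTop (nhds x) := by
  obtain ⟨N, z, r, hN, hz, hr0, hrsucc, hr, hpart⟩ := exists_blocks_of_hasBlocks h x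
  have hrx : ∀ J, x - r J = ∑ j ∈ range J, ∑ k ∈ range (N (j + 1)), z j k := by
    intro J
    induction J with
    | zero => simp [hr0]
    | succ J ih => rw [sum_range_succ, ← ih, hrsucc]; abel
  have hgeom : Tendsto (fun j : ℕ => (1 / 2 : ℝ) ^ j) atTop (nhds 0) :=
    tendsto_pow_atTop_nhds_zero_of_lt_one (by norm_num) (by norm_num)
  have hr_lim : Tendsto (fun J => ‖r J‖) atTop (nhds 0) :=
    (tendsto_add_atTop_iff_nat 1).1 <| squeeze_zero (fun _ => norm_nonneg _) hr hgeom
  refine ⟨fun k => ∑ j ∈ range (k + 1), z j k, fun k => sum_mem fun j _ => (hz j).1 k,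
    tendsto_of_norm_sub_le_on_blocks hN (b := fun J => 2 * ‖r J‖ + (1 / 2) ^ J) ?_
      fun J m hJm hmJ => ?_⟩
  · simpa using (hr_lim.const_mul 2).add hgeom
  rw [sum_range_sum_eq_of_support_subset_Ico hN (fun j => (hz j).2) hJm hmJ, ← hrx]
  calc ‖x - r J + ∑ k ∈ range m, z J k - x‖ = ‖∑ k ∈ range m, z J k - r J‖ := by
        congr 1; abel
    _ ≤ ‖∑ k ∈ range m, z J k‖ + ‖r J‖ := norm_sub_le _ _
    _ ≤ 2 * ‖r J‖ + (1 / 2) ^ J := by linarith [hpart J m]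

end Series

theorem rss_of_dense_delta_general {E : Type*} [NormedAddCommGroup E] [NormedSpace ℝ E]
    (X : ℕ → Submodule ℝ E)
    (hdense : (Submodule.span ℝ (DeltaSet X)).topologicalClosure = ⊤) :
    ∀ x : E, ∃ f : ℕ → E, (∀ k, f k ∈ X k) ∧
      Tendsto (fun n => ∑ k ∈ Finset.range n, f k) atTop (nhds x) :=
  exists_tendsto_sum_of_hasBlocks fun r _ hε => hasBlocks_of_dense hdense r hε

/-- If the closed linear span of `Δ(S)` is all of `X`, then `(X_k)` is a representing
system of subspaces in the Banach space `X`. -/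
theorem rss_of_dense_delta {E : Type*} [NormedAddCommGroup E] [NormedSpace ℝ E]
    [CompleteSpace E] (X : ℕ → Submodule ℝ E) (hX : ∀ k, IsClosed (X k : Set E))
    (hdense : (Submodule.span ℝ (DeltaSet X)).topologicalClosure = ⊤) :
    ∀ x : E, ∃ f : ℕ → E, (∀ k, f k ∈ X k) ∧
      Tendsto (fun n => ∑ k ∈ Finset.range n, f k) atTop (nhds x) :=
  rss_of_dense_delta_general X hdense
end

section
/- Let X be a Banach space and (X_k)_{k≥1} closed subspaces such that the closure of the linear span of Δ(S) = {x : liminf_k dist(x, X_k) = 0} equals X. Then for every bijection σ : ℕ → ℕ, the system (X_{σ(k)})_{k≥1} is a representing system of subspaces in X. -/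
open Filter Finset

section Aux

variable {E : Type*} [NormedAddCommGroup E] [NormedSpace ℝ E]

lemma sum_range_eq_of_zero (f : ℕ → E) {a b : ℕ} (hab : a ≤ b)
    (h0 : ∀ k, a ≤ k → f k = 0) :
    ∑ k ∈ Finset.range b, f k = ∑ k ∈ Finset.range a, f k := by
  refine (Finset.sum_subset (Finset.range_subset_range.2 hab) ?_).symm
  intro x _ hnx
  exact h0 x (le_of_not_gt (by simpa using hnx))

/-- `y` can be approximated, above any index threshold, by finite packets from the
subspaces `X (σ k)` whose partial sums stay `ε`-close to the segment `[0, y]`. -/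
def Good (X : ℕ → Submodule ℝ E) (σ : ℕ → ℕ) (y : E) : Prop :=
  ∀ ε : ℝ, 0 < ε → ∀ K : ℕ, ∃ K' : ℕ, K ≤ K' ∧ ∃ f : ℕ → E,
    (∀ k, f k ∈ X (σ k)) ∧ (∀ k, k < K → f k = 0) ∧ (∀ k, K' ≤ k → f k = 0) ∧
    ‖y - ∑ k ∈ Finset.range K', f k‖ ≤ ε ∧
    ∀ m, ‖∑ k ∈ Finset.range m, f k‖ ≤ ‖y‖ + ε

lemma good_zero (X : ℕ → Submodule ℝ E) (σ : ℕ → ℕ) : Good X σ (0 : E) := by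
  intro ε hε K
  refine ⟨K, le_rfl, 0, fun k => Submodule.zero_mem _, fun _ _ => rfl, fun _ _ => rfl, ?_, ?_⟩
  · simp [hε.le]
  · intro m; simp [hε.le]

lemma good_smul (X : ℕ → Submodule ℝ E) (σ : ℕ → ℕ) (c : ℝ) {y : E} (h : Good X σ y) :
    Good X σ (c • y) := by
  rcases eq_or_ne c 0 with rfl | hc
  · simpa using good_zero X σ
  intro ε hε K
  have hc' : 0 < |c| := abs_pos.2 hc
  obtain ⟨K', hK', f, hmem, hlo, hhi, hclose, hpre⟩ := h (ε / |c|) (by positivity) K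
  refine ⟨K', hK', fun k => c • f k, fun k => Submodule.smul_mem _ _ (hmem k),
    fun k hk => by show c • f k = 0; rw [hlo k hk, smul_zero],
    fun k hk => by show c • f k = 0; rw [hhi k hk, smul_zero], ?_, ?_⟩
  · have h1 : ∑ k ∈ Finset.range K', c • f k = c • ∑ k ∈ Finset.range K', f k :=
      (Finset.smul_sum).symm
    rw [h1, ← smul_sub, norm_smul, Real.norm_eq_abs]
    have h2 : |c| * (ε / |c|) = ε := by field_simp
    calc |c| * ‖y - ∑ k ∈ Finset.range K', f k‖ ≤ |c| * (ε / |c|) :=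
          mul_le_mul_of_nonneg_left hclose hc'.le
      _ = ε := h2
  · intro m
    have h1 : ∑ k ∈ Finset.range m, c • f k = c • ∑ k ∈ Finset.range m, f k :=
      (Finset.smul_sum).symm
    rw [h1, norm_smul, Real.norm_eq_abs, norm_smul, Real.norm_eq_abs]
    have h2 : |c| * (‖y‖ + ε / |c|) = |c| * ‖y‖ + ε := by field_simp
    calc |c| * ‖∑ k ∈ Finset.range m, f k‖ ≤ |c| * (‖y‖ + ε / |c|) :=
          mul_le_mul_of_nonneg_left (hpre m) hc'.le
      _ = |c| * ‖y‖ + ε := h2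

lemma good_delta (X : ℕ → Submodule ℝ E) (σ : ℕ → ℕ) (hσ : Function.Bijective σ) {x : E}
    (hx : x ∈ DeltaSet X) : Good X σ x := by
  intro ε hε K
  have hfreq : ∃ᶠ j in atTop, Metric.infDist x ((X j : Set E)) < ε := by
    apply Filter.frequently_lt_of_liminf_lt
    · exact Filter.isCoboundedUnder_ge_of_le atTop (x := ‖x‖) fun j =>
        le_trans (Metric.infDist_le_dist_of_mem (Submodule.zero_mem _))
          (le_of_eq (dist_zero_right x))
    · rw [show Filter.liminf (fun k => Metric.infDist x ((X k : Set E))) atTop = 0 from hx]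
      exact hε
  have hinf : {j | Metric.infDist x ((X j : Set E)) < ε}.Infinite :=
    Nat.frequently_atTop_iff_infinite.1 hfreq
  have hpreim : (σ ⁻¹' {j | Metric.infDist x ((X j : Set E)) < ε}).Infinite :=
    hinf.preimage (by rw [Set.range_eq_univ.2 hσ.surjective]; exact Set.subset_univ _)
  obtain ⟨k, hkS, hkK⟩ := hpreim.exists_gt K
  obtain ⟨z, hz, hdz⟩ := (Metric.infDist_lt_iff ⟨0, Submodule.zero_mem _⟩).1 hkS
  refine ⟨k + 1, by omega, fun m => if m = k then z else 0, ?_, ?_, ?_, ?_, ?_⟩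
  · intro m
    by_cases h : m = k
    · subst h; simpa using hz
    · simp [h, Submodule.zero_mem]
  · intro m hm; show (if m = k then z else 0) = 0; rw [if_neg (by omega)]
  · intro m hm; show (if m = k then z else 0) = 0; rw [if_neg (by omega)]
  · have h1 : ∑ j ∈ Finset.range (k + 1), (if j = k then z else 0) = z := by
      rw [Finset.sum_ite_eq']
      simp
    rw [h1, ← dist_eq_norm]
    exact hdz.le
  · intro m
    have h1 : ∑ j ∈ Finset.range m, (if j = k then z else 0)
        = if k ∈ Finset.range m then z else 0 := Finset.sum_ite_eq' _ _ _
    rw [h1]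
    split
    · have h2 : ‖z‖ - ‖x‖ ≤ ‖z - x‖ := norm_sub_norm_le z x
      have h3 : ‖z - x‖ = dist x z := by rw [norm_sub_rev, dist_eq_norm]
      linarith [hdz]
    · simp; positivity

lemma good_add (X : ℕ → Submodule ℝ E) (σ : ℕ → ℕ) {y₁ y₂ : E}
    (h₁ : Good X σ y₁) (h₂ : Good X σ y₂) : Good X σ (y₁ + y₂) := by
  intro ε hε K
  set A : ℝ := ‖y₁‖ + ‖y₂‖ with hA
  have hA0 : 0 ≤ A := by positivity
  set M : ℕ := max 1 ⌈4 * A / ε⌉₊ with hM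
  have hM1 : 1 ≤ M := le_max_left _ _
  have hMR : (0:ℝ) < (M : ℝ) := by exact_mod_cast hM1
  have hMR1 : (1:ℝ) ≤ (M : ℝ) := by exact_mod_cast hM1
  have hAM : A / M ≤ ε / 4 := by
    have h1 : 4 * A / ε ≤ (M : ℝ) := by
      refine le_trans (Nat.le_ceil _) ?_
      exact_mod_cast le_max_right 1 ⌈4 * A / ε⌉₊
    rw [div_le_div_iff₀ hMR (by norm_num : (0:ℝ) < 4)]
    have h2 := (div_le_iff₀ hε).1 h1
    nlinarith
  set δ : ℝ := ε / (4 * ((M : ℝ) + 1)) with hδdef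
  have hδ : 0 < δ := by positivity
  have hg₁ : Good X σ ((M : ℝ)⁻¹ • y₁) := good_smul X σ _ h₁
  have hg₂ : Good X σ ((M : ℝ)⁻¹ • y₂) := good_smul X σ _ h₂
  set v : E := (M : ℝ)⁻¹ • (y₁ + y₂) with hv
  have hnv1 : ‖(M : ℝ)⁻¹ • y₁‖ = ‖y₁‖ / M := by
    rw [norm_smul, norm_inv, Real.norm_eq_abs, abs_of_pos hMR, inv_mul_eq_div]
  have hnv2 : ‖(M : ℝ)⁻¹ • y₂‖ = ‖y₂‖ / M := by
    rw [norm_smul, norm_inv, Real.norm_eq_abs, abs_of_pos hMR, inv_mul_eq_div]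
  have key : ∀ t : ℕ, t ≤ M → ∃ Kt : ℕ, K ≤ Kt ∧ ∃ f : ℕ → E,
      (∀ k, f k ∈ X (σ k)) ∧ (∀ k, k < K → f k = 0) ∧ (∀ k, Kt ≤ k → f k = 0) ∧
      ‖(t : ℝ) • v - ∑ k ∈ Finset.range Kt, f k‖ ≤ 2 * t * δ ∧
      ∀ m, ‖∑ k ∈ Finset.range m, f k‖ ≤ ‖y₁ + y₂‖ + 2 * t * δ + A / M + 2 * δ := by
    intro t
    induction t with
    | zero =>
      intro _
      refine ⟨K, le_rfl, 0, fun k => Submodule.zero_mem _, fun _ _ => rfl, fun _ _ => rfl,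
        by simp, fun m => by simp; positivity⟩
    | succ t ih =>
      intro ht
      obtain ⟨Kt, hKt, f, hmem, hlo, hhi, hfull, hpre⟩ := ih (by omega)
      obtain ⟨K₁, hK₁, g₁, hmem₁, hlo₁, hhi₁, hfull₁, hpre₁⟩ := hg₁ δ hδ Kt
      obtain ⟨K₂, hK₂, g₂, hmem₂, hlo₂, hhi₂, hfull₂, hpre₂⟩ := hg₂ δ hδ K₁
      have hKt2 : Kt ≤ K₂ := le_trans hK₁ hK₂
      have hsum : ∀ m, ∑ k ∈ Finset.range m, (f k + g₁ k + g₂ k)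
          = (∑ k ∈ Finset.range m, f k) + (∑ k ∈ Finset.range m, g₁ k)
            + (∑ k ∈ Finset.range m, g₂ k) := by
        intro m; rw [Finset.sum_add_distrib, Finset.sum_add_distrib]
      refine ⟨K₂, le_trans hKt hKt2, fun k => f k + g₁ k + g₂ k,
        fun k => add_mem (add_mem (hmem k) (hmem₁ k)) (hmem₂ k), ?_, ?_, ?_, ?_⟩
      · intro k hk
        show f k + g₁ k + g₂ k = 0
        rw [hlo k hk, hlo₁ k (by omega), hlo₂ k (by omega), add_zero, add_zero]
      · intro k hk
        show f k + g₁ k + g₂ k = 0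
        rw [hhi k (by omega), hhi₁ k (by omega), hhi₂ k hk, add_zero, add_zero]
      · -- full sum estimate
        rw [hsum K₂, sum_range_eq_of_zero f hKt2 hhi, sum_range_eq_of_zero g₁ hK₂ hhi₁]
        have hcast : ((t + 1 : ℕ) : ℝ) • v
            = (t : ℝ) • v + ((M : ℝ)⁻¹ • y₁ + (M : ℝ)⁻¹ • y₂) := by
          push_cast
          rw [add_smul, one_smul, hv, smul_add]
        have hre : ((t + 1 : ℕ) : ℝ) • v -
            ((∑ k ∈ Finset.range Kt, f k) + (∑ k ∈ Finset.range K₁, g₁ k)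
              + (∑ k ∈ Finset.range K₂, g₂ k))
            = ((t : ℝ) • v - ∑ k ∈ Finset.range Kt, f k)
              + ((M : ℝ)⁻¹ • y₁ - ∑ k ∈ Finset.range K₁, g₁ k)
              + ((M : ℝ)⁻¹ • y₂ - ∑ k ∈ Finset.range K₂, g₂ k) := by
          rw [hcast]; abel
        rw [hre]
        calc ‖((t : ℝ) • v - ∑ k ∈ Finset.range Kt, f k)
              + ((M : ℝ)⁻¹ • y₁ - ∑ k ∈ Finset.range K₁, g₁ k)
              + ((M : ℝ)⁻¹ • y₂ - ∑ k ∈ Finset.range K₂, g₂ k)‖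
            ≤ ‖(t : ℝ) • v - ∑ k ∈ Finset.range Kt, f k‖
              + ‖(M : ℝ)⁻¹ • y₁ - ∑ k ∈ Finset.range K₁, g₁ k‖
              + ‖(M : ℝ)⁻¹ • y₂ - ∑ k ∈ Finset.range K₂, g₂ k‖ := norm_add₃_le
          _ ≤ 2 * t * δ + δ + δ := by gcongr
          _ ≤ 2 * (t + 1 : ℕ) * δ := le_of_eq (by push_cast; ring)
      · -- prefix estimate
        intro m
        rw [hsum m]
        by_cases hm : m ≤ Kt
        · have z1 : ∑ k ∈ Finset.range m, g₁ k = 0 :=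
            Finset.sum_eq_zero fun k hk =>
              hlo₁ k (lt_of_lt_of_le (Finset.mem_range.1 hk) hm)
          have z2 : ∑ k ∈ Finset.range m, g₂ k = 0 :=
            Finset.sum_eq_zero fun k hk =>
              hlo₂ k (lt_of_lt_of_le (Finset.mem_range.1 hk) (le_trans hm hK₁))
          rw [z1, z2, add_zero, add_zero]
          have := hpre m
          have ht' : (0:ℝ) ≤ δ := hδ.le
          push_cast
          push_cast at this
          linarith
        · have hm' : Kt ≤ m := le_of_not_ge hm
          have e1 : ∑ k ∈ Finset.range m, f k = ∑ k ∈ Finset.range Kt, f k :=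
            sum_range_eq_of_zero f hm' hhi
          have hF : ‖∑ k ∈ Finset.range Kt, f k‖ ≤ ‖(t : ℝ) • v‖ + 2 * t * δ := by
            have h0 : ‖∑ k ∈ Finset.range Kt, f k‖
                ≤ ‖(t : ℝ) • v‖ + ‖(t : ℝ) • v - ∑ k ∈ Finset.range Kt, f k‖ := by
              have := norm_sub_le ((t : ℝ) • v) ((t : ℝ) • v - ∑ k ∈ Finset.range Kt, f k)
              simpa using this
            linarith [hfull]
          have htv : ‖(t : ℝ) • v‖ ≤ ‖y₁ + y₂‖ := by
            rw [hv, norm_smul, norm_smul, norm_inv, Real.norm_eq_abs, Real.norm_eq_abs,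
              abs_of_pos hMR, abs_of_nonneg (by positivity : (0:ℝ) ≤ (t:ℝ))]
            have htM : (t : ℝ) ≤ (M : ℝ) := by exact_mod_cast (by omega : t ≤ M)
            have h1 : (t : ℝ) * ((M:ℝ)⁻¹ * ‖y₁ + y₂‖) ≤ (M : ℝ) * ((M:ℝ)⁻¹ * ‖y₁ + y₂‖) := by
              apply mul_le_mul_of_nonneg_right htM
              positivity
            have h2 : (M : ℝ) * ((M:ℝ)⁻¹ * ‖y₁ + y₂‖) = ‖y₁ + y₂‖ := by
              field_simp
            linarith
          have hG1 : ‖∑ k ∈ Finset.range m, g₁ k‖ ≤ ‖y₁‖ / M + δ := by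
            have := hpre₁ m; rw [hnv1] at this; exact this
          have hG2 : ‖∑ k ∈ Finset.range m, g₂ k‖ ≤ ‖y₂‖ / M + δ := by
            have := hpre₂ m; rw [hnv2] at this; exact this
          have htri : ‖(∑ k ∈ Finset.range m, f k) + (∑ k ∈ Finset.range m, g₁ k)
              + (∑ k ∈ Finset.range m, g₂ k)‖
              ≤ ‖∑ k ∈ Finset.range m, f k‖ + ‖∑ k ∈ Finset.range m, g₁ k‖
                + ‖∑ k ∈ Finset.range m, g₂ k‖ := norm_add₃_le
          rw [← e1] at hF
          have hAdiv : ‖y₁‖ / M + ‖y₂‖ / M = A / M := by rw [hA]; ring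
          have hstep : 2 * ((t : ℝ) + 1) * δ = 2 * (t : ℝ) * δ + 2 * δ := by ring
          push_cast
          linarith [hδ.le, htri, hF, htv, hG1, hG2]
  obtain ⟨KM, hKM, f, hmem, hlo, hhi, hfull, hpre⟩ := key M le_rfl
  have hMv : (M : ℝ) • v = y₁ + y₂ := by
    rw [hv]; exact smul_inv_smul₀ hMR.ne' _
  have hδε : δ * (4 * ((M : ℝ) + 1)) = ε := by
    rw [hδdef]; field_simp
  have h2Mδ : 2 * (M : ℝ) * δ ≤ ε / 2 := by
    nlinarith [mul_nonneg hδ.le hMR.le, hδ.le]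
  have h2δ : 2 * δ ≤ ε / 4 := by
    nlinarith [mul_nonneg hδ.le (by linarith : (0:ℝ) ≤ (M : ℝ) - 1)]
  refine ⟨KM, hKM, f, hmem, hlo, hhi, ?_, ?_⟩
  · rw [hMv] at hfull
    linarith
  · intro m
    have := hpre m
    linarith [hAM]

lemma good_span (X : ℕ → Submodule ℝ E) (σ : ℕ → ℕ) (hσ : Function.Bijective σ) {y : E}
    (hy : y ∈ Submodule.span ℝ (DeltaSet X)) : Good X σ y :=
  Submodule.span_induction (fun z hz => good_delta X σ hσ hz) (good_zero X σ)
    (fun a b _ _ ha hb => good_add X σ ha hb)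
    (fun c z _ hz => good_smul X σ c hz) hy

end Aux

/-- If the closed linear span of `Δ(S)` is all of `X`, then for every bijection
`σ : ℕ → ℕ` the system `(X_{σ(k)})` is a representing system of subspaces in `X`. -/
theorem permuted_rss_of_dense_delta {E : Type*} [NormedAddCommGroup E] [NormedSpace ℝ E]
    [CompleteSpace E] (X : ℕ → Submodule ℝ E) (hX : ∀ k, IsClosed (X k : Set E))
    (hdense : (Submodule.span ℝ (DeltaSet X)).topologicalClosure = ⊤) :
    ∀ σ : ℕ → ℕ, Function.Bijective σ →
      ∀ x : E, ∃ f : ℕ → E, (∀ k, f k ∈ X (σ k)) ∧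
        Tendsto (fun n => ∑ k ∈ Finset.range n, f k) atTop (nhds x) := by
  intro σ hσ x
  have hdns : ∀ z : E, ∀ ε : ℝ, 0 < ε →
      ∃ y ∈ Submodule.span ℝ (DeltaSet X), ‖z - y‖ < ε := by
    intro z ε hε
    have hz : z ∈ closure ((Submodule.span ℝ (DeltaSet X) : Set E)) := by
      rw [← Submodule.topologicalClosure_coe, hdense]
      trivial
    obtain ⟨y, hy, hdy⟩ := Metric.mem_closure_iff.1 hz ε hε
    exact ⟨y, hy, by rwa [← dist_eq_norm]⟩
  set ee : ℕ → ℝ := fun n => (2⁻¹ : ℝ) ^ n with hee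
  have hee0 : ∀ n, 0 < ee n := fun n => by rw [hee]; positivity
  -- one step of the construction
  have step : ∀ (n : ℕ) (p : ℕ × (ℕ → E)),
      ∃ q : ℕ × (ℕ → E),
        ((∀ k, p.2 k ∈ X (σ k)) ∧ (∀ k, p.1 ≤ k → p.2 k = 0)) →
        (p.1 < q.1 ∧ (∀ k, q.2 k ∈ X (σ k)) ∧ (∀ k, q.1 ≤ k → q.2 k = 0) ∧
         (∀ k, k < p.1 → q.2 k = p.2 k) ∧
         ‖x - ∑ k ∈ Finset.range q.1, q.2 k‖ ≤ 2 * ee n ∧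
         ∀ m, ‖(∑ k ∈ Finset.range m, q.2 k) - ∑ k ∈ Finset.range m, p.2 k‖ ≤
           ‖x - ∑ k ∈ Finset.range p.1, p.2 k‖ + 2 * ee n) := by
    intro n p
    by_cases hp : (∀ k, p.2 k ∈ X (σ k)) ∧ (∀ k, p.1 ≤ k → p.2 k = 0)
    swap
    · exact ⟨p, fun h => absurd h hp⟩
    obtain ⟨hpmem, hpz⟩ := hp
    obtain ⟨y, hy, hry⟩ := hdns (x - ∑ k ∈ Finset.range p.1, p.2 k) (ee n) (hee0 n)
    obtain ⟨K', hK', f, hmem, hlo, hhi, hclose, hpre⟩ :=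
      good_span X σ hσ hy (ee n) (hee0 n) p.1
    refine ⟨(K' + 1, fun k => p.2 k + f k), fun _ => ⟨by omega,
      fun k => add_mem (hpmem k) (hmem k), ?_, ?_, ?_, ?_⟩⟩
    · intro k hk
      show p.2 k + f k = 0
      rw [hpz k (by omega), hhi k (by omega), add_zero]
    · intro k hk
      show p.2 k + f k = p.2 k
      rw [hlo k hk, add_zero]
    · show ‖x - ∑ k ∈ Finset.range (K' + 1), (p.2 k + f k)‖ ≤ 2 * ee n
      have e1 : ∑ k ∈ Finset.range (K' + 1), (p.2 k + f k)
          = (∑ k ∈ Finset.range p.1, p.2 k) + ∑ k ∈ Finset.range K', f k := by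
        rw [Finset.sum_add_distrib, sum_range_eq_of_zero p.2 (by omega) hpz,
          sum_range_eq_of_zero f (by omega) hhi]
      rw [e1]
      have e2 : x - ((∑ k ∈ Finset.range p.1, p.2 k) + ∑ k ∈ Finset.range K', f k)
          = ((x - ∑ k ∈ Finset.range p.1, p.2 k) - y) + (y - ∑ k ∈ Finset.range K', f k) := by
        abel
      rw [e2]
      calc ‖((x - ∑ k ∈ Finset.range p.1, p.2 k) - y) + (y - ∑ k ∈ Finset.range K', f k)‖
          ≤ ‖(x - ∑ k ∈ Finset.range p.1, p.2 k) - y‖ + ‖y - ∑ k ∈ Finset.range K', f k‖ :=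
            norm_add_le _ _
        _ ≤ 2 * ee n := by linarith [hry.le, hclose]
    · intro m
      show ‖(∑ k ∈ Finset.range m, (p.2 k + f k)) - ∑ k ∈ Finset.range m, p.2 k‖ ≤ _
      have e3 : (∑ k ∈ Finset.range m, (p.2 k + f k)) - ∑ k ∈ Finset.range m, p.2 k
          = ∑ k ∈ Finset.range m, f k := by
        rw [Finset.sum_add_distrib]; abel
      rw [e3]
      have hyb : ‖y‖ ≤ ‖x - ∑ k ∈ Finset.range p.1, p.2 k‖ + ee n := by
        have h1 : ‖y‖ - ‖x - ∑ k ∈ Finset.range p.1, p.2 k‖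
            ≤ ‖y - (x - ∑ k ∈ Finset.range p.1, p.2 k)‖ := norm_sub_norm_le _ _
        rw [norm_sub_rev y] at h1
        linarith [hry.le]
      linarith [hpre m]
  choose next hnext using step
  set seq : ℕ → ℕ × (ℕ → E) := fun n => Nat.rec ((0 : ℕ), fun _ => (0 : E)) next n with hseq
  have hInv : ∀ n, (∀ k, (seq n).2 k ∈ X (σ k)) ∧ (∀ k, (seq n).1 ≤ k → (seq n).2 k = 0) := by
    intro n
    induction n with
    | zero => exact ⟨fun k => Submodule.zero_mem _, fun _ _ => rfl⟩
    | succ n ih =>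
      obtain ⟨_, h2, h3, _, _, _⟩ := hnext n (seq n) ih
      exact ⟨h2, h3⟩
  have hrel : ∀ n, ((seq n).1 < (seq (n+1)).1 ∧ (∀ k, (seq (n+1)).2 k ∈ X (σ k)) ∧
      (∀ k, (seq (n+1)).1 ≤ k → (seq (n+1)).2 k = 0) ∧
      (∀ k, k < (seq n).1 → (seq (n+1)).2 k = (seq n).2 k) ∧
      ‖x - ∑ k ∈ Finset.range (seq (n+1)).1, (seq (n+1)).2 k‖ ≤ 2 * ee n ∧
      ∀ m, ‖(∑ k ∈ Finset.range m, (seq (n+1)).2 k) - ∑ k ∈ Finset.range m, (seq n).2 k‖ ≤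
        ‖x - ∑ k ∈ Finset.range (seq n).1, (seq n).2 k‖ + 2 * ee n) :=
    fun n => hnext n (seq n) (hInv n)
  have hKmono : StrictMono (fun n => (seq n).1) := strictMono_nat_of_lt_succ fun n => (hrel n).1
  have hK0 : (seq 0).1 = 0 := rfl
  have hKge : ∀ n, n ≤ (seq n).1 := fun n => hKmono.le_apply
  have hstab : ∀ n m, n ≤ m → ∀ k, k < (seq n).1 → (seq m).2 k = (seq n).2 k := by
    intro n m hnm
    induction m with
    | zero =>
      intro k hk
      rw [Nat.le_zero.1 hnm]
    | succ m ih =>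
      intro k hk
      rcases Nat.lt_or_ge n (m + 1) with h | h
      · have hnm' : n ≤ m := by omega
        have h4 := (hrel m).2.2.2.1
        rw [h4 k (lt_of_lt_of_le hk (hKmono.monotone hnm')), ih hnm' k hk]
      · have hnm2 : n = m + 1 := by omega
        rw [hnm2]
  set f : ℕ → E := fun k => (seq (k + 1)).2 k with hfdef
  have hf_eq : ∀ n k, k < (seq n).1 → f k = (seq n).2 k := by
    intro n k hk
    rcases le_total n (k + 1) with h | h
    · exact hstab n (k + 1) h k hk
    · exact (hstab (k + 1) n h k
        (lt_of_lt_of_le (Nat.lt_succ_self k) (hKge (k + 1)))).symm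
  refine ⟨f, fun k => (hInv (k + 1)).1 k, ?_⟩
  rw [Metric.tendsto_atTop]
  intro ε hε
  obtain ⟨n₀, hn₀⟩ : ∃ n₀ : ℕ, 10 * ee n₀ < ε := by
    obtain ⟨n₀, h⟩ := exists_pow_lt_of_lt_one (show (0:ℝ) < ε / 10 by positivity)
      (show (2⁻¹ : ℝ) < 1 by norm_num)
    exact ⟨n₀, by rw [hee]; simp only; linarith⟩
  refine ⟨(seq (n₀ + 1)).1, fun m hm => ?_⟩
  have hex : ∃ j, m < (seq j).1 :=
    ⟨m + 1, lt_of_lt_of_le (Nat.lt_succ_self m) (hKge (m + 1))⟩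
  have hjlt : m < (seq (Nat.find hex)).1 := Nat.find_spec hex
  have hjne : Nat.find hex ≠ 0 := by
    intro h0
    rw [h0, hK0] at hjlt
    omega
  obtain ⟨n, hn⟩ := Nat.exists_eq_succ_of_ne_zero hjne
  rw [hn] at hjlt
  simp only [Nat.succ_eq_add_one] at hjlt
  have hKnm : (seq n).1 ≤ m := le_of_not_gt (by
    have := Nat.find_min hex (show n < Nat.find hex by omega)
    exact this)
  have hn1 : n₀ + 1 ≤ n := by
    by_contra h
    push_neg at h
    have h5 := hKmono.monotone (show n + 1 ≤ n₀ + 1 by omega)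
    omega
  obtain ⟨n', rfl⟩ : ∃ n', n = n' + 1 := ⟨n - 1, by omega⟩
  -- the key estimates
  have e1 : ∑ k ∈ Finset.range m, f k = ∑ k ∈ Finset.range m, (seq (n' + 2)).2 k :=
    Finset.sum_congr rfl fun k hk =>
      hf_eq (n' + 2) k (lt_trans (Finset.mem_range.1 hk) hjlt)
  have e2 : ∑ k ∈ Finset.range m, (seq (n' + 1)).2 k
      = ∑ k ∈ Finset.range (seq (n' + 1)).1, (seq (n' + 1)).2 k :=
    sum_range_eq_of_zero _ hKnm (hInv (n' + 1)).2
  have hrn : ‖x - ∑ k ∈ Finset.range (seq (n' + 1)).1, (seq (n' + 1)).2 k‖ ≤ 2 * ee n' :=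
    (hrel n').2.2.2.2.1
  have hprem := (hrel (n' + 1)).2.2.2.2.2 m
  have e3 : x - ∑ k ∈ Finset.range m, (seq (n' + 2)).2 k
      = (x - ∑ k ∈ Finset.range (seq (n' + 1)).1, (seq (n' + 1)).2 k)
        - ((∑ k ∈ Finset.range m, (seq (n' + 2)).2 k)
            - ∑ k ∈ Finset.range (seq (n' + 1)).1, (seq (n' + 1)).2 k) := by
    abel
  have e4 : (∑ k ∈ Finset.range m, (seq (n' + 2)).2 k)
      - ∑ k ∈ Finset.range (seq (n' + 1)).1, (seq (n' + 1)).2 k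
      = (∑ k ∈ Finset.range m, (seq (n' + 2)).2 k)
        - ∑ k ∈ Finset.range m, (seq (n' + 1)).2 k := by rw [e2]
  have hnorm : ‖x - ∑ k ∈ Finset.range m, (seq (n' + 2)).2 k‖
      ≤ 2 * ee n' + (2 * ee n' + 2 * ee (n' + 1)) := by
    rw [e3, e4]
    calc ‖(x - ∑ k ∈ Finset.range (seq (n' + 1)).1, (seq (n' + 1)).2 k)
          - ((∑ k ∈ Finset.range m, (seq (n' + 2)).2 k)
              - ∑ k ∈ Finset.range m, (seq (n' + 1)).2 k)‖
        ≤ ‖x - ∑ k ∈ Finset.range (seq (n' + 1)).1, (seq (n' + 1)).2 k‖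
          + ‖(∑ k ∈ Finset.range m, (seq (n' + 2)).2 k)
              - ∑ k ∈ Finset.range m, (seq (n' + 1)).2 k‖ := norm_sub_le _ _
      _ ≤ 2 * ee n' + (2 * ee n' + 2 * ee (n' + 1)) := by linarith [hprem, hrn]
  have hmono : ee n' ≤ ee n₀ := by
    rw [hee]
    exact pow_le_pow_of_le_one (by norm_num) (by norm_num) (by omega)
  have heq : ee (n' + 1) = 2⁻¹ * ee n' := by rw [hee]; ring
  rw [dist_eq_norm, ← norm_sub_rev, e1]
  calc ‖x - ∑ k ∈ Finset.range m, (seq (n' + 2)).2 k‖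
      ≤ 2 * ee n' + (2 * ee n' + 2 * ee (n' + 1)) := hnorm
    _ = 5 * ee n' := by rw [heq]; ring
    _ ≤ 5 * ee n₀ := by linarith
    _ < ε := by linarith
end

section
/- Let X = L_p([0,1]) for p ∈ [1,∞), and let X_k be the one-dimensional subspace spanned by the monomial x^k for k ≥ 0. If f ∈ X admits a representation f = Σ_{k=0}^∞ a_k x^k converging in the L_p norm, then f agrees almost everywhere with a function that is C^∞ on [0,1). In particular, the system (X_k)_{k≥0} is not a representing system of subspaces in L_p([0,1]), even though for every n the closed linear span of {x^k : k ≥ n} is all of L_p([0,1]). -/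
open Filter Finset MeasureTheory
open scoped ENNReal

lemma coef_decay (p : ℝ≥0∞) (hp1 : 1 ≤ p) (hp : p ≠ ⊤) (f : ℝ → ℝ)
    (hf : MemLp f p (volume.restrict (Set.Icc (0:ℝ) 1))) (a : ℕ → ℝ)
    (hT : Tendsto (fun n => eLpNorm (fun x => f x - ∑ k ∈ Finset.range n, a k * x ^ k) p
      (volume.restrict (Set.Icc (0:ℝ) 1))) atTop (nhds 0))
    {r : ℝ} (hr0 : 0 < r) (hr1 : r < 1) :
    Tendsto (fun k => |a k| * r ^ k) atTop (nhds 0) := by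
  set μ := volume.restrict (Set.Icc (0:ℝ) 1) with hμ
  have hp0 : p ≠ 0 := fun h => by simp [h] at hp1
  have hSm : ∀ n : ℕ, AEStronglyMeasurable (fun x : ℝ => f x - ∑ k ∈ Finset.range n, a k * x ^ k) μ := by
    intro n
    exact hf.1.sub (Continuous.aestronglyMeasurable (by continuity))
  -- the terms go to 0 in eLpNorm
  have hterm : Tendsto (fun k => eLpNorm (fun x : ℝ => a k * x ^ k) p μ) atTop (nhds 0) := by
    have hle : ∀ k : ℕ, eLpNorm (fun x : ℝ => a k * x ^ k) p μ ≤
        eLpNorm (fun x => f x - ∑ j ∈ Finset.range k, a j * x ^ j) p μ +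
        eLpNorm (fun x => f x - ∑ j ∈ Finset.range (k+1), a j * x ^ j) p μ := by
      intro k
      have hfun : (fun x : ℝ => a k * x ^ k) =
          (fun x => f x - ∑ j ∈ Finset.range k, a j * x ^ j) -
          (fun x => f x - ∑ j ∈ Finset.range (k+1), a j * x ^ j) := by
        funext x
        simp only [Finset.sum_range_succ, Pi.sub_apply]
        ring
      rw [hfun]
      exact eLpNorm_sub_le (hSm k) (hSm (k+1)) hp1
    have h2 : Tendsto (fun k => eLpNorm (fun x => f x - ∑ j ∈ Finset.range k, a j * x ^ j) p μ +
        eLpNorm (fun x => f x - ∑ j ∈ Finset.range (k+1), a j * x ^ j) p μ) atTop (nhds 0) := by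
      simpa using Tendsto.add hT (hT.comp (tendsto_add_atTop_nat 1))
    exact tendsto_of_tendsto_of_tendsto_of_le_of_le tendsto_const_nhds h2
      (fun k => zero_le) hle
  -- lower bound on each term
  set C : ℝ≥0∞ := (ENNReal.ofReal (1 - r)) ^ (1 / p.toReal) with hC
  have h1r : (0:ℝ) < 1 - r := by linarith
  have hor0 : ENNReal.ofReal (1 - r) ≠ 0 := ne_of_gt (ENNReal.ofReal_pos.2 h1r)
  have hC0 : C ≠ 0 := by
    simp [hC, ENNReal.rpow_eq_zero_iff, hor0, ENNReal.ofReal_ne_top]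
  have hCt : C ≠ ⊤ := by
    simp [hC, ENNReal.rpow_eq_top_iff, hor0, ENNReal.ofReal_ne_top]
  have hlow : ∀ k : ℕ, (‖|a k| * r ^ k‖₊ : ℝ≥0∞) * C ≤ eLpNorm (fun x : ℝ => a k * x ^ k) p μ := by
    intro k
    have hsub : Set.Icc r 1 ⊆ Set.Icc (0:ℝ) 1 := Set.Icc_subset_Icc hr0.le le_rfl
    have hmono : eLpNorm (fun x : ℝ => a k * x ^ k) p (volume.restrict (Set.Icc r 1)) ≤
        eLpNorm (fun x : ℝ => a k * x ^ k) p μ :=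
      eLpNorm_mono_measure _ (Measure.restrict_mono hsub le_rfl)
    refine le_trans ?_ hmono
    have hbd : ∀ᵐ x ∂(volume.restrict (Set.Icc r 1)),
        ‖|a k| * r ^ k‖ ≤ ‖a k * x ^ k‖ := by
      filter_upwards [ae_restrict_mem measurableSet_Icc] with x hx
      have hx1 : (0:ℝ) ≤ r ^ k := pow_nonneg hr0.le k
      have hx2 : r ^ k ≤ x ^ k := pow_le_pow_left₀ hr0.le hx.1 k
      rw [Real.norm_eq_abs, Real.norm_eq_abs, abs_mul, abs_mul, abs_abs, abs_of_nonneg hx1,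
        abs_of_nonneg (le_trans hx1 hx2)]
      exact mul_le_mul_of_nonneg_left hx2 (abs_nonneg _)
    have := eLpNorm_mono_ae (p := p) hbd
    rwa [eLpNorm_const _ hp0 ?_, Measure.restrict_apply_univ, Real.volume_Icc] at this
    · exact fun h => by
        have := congrArg (fun ν : Measure ℝ => ν Set.univ) h
        simp [Measure.restrict_apply_univ, Real.volume_Icc, ENNReal.ofReal_eq_zero] at this
        linarith
  -- squeeze in ℝ≥0∞
  have hnn : Tendsto (fun k => (‖|a k| * r ^ k‖₊ : ℝ≥0∞)) atTop (nhds 0) := by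
    have hdiv : Tendsto (fun k => eLpNorm (fun x : ℝ => a k * x ^ k) p μ / C) atTop (nhds 0) := by
      simpa using ENNReal.Tendsto.div_const hterm (Or.inr hC0)
    refine tendsto_of_tendsto_of_tendsto_of_le_of_le tendsto_const_nhds hdiv
      (fun k => zero_le) (fun k => ?_)
    rw [ENNReal.le_div_iff_mul_le (Or.inl hC0) (Or.inl hCt)]
    exact hlow k
  rw [← ENNReal.coe_zero, ENNReal.tendsto_coe] at hnn
  have h2 : Tendsto (fun k => ((‖|a k| * r ^ k‖₊ : NNReal) : ℝ)) atTop (nhds ((0:NNReal) : ℝ)) :=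
    NNReal.tendsto_coe.2 hnn
  rw [NNReal.coe_zero] at h2
  refine h2.congr fun k => ?_
  rw [coe_nnnorm, Real.norm_eq_abs, abs_of_nonneg (by positivity)]

lemma summable_of_decay (a : ℕ → ℝ)
    (hd : ∀ r : ℝ, 0 < r → r < 1 → Tendsto (fun k => |a k| * r ^ k) atTop (nhds 0))
    {x : ℝ} (hx : |x| < 1) : Summable (fun k => a k * x ^ k) := by
  set r := (|x| + 1) / 2 with hr
  have hax : 0 ≤ |x| := abs_nonneg x
  have hr0 : 0 < r := by positivity
  have hxr : |x| < r := by rw [hr]; linarith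
  have hr1 : r < 1 := by rw [hr]; linarith
  have hb := hd r hr0 hr1
  have hgeo : Summable (fun k : ℕ => (|x| / r) ^ k) :=
    summable_geometric_of_lt_one (by positivity) (by rw [div_lt_one hr0]; exact hxr)
  refine summable_of_isBigO_nat hgeo (Asymptotics.IsBigO.of_bound 1 ?_)
  have hev : ∀ᶠ k in atTop, |a k| * r ^ k ≤ 1 :=
    Tendsto.eventually_le_const (by norm_num) hb
  filter_upwards [hev] with k hk
  have h1 : ‖a k * x ^ k‖ = (|a k| * r ^ k) * (|x| / r) ^ k := by
    rw [Real.norm_eq_abs, abs_mul, abs_pow]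
    field_simp
    rw [mul_assoc, ← mul_pow, mul_div_assoc', mul_div_cancel_left₀ _ hr0.ne']
  have h2 : ‖(|x| / r) ^ k‖ = (|x| / r) ^ k := by
    rw [Real.norm_eq_abs, abs_pow, abs_of_nonneg (by positivity)]
  rw [h1, h2, one_mul]
  exact mul_le_of_le_one_left (by positivity) hk

lemma partA (p : ℝ≥0∞) (hp1 : 1 ≤ p) (hp : p ≠ ⊤) (f : ℝ → ℝ)
    (hf : MemLp f p (volume.restrict (Set.Icc (0:ℝ) 1))) (a : ℕ → ℝ)
    (hT : Tendsto (fun n => eLpNorm (fun x => f x - ∑ k ∈ Finset.range n, a k * x ^ k) p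
      (volume.restrict (Set.Icc (0:ℝ) 1))) atTop (nhds 0)) :
    ∃ g : ℝ → ℝ, ContDiffOn ℝ (⊤ : ℕ∞) g (Set.Ico (0:ℝ) 1) ∧
      f =ᵐ[volume.restrict (Set.Icc (0:ℝ) 1)] g := by
  set μ := volume.restrict (Set.Icc (0:ℝ) 1) with hμ
  have hp0 : p ≠ 0 := fun h => by simp [h] at hp1
  have hd : ∀ r : ℝ, 0 < r → r < 1 → Tendsto (fun k => |a k| * r ^ k) atTop (nhds 0) :=
    fun r h0 h1 => coef_decay p hp1 hp f hf a hT h0 h1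
  have hsum : ∀ x : ℝ, |x| < 1 → Summable (fun k => a k * x ^ k) :=
    fun x hx => summable_of_decay a hd hx
  set g : ℝ → ℝ := fun x => ∑' k, a k * x ^ k with hg
  -- radius of the power series is at least 1
  set ps := FormalMultilinearSeries.ofScalars ℝ a with hps
  have hrad : 1 ≤ ps.radius := by
    apply ENNReal.le_of_forall_nnreal_lt
    intro r hr
    rcases eq_or_lt_of_le (zero_le : (0:NNReal) ≤ r) with hr0 | hr0
    · rw [← hr0]; exact zero_le
    · have hr1 : (r : ℝ) < 1 := by exact_mod_cast ENNReal.coe_lt_one_iff.1 hr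
      refine FormalMultilinearSeries.le_radius_of_tendsto ps (l := 0) ?_
      have := hd r (by exact_mod_cast hr0) hr1
      refine this.congr fun n => ?_
      rw [hps, FormalMultilinearSeries.ofScalars_norm, Real.norm_eq_abs]
  have hball : HasFPowerSeriesOnBall g ps 0 1 := by
    refine ⟨hrad, zero_lt_one, ?_⟩
    intro y hy
    have hy1 : |y| < 1 := by
      rw [← ENNReal.ofReal_one, Metric.emetric_ball, Metric.mem_ball,
        Real.dist_eq, sub_zero] at hy
      exact hy
    have := (hsum y hy1).hasSum
    rw [zero_add]
    refine HasSum.congr_fun this fun n => ?_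
    rw [hps, FormalMultilinearSeries.ofScalars_apply_eq, smul_eq_mul]
  -- smoothness
  have hsmooth : ContDiffOn ℝ (⊤ : ℕ∞) g (Set.Ico (0:ℝ) 1) := by
    intro x hx
    have hxb : x ∈ Metric.eball (0:ℝ) 1 := by
      rw [← ENNReal.ofReal_one, Metric.emetric_ball, Metric.mem_ball, Real.dist_eq, sub_zero]
      rw [abs_of_nonneg hx.1]; exact hx.2
    exact ((hball.analyticAt_of_mem hxb).contDiffAt).contDiffWithinAt
  refine ⟨g, hsmooth, ?_⟩
  -- a.e. identification
  have hSm : ∀ n : ℕ, AEStronglyMeasurable (fun x : ℝ => ∑ k ∈ Finset.range n, a k * x ^ k) μ :=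
    fun n => Continuous.aestronglyMeasurable (by continuity)
  have hT' : Tendsto (fun n => eLpNorm ((fun x : ℝ => ∑ k ∈ Finset.range n, a k * x ^ k) - f) p μ)
      atTop (nhds 0) := by
    refine hT.congr fun n => ?_
    rw [← eLpNorm_neg]
    congr 1
    funext x
    simp [Pi.sub_apply]
  have hTIM := tendstoInMeasure_of_tendsto_eLpNorm hp0 hSm hf.1 hT'
  obtain ⟨ns, hns, hae⟩ := hTIM.exists_seq_tendsto_ae
  have h1 : (∀ᵐ x ∂μ, x ≠ 1) := by
    rw [ae_iff]
    have : {x : ℝ | ¬x ≠ 1} = {1} := by ext y; simp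
    rw [this]
    exact le_antisymm (le_trans (Measure.restrict_le_self _) (by simp)) (zero_le)
  filter_upwards [hae, ae_restrict_mem measurableSet_Icc, h1] with x hx1 hx2 hx3
  have hxlt : |x| < 1 := by
    rw [abs_of_nonneg hx2.1]
    exact lt_of_le_of_ne hx2.2 hx3
  have hgx : Tendsto (fun n => ∑ k ∈ Finset.range n, a k * x ^ k) atTop (nhds (g x)) :=
    ((hsum x hxlt).hasSum).tendsto_sum_nat
  have hsub : Tendsto (fun i => ∑ k ∈ Finset.range (ns i), a k * x ^ k) atTop (nhds (g x)) :=
    hgx.comp hns.tendsto_atTop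
  exact tendsto_nhds_unique hx1 hsub

lemma partB (p : ℝ≥0∞) (hp1 : 1 ≤ p) (hp : p ≠ ⊤) :
    ¬ (∀ f : ℝ → ℝ, MemLp f p (volume.restrict (Set.Icc (0:ℝ) 1)) →
      ∃ a : ℕ → ℝ,
        Tendsto (fun n => eLpNorm (fun x => f x - ∑ k ∈ Finset.range n, a k * x ^ k) p
            (volume.restrict (Set.Icc (0:ℝ) 1))) atTop (nhds 0)) := by
  intro H
  set μ := volume.restrict (Set.Icc (0:ℝ) 1) with hμ
  haveI : IsFiniteMeasure μ := by
    constructor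
    rw [hμ, Measure.restrict_apply_univ, Real.volume_Icc]
    exact ENNReal.ofReal_lt_top
  set f : ℝ → ℝ := fun x => if x ≤ 1/2 then 1 else 0 with hfdef
  have hfmeas : AEStronglyMeasurable f μ :=
    (Measurable.ite (measurableSet_le measurable_id measurable_const)
      measurable_const measurable_const).aestronglyMeasurable
  have hfm : MemLp f p μ := by
    refine MemLp.of_bound hfmeas 1 (Eventually.of_forall fun x => ?_)
    rw [hfdef]
    dsimp only
    split_ifs <;> simp
  obtain ⟨a, hTa⟩ := H f hfm
  obtain ⟨g, hgsm, hfg⟩ := partA p hp1 hp f hfm a hTa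
  have hN : volume ({x | f x ≠ g x} ∩ Set.Icc 0 1) = 0 := by
    have h := hfg
    rw [Filter.EventuallyEq, ae_iff] at h
    rwa [Measure.restrict_apply' measurableSet_Icc] at h
  have find : ∀ A : Set ℝ, A ⊆ Set.Icc 0 1 → 0 < volume A → ∃ x ∈ A, f x = g x := by
    intro A hA hpos
    by_contra hcon
    push_neg at hcon
    have hsub : A ⊆ {x | f x ≠ g x} ∩ Set.Icc 0 1 := fun x hx => ⟨hcon x hx, hA hx⟩
    exact absurd (measure_mono_null hsub hN) (ne_of_gt hpos)
  have hc3 : ∀ j : ℕ, 0 < 1/((j:ℝ)+3) ∧ 1/((j:ℝ)+3) ≤ 1/3 := by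
    intro j
    constructor
    · positivity
    · apply one_div_le_one_div_of_le <;> [norm_num; skip]
      have : (0:ℝ) ≤ (j:ℝ) := Nat.cast_nonneg j
      linarith
  have hX : ∀ j : ℕ, ∃ x, x ∈ Set.Ioo (1/2 - 1/((j:ℝ)+3)) (1/2) ∧ g x = 1 := by
    intro j
    obtain ⟨h0, h13⟩ := hc3 j
    have hsub : Set.Ioo (1/2 - 1/((j:ℝ)+3)) (1/2) ⊆ Set.Icc (0:ℝ) 1 := by
      intro x hx
      constructor
      · linarith [hx.1]
      · linarith [hx.2]
    have hpos : 0 < volume (Set.Ioo (1/2 - 1/((j:ℝ)+3)) (1/2 : ℝ)) := by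
      rw [Real.volume_Ioo]
      rw [ENNReal.ofReal_pos]
      linarith
    obtain ⟨x, hxA, hxe⟩ := find _ hsub hpos
    refine ⟨x, hxA, ?_⟩
    rw [← hxe, hfdef]
    simp only [if_pos (le_of_lt hxA.2)]
  have hY : ∀ j : ℕ, ∃ y, y ∈ Set.Ioo (1/2 : ℝ) (1/2 + 1/((j:ℝ)+3)) ∧ g y = 0 := by
    intro j
    obtain ⟨h0, h13⟩ := hc3 j
    have hsub : Set.Ioo (1/2 : ℝ) (1/2 + 1/((j:ℝ)+3)) ⊆ Set.Icc (0:ℝ) 1 := by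
      intro x hx
      constructor
      · linarith [hx.1]
      · linarith [hx.2]
    have hpos : 0 < volume (Set.Ioo (1/2 : ℝ) (1/2 + 1/((j:ℝ)+3))) := by
      rw [Real.volume_Ioo, ENNReal.ofReal_pos]
      linarith
    obtain ⟨y, hyA, hye⟩ := find _ hsub hpos
    refine ⟨y, hyA, ?_⟩
    rw [← hye, hfdef]
    simp only [if_neg (not_le.2 hyA.1)]
  choose X hXmem hXval using hX
  choose Y hYmem hYval using hY
  have hc : Tendsto (fun j : ℕ => 1/((j:ℝ)+3)) atTop (nhds 0) := by
    have h1 : Tendsto (fun j : ℕ => ((j:ℝ)+3)) atTop atTop :=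
      tendsto_atTop_add_const_right _ 3 tendsto_natCast_atTop_atTop
    simpa [one_div, Pi.inv_def] using h1.inv_tendsto_atTop
  have hXlim : Tendsto X atTop (nhds (1/2 : ℝ)) := by
    refine tendsto_of_tendsto_of_tendsto_of_le_of_le
      (g := fun j : ℕ => 1/2 - 1/((j:ℝ)+3)) (h := fun _ : ℕ => (1/2 : ℝ)) ?_ ?_
      (fun j => by simpa using le_of_lt (hXmem j).1)
      (fun j => by simpa using le_of_lt (hXmem j).2)
    · simpa using tendsto_const_nhds.sub hc
    · exact tendsto_const_nhds
  have hYlim : Tendsto Y atTop (nhds (1/2 : ℝ)) := by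
    refine tendsto_of_tendsto_of_tendsto_of_le_of_le
      (g := fun _ : ℕ => (1/2 : ℝ)) (h := fun j : ℕ => 1/2 + 1/((j:ℝ)+3)) ?_ ?_
      (fun j => by simpa using le_of_lt (hYmem j).1)
      (fun j => by simpa using le_of_lt (hYmem j).2)
    · exact tendsto_const_nhds
    · simpa using tendsto_const_nhds.add hc
  have hhalf : (1/2 : ℝ) ∈ Set.Ico (0:ℝ) 1 := by norm_num
  have hgc : ContinuousWithinAt g (Set.Ico (0:ℝ) 1) (1/2) :=
    (hgsm.continuousOn).continuousWithinAt hhalf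
  have hXIco : ∀ j, X j ∈ Set.Ico (0:ℝ) 1 := by
    intro j
    obtain ⟨h0, h13⟩ := hc3 j
    exact ⟨by linarith [(hXmem j).1], by linarith [(hXmem j).2]⟩
  have hYIco : ∀ j, Y j ∈ Set.Ico (0:ℝ) 1 := by
    intro j
    obtain ⟨h0, h13⟩ := hc3 j
    exact ⟨by linarith [(hYmem j).1], by linarith [(hYmem j).2]⟩
  have hXin : Tendsto X atTop (nhdsWithin (1/2 : ℝ) (Set.Ico (0:ℝ) 1)) :=
    tendsto_nhdsWithin_of_tendsto_nhds_of_eventually_within _ hXlim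
      (Eventually.of_forall hXIco)
  have hYin : Tendsto Y atTop (nhdsWithin (1/2 : ℝ) (Set.Ico (0:ℝ) 1)) :=
    tendsto_nhdsWithin_of_tendsto_nhds_of_eventually_within _ hYlim
      (Eventually.of_forall hYIco)
  have h1 : g (1/2) = 1 := by
    refine tendsto_nhds_unique (hgc.tendsto.comp hXin) ?_
    have : (g ∘ X) = fun _ => (1:ℝ) := funext fun j => hXval j
    rw [this]
    exact tendsto_const_nhds
  have h0 : g (1/2) = 0 := by
    refine tendsto_nhds_unique (hgc.tendsto.comp hYin) ?_
    have : (g ∘ Y) = fun _ => (0:ℝ) := funext fun j => hYval j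
    rw [this]
    exact tendsto_const_nhds
  rw [h1] at h0
  norm_num at h0

lemma partC (p : ℝ≥0∞) (hp1 : 1 ≤ p) (hp : p ≠ ⊤) (n : ℕ) (f : ℝ → ℝ)
    (hf : MemLp f p (volume.restrict (Set.Icc (0:ℝ) 1))) (ε : ℝ) (hε : 0 < ε) :
    ∃ (s : Finset ℕ) (b : ℕ → ℝ), (∀ k ∈ s, n ≤ k) ∧
      eLpNorm (fun x => f x - ∑ k ∈ s, b k * x ^ k) p (volume.restrict (Set.Icc (0:ℝ) 1))
        < ENNReal.ofReal ε := by
  set μ := volume.restrict (Set.Icc (0:ℝ) 1) with hμ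
  have hp0 : p ≠ 0 := fun h => by simp [h] at hp1
  have hpt : 0 < p.toReal := ENNReal.toReal_pos hp0 hp
  have hμuniv : μ Set.univ = 1 := by
    rw [hμ, Measure.restrict_apply_univ, Real.volume_Icc]
    norm_num
  haveI : IsFiniteMeasure μ := ⟨by rw [hμuniv]; exact ENNReal.one_lt_top⟩
  haveI : μ.WeaklyRegular := by
    rw [hμ]
    exact Measure.WeaklyRegular.restrict_of_measure_ne_top
      (by rw [Real.volume_Icc]; exact ENNReal.ofReal_ne_top)
  have hε4 : (0:ℝ) < ε/4 := by linarith
  -- Step 1: bounded continuous approximation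
  obtain ⟨G, hG1, hG2⟩ := hf.exists_boundedContinuous_eLpNorm_sub_le hp
    (ε := ENNReal.ofReal (ε/4)) (ne_of_gt (ENNReal.ofReal_pos.2 hε4))
  -- Step 2: Weierstrass
  obtain ⟨P, hP⟩ := exists_polynomial_near_of_continuousOn 0 1 G
    (G.continuous.continuousOn) (ε/4) hε4
  have h2 : eLpNorm (fun x => G x - P.eval x) p μ ≤ ENNReal.ofReal (ε/4) := by
    have := eLpNorm_le_of_ae_bound (p := p) (μ := μ) (C := ε/4)
      (f := fun x => G x - P.eval x) ?_
    · rwa [hμuniv, ENNReal.one_rpow, one_mul] at this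
    · filter_upwards [ae_restrict_mem measurableSet_Icc] with x hx
      rw [Real.norm_eq_abs, abs_sub_comm]
      exact (hP x hx).le
  -- Step 3: push the low-degree part above degree n
  obtain ⟨C, hC⟩ := (isCompact_Icc (a := (0:ℝ)) (b := 1)).exists_bound_of_continuousOn
    (P.continuous.continuousOn)
  have hC0 : 0 ≤ C := le_trans (norm_nonneg _) (hC 0 (by norm_num))
  set err : ℕ → ℝ → ℝ := fun m x => P.eval x * (1 - x^n)^m with herr
  have herrcont : ∀ m, Continuous (err m) := by
    intro m
    exact P.continuous.mul ((continuous_const.sub (continuous_pow n)).pow m)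
  -- the L^p norms of the errors tend to 0
  have hlim : Tendsto (fun m => eLpNorm (err m) p μ) atTop (nhds 0) := by
    have hlin : Tendsto (fun m => ∫⁻ x, (‖err m x‖₊ : ℝ≥0∞) ^ p.toReal ∂μ) atTop (nhds 0) := by
      have h0int : (0:ℝ≥0∞) = ∫⁻ _, 0 ∂μ := by simp
      rw [h0int]
      refine tendsto_lintegral_of_dominated_convergence
        (bound := fun _ => (ENNReal.ofReal C) ^ p.toReal) ?_ ?_ ?_ ?_
      · intro m
        exact (((herrcont m).measurable.nnnorm).coe_nnreal_ennreal).pow_const _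
      · intro m
        filter_upwards [ae_restrict_mem measurableSet_Icc] with x hx
        refine ENNReal.rpow_le_rpow ?_ ENNReal.toReal_nonneg
        rw [← ENNReal.ofReal_coe_nnreal, coe_nnnorm]
        refine ENNReal.ofReal_le_ofReal ?_
        rw [herr]
        have h1 : |1 - x^n| ≤ 1 := by
          rw [abs_le]
          have h2 : 0 ≤ x^n := pow_nonneg hx.1 n
          have h3 : x^n ≤ 1 := pow_le_one₀ hx.1 hx.2
          constructor <;> linarith
        calc ‖P.eval x * (1 - x^n)^m‖ = ‖P.eval x‖ * |1 - x^n|^m := by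
              rw [norm_mul, Real.norm_eq_abs (((1:ℝ) - x^n)^m), abs_pow]
          _ ≤ C * 1 := by
              refine mul_le_mul (hC x hx) (pow_le_one₀ (abs_nonneg _) h1) (by positivity) hC0
          _ = C := mul_one C
      · rw [lintegral_const, hμuniv, mul_one]
        exact ne_of_lt (ENNReal.rpow_lt_top_of_nonneg ENNReal.toReal_nonneg ENNReal.ofReal_ne_top)
      · have hae : ∀ᵐ x ∂μ, x ∈ Set.Icc (0:ℝ) 1 ∧ x ≠ 0 ∧ x ≠ 1 := by
          refine (ae_restrict_mem measurableSet_Icc).and ?_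
          refine Filter.Eventually.and ?_ ?_
          · rw [ae_iff]
            have hset : {a : ℝ | ¬ a ≠ 0} = {(0:ℝ)} := by ext y; simp
            rw [hset]
            exact le_antisymm (le_trans (Measure.restrict_le_self _) (by simp)) (zero_le)
          · rw [ae_iff]
            have hset : {a : ℝ | ¬ a ≠ 1} = {(1:ℝ)} := by ext y; simp
            rw [hset]
            exact le_antisymm (le_trans (Measure.restrict_le_self _) (by simp)) (zero_le)
        filter_upwards [hae] with x hx
        obtain ⟨hxI, hx0, hx1⟩ := hx
        have hx0' : 0 < x := lt_of_le_of_ne hxI.1 (Ne.symm hx0)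
        have hx1' : x < 1 := lt_of_le_of_ne hxI.2 hx1
        have hxn0 : 0 ≤ 1 - x^n := by
          have h4 : x^n ≤ 1 := pow_le_one₀ hxI.1 hxI.2
          linarith
        have hxn1 : 1 - x^n < 1 := by
          have : 0 < x^n := pow_pos hx0' n
          linarith
        have hre : Tendsto (fun m => err m x) atTop (nhds 0) := by
          have := tendsto_pow_atTop_nhds_zero_of_lt_one hxn0 hxn1
          have h5 := this.const_mul (P.eval x)
          rw [mul_zero] at h5
          exact h5
        have hcont : Continuous (fun y : ℝ => (‖y‖₊ : ℝ≥0∞) ^ p.toReal) :=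
          ENNReal.continuous_rpow_const.comp (ENNReal.continuous_coe.comp continuous_nnnorm)
        have h6 := (hcont.tendsto 0).comp hre
        simpa [Function.comp_def, ENNReal.zero_rpow_of_pos hpt] using h6
    have hrp : Tendsto (fun m => (∫⁻ x, (‖err m x‖₊ : ℝ≥0∞) ^ p.toReal ∂μ) ^ (1/p.toReal))
        atTop (nhds 0) := by
      have hcont : Continuous (fun y : ℝ≥0∞ => y ^ (1/p.toReal)) := ENNReal.continuous_rpow_const
      have h7 := (hcont.tendsto 0).comp hlin
      simpa [Function.comp_def, one_div, ENNReal.zero_rpow_of_pos (by positivity : (0:ℝ) < p.toReal⁻¹)] using h7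
    refine hrp.congr fun m => ?_
    rw [eLpNorm_eq_lintegral_rpow_enorm_toReal hp0 hp]
    rfl
  -- choose m with small error
  have hevsmall : ∀ᶠ m in atTop, eLpNorm (err m) p μ < ENNReal.ofReal (ε/4) :=
    hlim.eventually_lt_const (ENNReal.ofReal_pos.2 hε4)
  obtain ⟨m, hm⟩ := hevsmall.exists
  -- the polynomial with exponents ≥ n
  set R : Polynomial ℝ := P * (1 - (1 - Polynomial.X^n)^m) with hR
  have hdvd : Polynomial.X ^ n ∣ R := by
    have h8 := sub_dvd_pow_sub_pow (1 : Polynomial ℝ) (1 - Polynomial.X^n) m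
    have h9 : (1 : Polynomial ℝ) - (1 - Polynomial.X^n) = Polynomial.X^n := by ring
    rw [h9, one_pow] at h8
    exact Dvd.dvd.mul_left h8 P
  have hcoeff : ∀ k ∈ R.support, n ≤ k := by
    intro k hk
    by_contra hkn
    exact (Polynomial.mem_support_iff.1 hk) (Polynomial.X_pow_dvd_iff.1 hdvd k (not_le.1 hkn))
  have hsumR : ∀ x : ℝ, ∑ k ∈ R.support, R.coeff k * x ^ k = R.eval x := by
    intro x
    rw [Polynomial.eval_eq_sum, Polynomial.sum_def]
  have hRerr : ∀ x : ℝ, P.eval x - R.eval x = err m x := by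
    intro x
    rw [hR, herr]
    simp only [Polynomial.eval_mul, Polynomial.eval_sub, Polynomial.eval_one,
      Polynomial.eval_pow, Polynomial.eval_X]
    ring
  refine ⟨R.support, fun k => R.coeff k, hcoeff, ?_⟩
  -- triangle inequality
  have hGae : AEStronglyMeasurable (fun x : ℝ => G x) μ := G.continuous.aestronglyMeasurable
  have hsplit : (fun x : ℝ => f x - ∑ k ∈ R.support, R.coeff k * x ^ k) =
      (fun x => f x - G x) + ((fun x => G x - P.eval x) + fun x => P.eval x - R.eval x) := by
    funext x
    simp only [Pi.add_apply]
    rw [hsumR]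
    ring
  rw [hsplit]
  have hst1 : eLpNorm ((fun x : ℝ => f x - G x) + ((fun x => G x - P.eval x)
      + fun x => P.eval x - R.eval x)) p μ ≤
      eLpNorm (fun x : ℝ => f x - G x) p μ + eLpNorm ((fun x : ℝ => G x - P.eval x)
      + fun x => P.eval x - R.eval x) p μ :=
    eLpNorm_add_le (hf.1.sub hGae) (((G.continuous.sub P.continuous).aestronglyMeasurable).add
      ((P.continuous.sub R.continuous).aestronglyMeasurable)) hp1
  have hst2 : eLpNorm ((fun x : ℝ => G x - P.eval x) + fun x => P.eval x - R.eval x) p μ ≤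
      eLpNorm (fun x : ℝ => G x - P.eval x) p μ + eLpNorm (fun x : ℝ => P.eval x - R.eval x) p μ :=
    eLpNorm_add_le ((G.continuous.sub P.continuous).aestronglyMeasurable)
      ((P.continuous.sub R.continuous).aestronglyMeasurable) hp1
  have hG1' : eLpNorm (fun x : ℝ => f x - G x) p μ ≤ ENNReal.ofReal (ε/4) := hG1
  have herrm : eLpNorm (fun x : ℝ => P.eval x - R.eval x) p μ < ENNReal.ofReal (ε/4) := by
    have : (fun x : ℝ => P.eval x - R.eval x) = err m := funext hRerr
    rwa [this]
  calc eLpNorm ((fun x : ℝ => f x - G x) + ((fun x => G x - P.eval x)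
      + fun x => P.eval x - R.eval x)) p μ
      ≤ ENNReal.ofReal (ε/4) + (ENNReal.ofReal (ε/4) + ENNReal.ofReal (ε/4)) := by
        refine le_trans hst1 (add_le_add hG1' (le_trans hst2 (add_le_add h2 herrm.le)))
    _ < ENNReal.ofReal ε := by
        rw [← ENNReal.ofReal_add hε4.le hε4.le, ← ENNReal.ofReal_add hε4.le (by linarith)]
        rw [ENNReal.ofReal_lt_ofReal_iff hε]
        linarith


/-- In `X = L_p([0,1])`, `1 ≤ p < ∞`: (a) every `f` that is the `L_p`-limit of the partial
sums of a power series `Σ a_k x^k` agrees a.e. with a function which is `C^∞` on `[0,1)`;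
in particular (b) the system of the one-dimensional subspaces spanned by the monomials
`x^k` is not a representing system of subspaces in `L_p([0,1])`, even though (c) for every
`n` the closed linear span of `{x^k : k ≥ n}` is all of `L_p([0,1])`. -/
theorem monomials_not_rss_in_Lp (p : ℝ≥0∞) (hp1 : 1 ≤ p) (hp : p ≠ ⊤) :
    (∀ f : ℝ → ℝ, MemLp f p (volume.restrict (Set.Icc (0:ℝ) 1)) →
      ∀ a : ℕ → ℝ,
        Tendsto (fun n => eLpNorm (fun x => f x - ∑ k ∈ Finset.range n, a k * x ^ k) p
            (volume.restrict (Set.Icc (0:ℝ) 1))) atTop (nhds 0) →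
        ∃ g : ℝ → ℝ, ContDiffOn ℝ (⊤ : ℕ∞) g (Set.Ico (0:ℝ) 1) ∧
          f =ᵐ[volume.restrict (Set.Icc (0:ℝ) 1)] g) ∧
    ¬ (∀ f : ℝ → ℝ, MemLp f p (volume.restrict (Set.Icc (0:ℝ) 1)) →
      ∃ a : ℕ → ℝ,
        Tendsto (fun n => eLpNorm (fun x => f x - ∑ k ∈ Finset.range n, a k * x ^ k) p
            (volume.restrict (Set.Icc (0:ℝ) 1))) atTop (nhds 0)) ∧
    (∀ n : ℕ, ∀ f : ℝ → ℝ, MemLp f p (volume.restrict (Set.Icc (0:ℝ) 1)) →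
      ∀ ε : ℝ, 0 < ε → ∃ (s : Finset ℕ) (b : ℕ → ℝ), (∀ k ∈ s, n ≤ k) ∧
        eLpNorm (fun x => f x - ∑ k ∈ s, b k * x ^ k) p
            (volume.restrict (Set.Icc (0:ℝ) 1)) < ENNReal.ofReal ε) := by
  exact ⟨fun f hf a hT => partA p hp1 hp f hf a hT, partB p hp1 hp,
    fun n f hf ε hε => partC p hp1 hp n f hf ε hε⟩
end

section
/- Let X be a Banach space and S = (X_k)_{k≥1} a system of closed subspaces with Θ*_S(x) < ∞ for every x ∈ X. Then Θ*_S is a norm on X equivalent to the original norm. -/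
open Filter Finset
open scoped ENNReal

variable {E : Type*} [NormedAddCommGroup E] [NormedSpace ℝ E]

/-- For a finite tuple `P = (x_0, …, x_{n-1})` with `x_k ∈ X_k`,
`Θ_S(P) = max_k ‖x_0 + ⋯ + x_k‖` (as an extended nonnegative real). -/
noncomputable def ThetaP (n : ℕ) (f : ℕ → E) : ℝ≥0∞ :=
  (Finset.range n).sup fun k => ENNReal.ofReal ‖∑ j ∈ Finset.range (k + 1), f j‖

/-- `Θ_S(x, ε) = inf {Θ_S(P) : ‖Σ(P) − x‖ ≤ ε}` (infimum over the empty set is `∞`). -/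
noncomputable def Theta (X : ℕ → Submodule ℝ E) (x : E) (ε : ℝ) : ℝ≥0∞ :=
  ⨅ p : {p : ℕ × (ℕ → E) // (∀ k < p.1, p.2 k ∈ X k) ∧
      ‖(∑ j ∈ Finset.range p.1, p.2 j) - x‖ ≤ ε}, ThetaP p.1.1 p.1.2

/-- `Θ*_S(x) = sup_{ε > 0} Θ_S(x, ε) = lim_{ε → 0+} Θ_S(x, ε)`. -/
noncomputable def ThetaStar (X : ℕ → Submodule ℝ E) (x : E) : ℝ≥0∞ :=
  ⨆ ε : {ε : ℝ // 0 < ε}, Theta X x ε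

/-!
`Θ*_S` is subadditive and absolutely homogeneous because tuples can be added (after padding
the shorter one with zeros) and scaled, and it dominates `‖·‖` because the last partial sum of
an admissible tuple is `ε`-close to `x`. Its sublevel sets are closed, so on a Banach space it
is, once finite, a lower semicontinuous seminorm, hence continuous (a Banach space is
barrelled, by Baire's theorem) and therefore bounded by a multiple of `‖·‖`.
-/

omit [NormedSpace ℝ E] in
lemma le_thetaP {n k : ℕ} (f : ℕ → E) (hk : k < n) :
    ENNReal.ofReal ‖∑ j ∈ range (k + 1), f j‖ ≤ ThetaP n f :=
  Finset.le_sup (f := fun k => ENNReal.ofReal ‖∑ j ∈ range (k + 1), f j‖) (mem_range.2 hk)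

omit [NormedSpace ℝ E] in
lemma ofReal_norm_sum_le_thetaP (n : ℕ) (f : ℕ → E) :
    ENNReal.ofReal ‖∑ j ∈ range n, f j‖ ≤ ThetaP n f := by
  rcases n with _ | n
  · simp
  · exact le_thetaP f n.lt_succ_self

omit [NormedSpace ℝ E] in
lemma thetaP_add_le (n : ℕ) (f g : ℕ → E) :
    ThetaP n (f + g) ≤ ThetaP n f + ThetaP n g :=
  Finset.sup_le fun k hk => calc
    ENNReal.ofReal ‖∑ j ∈ range (k + 1), (f + g) j‖
        ≤ ENNReal.ofReal ‖∑ j ∈ range (k + 1), f j‖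
          + ENNReal.ofReal ‖∑ j ∈ range (k + 1), g j‖ := by
      rw [Pi.add_def, sum_add_distrib]
      exact (ENNReal.ofReal_le_ofReal (norm_add_le _ _)).trans ENNReal.ofReal_add_le
    _ ≤ ThetaP n f + ThetaP n g :=
      add_le_add (le_thetaP f (mem_range.1 hk)) (le_thetaP g (mem_range.1 hk))

lemma thetaP_smul_le (a : ℝ) (n : ℕ) (f : ℕ → E) :
    ThetaP n (a • f) ≤ ENNReal.ofReal |a| * ThetaP n f :=
  Finset.sup_le fun k hk => by
    simp only [Pi.smul_apply, ← smul_sum, norm_smul, Real.norm_eq_abs,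
      ENNReal.ofReal_mul (abs_nonneg a)]
    exact mul_le_mul_right (le_thetaP f (mem_range.1 hk)) _

lemma sum_range_ite_lt {M : Type*} [AddCommMonoid M] (N n : ℕ) (f : ℕ → M) :
    ∑ j ∈ range N, (if j < n then f j else 0) = ∑ j ∈ range (min N n), f j := by
  rw [← sum_filter]
  congr 1
  ext j
  simp

omit [NormedSpace ℝ E] in
lemma thetaP_ite_lt_le (N n : ℕ) (f : ℕ → E) :
    ThetaP N (fun j => if j < n then f j else 0) ≤ ThetaP n f :=
  Finset.sup_le fun k _ => by
    rw [sum_range_ite_lt]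
    rcases lt_or_ge k n with hk | hk
    · rw [min_eq_left hk]
      exact le_thetaP f hk
    · rw [min_eq_right (by omega)]
      exact ofReal_norm_sum_le_thetaP n f

variable (X : ℕ → Submodule ℝ E)

lemma ite_lt_mem {n : ℕ} {f : ℕ → E} (hf : ∀ k < n, f k ∈ X k) (k : ℕ) :
    (if k < n then f k else 0) ∈ X k := by
  split_ifs with hk
  exacts [hf k hk, zero_mem _]

lemma theta_le_thetaP {x : E} {ε : ℝ} {n : ℕ} {f : ℕ → E} (hf : ∀ k < n, f k ∈ X k)
    (hx : ‖∑ j ∈ range n, f j - x‖ ≤ ε) : Theta X x ε ≤ ThetaP n f :=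
  iInf_le_of_le ⟨(n, f), hf, hx⟩ le_rfl

lemma le_theta {x : E} {ε : ℝ} {t : ℝ≥0∞}
    (h : ∀ n f, (∀ k < n, f k ∈ X k) → ‖∑ j ∈ range n, f j - x‖ ≤ ε → t ≤ ThetaP n f) :
    t ≤ Theta X x ε :=
  le_iInf fun p => h _ _ p.2.1 p.2.2

lemma theta_eq_zero_of_norm_le {x : E} {ε : ℝ} (h : ‖x‖ ≤ ε) : Theta X x ε = 0 :=
  le_antisymm (theta_le_thetaP X (n := 0) (f := 0) (by simp) (by simpa using h)) (by simp)

lemma theta_le_of_norm_sub_le {x y : E} {ε δ : ℝ} (h : ‖x - y‖ ≤ δ) :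
    Theta X x (ε + δ) ≤ Theta X y ε :=
  le_theta X fun n f hf hy => theta_le_thetaP X hf <| by
    have := norm_sub_le_norm_sub_add_norm_sub (∑ j ∈ range n, f j) y x
    rw [norm_sub_rev y x] at this
    linarith

lemma ofReal_norm_sub_le_theta (x : E) (ε : ℝ) : ENNReal.ofReal (‖x‖ - ε) ≤ Theta X x ε :=
  le_theta X fun n f _ hx => by
    refine le_trans (ENNReal.ofReal_le_ofReal ?_) (ofReal_norm_sum_le_thetaP n f)
    have := norm_sub_norm_le x (∑ j ∈ range n, f j)
    rw [norm_sub_rev] at this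
    linarith

lemma theta_add_le (x y : E) (ε δ : ℝ) :
    Theta X (x + y) (ε + δ) ≤ Theta X x ε + Theta X y δ :=
  ENNReal.le_iInf_add_iInf fun ⟨⟨n, f⟩, hf, hx⟩ ⟨⟨m, g⟩, hg, hy⟩ => by
    dsimp only at hf hx hg hy ⊢
    let f' : ℕ → E := fun j => if j < n then f j else 0
    let g' : ℕ → E := fun j => if j < m then g j else 0
    have hmem : ∀ k < max n m, (f' + g') k ∈ X k := fun k _ =>
      add_mem (ite_lt_mem X hf k) (ite_lt_mem X hg k)
    have hsum : ∑ j ∈ range (max n m), (f' + g') j - (x + y)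
        = (∑ j ∈ range n, f j - x) + (∑ j ∈ range m, g j - y) := by
      rw [Pi.add_def, sum_add_distrib, sum_range_ite_lt, sum_range_ite_lt,
        min_eq_right (le_max_left n m), min_eq_right (le_max_right n m)]
      abel
    calc Theta X (x + y) (ε + δ) ≤ ThetaP (max n m) (f' + g') :=
          theta_le_thetaP X hmem (by rw [hsum]; exact (norm_add_le _ _).trans (add_le_add hx hy))
      _ ≤ ThetaP (max n m) f' + ThetaP (max n m) g' := thetaP_add_le _ _ _
      _ ≤ ThetaP n f + ThetaP m g := add_le_add (thetaP_ite_lt_le _ _ _) (thetaP_ite_lt_le _ _ _)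

lemma theta_smul_le {a : ℝ} (ha : a ≠ 0) (x : E) (ε : ℝ) :
    Theta X (a • x) (|a| * ε) ≤ ENNReal.ofReal |a| * Theta X x ε := by
  conv_rhs => rw [Theta, ENNReal.mul_iInf_of_ne (by simpa using ha) ENNReal.ofReal_ne_top]
  refine le_iInf fun ⟨⟨n, f⟩, hf, hx⟩ => le_trans ?_ (thetaP_smul_le a n f)
  refine theta_le_thetaP X (fun k hk => Submodule.smul_mem _ _ (hf k hk)) ?_
  simp only [Pi.smul_apply, ← smul_sum, ← smul_sub, norm_smul, Real.norm_eq_abs]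
  exact mul_le_mul_of_nonneg_left hx (abs_nonneg a)

lemma theta_le_thetaStar (x : E) {ε : ℝ} (hε : 0 < ε) : Theta X x ε ≤ ThetaStar X x :=
  le_iSup (fun ε : {ε : ℝ // 0 < ε} => Theta X x ε) ⟨ε, hε⟩

lemma thetaStar_le {x : E} {t : ℝ≥0∞} (h : ∀ ε > 0, Theta X x ε ≤ t) : ThetaStar X x ≤ t :=
  iSup_le fun ε => h ε ε.2

lemma thetaStar_zero : ThetaStar X (0 : E) = 0 :=
  le_antisymm (thetaStar_le X fun _ hε => (theta_eq_zero_of_norm_le X (by simpa using hε.le)).le)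
    zero_le

lemma ofReal_norm_le_thetaStar (x : E) : ENNReal.ofReal ‖x‖ ≤ ThetaStar X x := by
  refine ENNReal.le_of_forall_pos_le_add fun ε hε _ => ?_
  calc ENNReal.ofReal ‖x‖ = ENNReal.ofReal ((‖x‖ - ε) + ε) := by rw [sub_add_cancel]
    _ ≤ ENNReal.ofReal (‖x‖ - ε) + ENNReal.ofReal ε := ENNReal.ofReal_add_le
    _ ≤ ThetaStar X x + ε := by
        rw [ENNReal.ofReal_coe_nnreal]
        gcongr
        exact (ofReal_norm_sub_le_theta X x ε).trans (theta_le_thetaStar X x hε)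

lemma thetaStar_add_le (x y : E) : ThetaStar X (x + y) ≤ ThetaStar X x + ThetaStar X y :=
  thetaStar_le X fun ε hε => by
    rw [← add_halves ε]
    exact (theta_add_le X x y _ _).trans (add_le_add (theta_le_thetaStar X x (half_pos hε))
      (theta_le_thetaStar X y (half_pos hε)))

lemma thetaStar_smul_le {a : ℝ} (ha : a ≠ 0) (x : E) :
    ThetaStar X (a • x) ≤ ENNReal.ofReal |a| * ThetaStar X x :=
  thetaStar_le X fun ε hε => by
    have ha' : 0 < |a| := abs_pos.2 ha
    rw [← mul_div_cancel₀ ε ha'.ne']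
    exact (theta_smul_le X ha x _).trans
      (mul_le_mul_right (theta_le_thetaStar X x (div_pos hε ha')) _)

lemma thetaStar_smul (a : ℝ) (x : E) :
    ThetaStar X (a • x) = ENNReal.ofReal |a| * ThetaStar X x := by
  rcases eq_or_ne a 0 with rfl | ha
  · simp [thetaStar_zero]
  refine le_antisymm (thetaStar_smul_le X ha x) ?_
  calc ENNReal.ofReal |a| * ThetaStar X x
      = ENNReal.ofReal |a| * ThetaStar X (a⁻¹ • a • x) := by rw [inv_smul_smul₀ ha]
    _ ≤ ENNReal.ofReal |a| * (ENNReal.ofReal |a⁻¹| * ThetaStar X (a • x)) :=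
        mul_le_mul_right (thetaStar_smul_le X (inv_ne_zero ha) _) _
    _ = ThetaStar X (a • x) := by
        rw [← mul_assoc, ← ENNReal.ofReal_mul (abs_nonneg a), ← abs_mul, mul_inv_cancel₀ ha]
        simp

lemma isClosed_setOf_thetaStar_le (t : ℝ≥0∞) : IsClosed {x : E | ThetaStar X x ≤ t} := by
  refine isClosed_of_closure_subset fun x hx => thetaStar_le X fun ε hε => ?_
  obtain ⟨y, hy, hxy⟩ := Metric.mem_closure_iff.1 hx (ε / 2) (half_pos hε)
  calc Theta X x ε = Theta X x (ε / 2 + ε / 2) := by rw [add_halves]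
    _ ≤ Theta X y (ε / 2) := theta_le_of_norm_sub_le X (by rw [← dist_eq_norm]; exact hxy.le)
    _ ≤ t := (theta_le_thetaStar X y (half_pos hε)).trans hy

noncomputable def thetaSeminorm (hfin : ∀ x : E, ThetaStar X x ≠ ⊤) : Seminorm ℝ E :=
  Seminorm.of (fun x => (ThetaStar X x).toReal)
    (fun x y => by
      rw [← ENNReal.toReal_add (hfin x) (hfin y)]
      exact ENNReal.toReal_mono (ENNReal.add_ne_top.2 ⟨hfin x, hfin y⟩) (thetaStar_add_le X x y))
    (fun a x => by
      rw [thetaStar_smul, ENNReal.toReal_mul, ENNReal.toReal_ofReal (abs_nonneg a),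
        Real.norm_eq_abs])

lemma lowerSemicontinuous_thetaSeminorm (hfin : ∀ x : E, ThetaStar X x ≠ ⊤) :
    LowerSemicontinuous (thetaSeminorm X hfin) := by
  refine lowerSemicontinuous_iff_isClosed_preimage.2 fun t => ?_
  rcases lt_or_ge t 0 with ht | ht
  · convert isClosed_empty
    ext x
    simpa using ht.trans_le (apply_nonneg _ x)
  · convert isClosed_setOf_thetaStar_le X (ENNReal.ofReal t) using 1
    ext x
    exact (ENNReal.le_ofReal_iff_toReal_le (hfin _) ht).symm

lemma exists_thetaStar_le_mul_norm [CompleteSpace E] (hfin : ∀ x : E, ThetaStar X x ≠ ⊤) :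
    ∃ C : ℝ, 0 < C ∧ ∀ x : E, ThetaStar X x ≤ ENNReal.ofReal (C * ‖x‖) := by
  obtain ⟨C, hC, hle⟩ := (thetaSeminorm X hfin).bound_of_continuous_normedSpace
    ((thetaSeminorm X hfin).continuous_of_lowerSemicontinuous
      (lowerSemicontinuous_thetaSeminorm X hfin))
  exact ⟨C, hC, fun x => (ENNReal.le_ofReal_iff_toReal_le (hfin x) (by positivity)).2 (hle x)⟩

theorem thetaStar_is_equivalent_norm_general [CompleteSpace E] (X : ℕ → Submodule ℝ E)
    (hfin : ∀ x : E, ThetaStar X x ≠ ⊤) :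
    (∀ x y : E, ThetaStar X (x + y) ≤ ThetaStar X x + ThetaStar X y) ∧
    (∀ (a : ℝ) (x : E), ThetaStar X (a • x) = ENNReal.ofReal |a| * ThetaStar X x) ∧
    (∀ x : E, ThetaStar X x = 0 ↔ x = 0) ∧
    (∃ c C : ℝ, 0 < c ∧ 0 < C ∧ ∀ x : E,
      ENNReal.ofReal (c * ‖x‖) ≤ ThetaStar X x ∧
      ThetaStar X x ≤ ENNReal.ofReal (C * ‖x‖)) := by
  obtain ⟨C, hC, hupper⟩ := exists_thetaStar_le_mul_norm X hfin
  have hlower : ∀ x : E, ENNReal.ofReal (1 * ‖x‖) ≤ ThetaStar X x := fun x => by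
    simpa using ofReal_norm_le_thetaStar X x
  refine ⟨thetaStar_add_le X, thetaStar_smul X, fun x => ⟨fun h => ?_, ?_⟩,
    1, C, one_pos, hC, fun x => ⟨hlower x, hupper x⟩⟩
  · simpa [h] using hlower x
  · rintro rfl
    exact thetaStar_zero X

/-- If `Θ*_S(x) < ∞` for every `x`, then `Θ*_S` is a norm on `X` equivalent to the
original norm: it is subadditive, absolutely homogeneous, vanishes exactly at `0`, and is
two-sidedly comparable to `‖·‖`. -/
theorem thetaStar_is_equivalent_norm [CompleteSpace E] (X : ℕ → Submodule ℝ E)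
    (hX : ∀ k, IsClosed (X k : Set E)) (hfin : ∀ x : E, ThetaStar X x ≠ ⊤) :
    (∀ x y : E, ThetaStar X (x + y) ≤ ThetaStar X x + ThetaStar X y) ∧
    (∀ (a : ℝ) (x : E), ThetaStar X (a • x) = ENNReal.ofReal |a| * ThetaStar X x) ∧
    (∀ x : E, ThetaStar X x = 0 ↔ x = 0) ∧
    (∃ c C : ℝ, 0 < c ∧ 0 < C ∧ ∀ x : E,
      ENNReal.ofReal (c * ‖x‖) ≤ ThetaStar X x ∧
      ThetaStar X x ≤ ENNReal.ofReal (C * ‖x‖)) :=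
  thetaStar_is_equivalent_norm_general X hfin
end

section
/- Let X be a Banach space and S = (X_k)_{k≥1} a system of closed subspaces. If there exist α ∈ (0,1) and B > 0 such that Θ_S(x, α‖x‖) ≤ B‖x‖ for all x ∈ X, then Θ*_S(x) ≤ (B/(1−α))‖x‖ for all x ∈ X. -/
open Filter Finset
open scoped ENNReal

variable {E : Type*} [NormedAddCommGroup E] [NormedSpace ℝ E]

/-- Witness extraction: from `Θ(x, α‖x‖) ≤ B‖x‖` get an actual tuple whose partial
sums are all bounded by `B‖x‖ + δ`. -/
lemma exists_witness_aux (X : ℕ → Submodule ℝ E) (α B : ℝ)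
    (h : ∀ x : E, Theta X x (α * ‖x‖) ≤ ENNReal.ofReal (B * ‖x‖))
    (hB : 0 < B) (x : E) {δ : ℝ} (hδ : 0 < δ) :
    ∃ n : ℕ, ∃ f : ℕ → E, (∀ k < n, f k ∈ X k) ∧
      ‖(∑ j ∈ Finset.range n, f j) - x‖ ≤ α * ‖x‖ ∧
      ∀ k < n, ‖∑ j ∈ Finset.range (k + 1), f j‖ ≤ B * ‖x‖ + δ := by
  have hpos : 0 < B * ‖x‖ + δ := by positivity
  have h1 : Theta X x (α * ‖x‖) < ENNReal.ofReal (B * ‖x‖ + δ) := by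
    refine lt_of_le_of_lt (h x) ?_
    exact (ENNReal.ofReal_lt_ofReal_iff hpos).2 (by nlinarith [norm_nonneg x])
  rw [Theta, iInf_lt_iff] at h1
  obtain ⟨⟨⟨n, f⟩, hmem, happ⟩, hlt⟩ := h1
  refine ⟨n, f, hmem, happ, fun k hk => ?_⟩
  have h2 : ENNReal.ofReal ‖∑ j ∈ Finset.range (k + 1), f j‖ ≤ ThetaP n f :=
    Finset.le_sup (f := fun k => ENNReal.ofReal ‖∑ j ∈ Finset.range (k + 1), f j‖)
      (Finset.mem_range.2 hk)
  have h3 := lt_of_le_of_lt h2 hlt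
  exact le_of_lt ((ENNReal.ofReal_lt_ofReal_iff hpos).1 h3)

/-- If `Θ_S(x, α‖x‖) ≤ B‖x‖` for all `x`, with `α ∈ (0,1)` and `B > 0`, then
`Θ*_S(x) ≤ (B/(1−α))‖x‖` for all `x`. -/
theorem thetaStar_bound_of_theta_bound (X : ℕ → Submodule ℝ E)
    (hX : ∀ k, IsClosed (X k : Set E)) (α B : ℝ) (hα : α ∈ Set.Ioo (0:ℝ) 1) (hB : 0 < B)
    (h : ∀ x : E, Theta X x (α * ‖x‖) ≤ ENNReal.ofReal (B * ‖x‖)) :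
    ∀ x : E, ThetaStar X x ≤ ENNReal.ofReal (B / (1 - α) * ‖x‖) := by
  obtain ⟨hα0, hα1⟩ := hα
  have h1α : 0 < 1 - α := by linarith
  intro x
  rw [ThetaStar]
  apply iSup_le
  rintro ⟨ε, hε⟩
  -- pick m with α ^ m * ‖x‖ < ε
  obtain ⟨m, hm⟩ : ∃ m : ℕ, α ^ m < ε / (‖x‖ + 1) :=
    exists_pow_lt_of_lt_one (by positivity) hα1
  have hmε : α ^ m * ‖x‖ < ε := by
    have h1 : α ^ m * ‖x‖ ≤ α ^ m * (‖x‖ + 1) := by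
      have : (0:ℝ) ≤ α ^ m := by positivity
      nlinarith
    have h2 : α ^ m * (‖x‖ + 1) < ε := by
      have := (lt_div_iff₀ (show (0:ℝ) < ‖x‖ + 1 by positivity)).1 hm
      linarith
    linarith
  refine ENNReal.le_of_forall_pos_le_add fun η hη _ => ?_
  set δ : ℝ := (η : ℝ) / (m + 1) with hδdef
  have hδ : 0 < δ := by positivity
  -- the chosen tuples
  choose n f hmem happ hbound using fun y : E => exists_witness_aux X α B h hB y hδ
  -- the sequence of remainders
  set xs : ℕ → E := fun i =>
    Nat.rec x (fun _ xi => xi - ∑ j ∈ Finset.range (n xi), f xi j) i with hxs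
  have hxs0 : xs 0 = x := rfl
  have hxsS : ∀ i, xs (i + 1) = xs i - ∑ j ∈ Finset.range (n (xs i)), f (xs i) j :=
    fun i => rfl
  have hxsnorm : ∀ i, ‖xs i‖ ≤ α ^ i * ‖x‖ := by
    intro i
    induction i with
    | zero => simp [hxs0]
    | succ i ih =>
      have h1 : ‖xs (i + 1)‖ ≤ α * ‖xs i‖ := by
        rw [hxsS i, ← norm_neg]
        simpa [neg_sub] using happ (xs i)
      calc ‖xs (i + 1)‖ ≤ α * ‖xs i‖ := h1
        _ ≤ α * (α ^ i * ‖x‖) := by nlinarith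
        _ = α ^ (i + 1) * ‖x‖ := by ring
  -- the combined tuple
  set N : ℕ := (Finset.range m).sup fun i => n (xs i) with hN
  set g : ℕ → E := fun k =>
    ∑ i ∈ Finset.range m, if k < n (xs i) then f (xs i) k else 0 with hg
  -- padded partial sums
  have hpad : ∀ i K, ∑ j ∈ Finset.range K, (if j < n (xs i) then f (xs i) j else 0)
      = ∑ j ∈ Finset.range (min K (n (xs i))), f (xs i) j := by
    intro i K
    have hsub : Finset.range (min K (n (xs i))) ⊆ Finset.range K :=
      Finset.range_subset_range.2 (min_le_left _ _)
    have h0 : ∀ j ∈ Finset.range K, j ∉ Finset.range (min K (n (xs i))) →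
        (if j < n (xs i) then f (xs i) j else 0) = 0 := by
      intro j hj hj'
      rw [Finset.mem_range] at hj hj'
      push_neg at hj'
      have hnot : ¬ j < n (xs i) := fun hc => absurd (lt_min hj hc) (not_lt.2 hj')
      exact if_neg hnot
    rw [← Finset.sum_subset hsub h0]
    exact Finset.sum_congr rfl fun j hj => if_pos
      (lt_of_lt_of_le (Finset.mem_range.1 hj) (min_le_right _ _))
  have hpartial : ∀ i, ∀ t ≤ n (xs i),
      ‖∑ j ∈ Finset.range t, f (xs i) j‖ ≤ B * ‖xs i‖ + δ := by
    intro i t ht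
    rcases Nat.eq_zero_or_pos t with rfl | ht0
    · simp; positivity
    · obtain ⟨s, rfl⟩ := Nat.exists_eq_add_of_lt ht0
      simpa using hbound (xs i) s (by omega)
  -- membership
  have hgmem : ∀ k < N, g k ∈ X k := by
    intro k _
    refine Submodule.sum_mem _ fun i _ => ?_
    by_cases hk : k < n (xs i)
    · rw [if_pos hk]; exact hmem (xs i) k hk
    · rw [if_neg hk]; exact Submodule.zero_mem _
  -- total sum
  have hsum : ∑ j ∈ Finset.range N, g j = x - xs m := by
    rw [hg]
    rw [Finset.sum_comm]
    have : ∀ i ∈ Finset.range m,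
        (∑ j ∈ Finset.range N, if j < n (xs i) then f (xs i) j else 0)
        = xs i - xs (i + 1) := by
      intro i hi
      have hle : n (xs i) ≤ N := Finset.le_sup (f := fun i => n (xs i)) hi
      rw [hpad i N, min_eq_right hle, hxsS i]
      abel
    rw [Finset.sum_congr rfl this, Finset.sum_range_sub' xs m, hxs0]
  -- approximation property
  have happrox : ‖(∑ j ∈ Finset.range N, g j) - x‖ ≤ ε := by
    rw [hsum]
    have : x - xs m - x = -(xs m) := by abel
    rw [this, norm_neg]
    exact le_of_lt (lt_of_le_of_lt (hxsnorm m) hmε)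
  -- bound on ThetaP
  have hC : ∀ k, ‖∑ j ∈ Finset.range (k + 1), g j‖
      ≤ ∑ i ∈ Finset.range m, (B * ‖xs i‖ + δ) := by
    intro k
    rw [hg, Finset.sum_comm]
    refine le_trans (norm_sum_le _ _) (Finset.sum_le_sum fun i _ => ?_)
    rw [hpad i (k + 1)]
    exact hpartial i _ (min_le_right _ _)
  have hCsum : ∑ i ∈ Finset.range m, (B * ‖xs i‖ + δ)
      ≤ B / (1 - α) * ‖x‖ + m * δ := by
    rw [Finset.sum_add_distrib, Finset.sum_const, Finset.card_range, nsmul_eq_mul]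
    have h1 : ∑ i ∈ Finset.range m, B * ‖xs i‖
        ≤ B * ‖x‖ * ∑ i ∈ Finset.range m, α ^ i := by
      rw [Finset.mul_sum]
      refine Finset.sum_le_sum fun i _ => ?_
      have := hxsnorm i
      have hb := hB.le
      nlinarith
    have h2 : ∑ i ∈ Finset.range m, α ^ i ≤ 1 / (1 - α) := by
      rw [geom_sum_eq (ne_of_lt hα1),
        show (α ^ m - 1) / (α - 1) = (1 - α ^ m) / (1 - α) by
          rw [← neg_div_neg_eq]; ring_nf]
      have hpow : (0:ℝ) ≤ α ^ m := by positivity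
      gcongr
      linarith
    have h3 : B * ‖x‖ * ∑ i ∈ Finset.range m, α ^ i ≤ B / (1 - α) * ‖x‖ := by
      have hbx : 0 ≤ B * ‖x‖ := by positivity
      calc B * ‖x‖ * ∑ i ∈ Finset.range m, α ^ i
          ≤ B * ‖x‖ * (1 / (1 - α)) := by nlinarith
        _ = B / (1 - α) * ‖x‖ := by ring
    linarith
  have hTP : ThetaP N g ≤ ENNReal.ofReal (B / (1 - α) * ‖x‖ + m * δ) := by
    rw [ThetaP]
    refine Finset.sup_le fun k _ => ENNReal.ofReal_le_ofReal ?_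
    exact le_trans (hC k) hCsum
  -- put it together
  have hstep : Theta X x ε ≤ ThetaP N g :=
    iInf_le (fun p : {p : ℕ × (ℕ → E) // (∀ k < p.1, p.2 k ∈ X k) ∧
      ‖(∑ j ∈ Finset.range p.1, p.2 j) - x‖ ≤ ε} => ThetaP p.1.1 p.1.2)
      ⟨⟨N, g⟩, hgmem, happrox⟩
  refine le_trans hstep (le_trans hTP ?_)
  refine le_trans (ENNReal.ofReal_add_le) ?_
  gcongr
  have hmδ : (m : ℝ) * δ ≤ (η : ℝ) := by
    rw [hδdef, mul_div_assoc', div_le_iff₀ (show (0:ℝ) < (m:ℝ) + 1 by positivity)]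
    have hη' : (0:ℝ) ≤ (η : ℝ) := η.2
    nlinarith
  calc ENNReal.ofReal ((m : ℝ) * δ) ≤ ENNReal.ofReal (η : ℝ) :=
        ENNReal.ofReal_le_ofReal hmδ
    _ = (η : ℝ≥0∞) := ENNReal.ofReal_coe_nnreal
end

section
/- Let X be a Banach space and S = (X_k)_{k≥1} a representing system of subspaces with constant Θ̄_S = sup_{‖x‖≤1} Θ*_S(x) < ∞. If subspaces (X̃_k)_{k≥1} satisfy Σ_{k=1}^∞ ρ_0(X_k, X̃_k) < 1/(2Θ̄_S), then (X̃_k)_{k≥1} is also a representing system of subspaces in X. -/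
open Filter Finset
open scoped ENNReal

variable {E : Type*} [NormedAddCommGroup E] [NormedSpace ℝ E]

/-- `Θ̄_S = sup_{‖x‖ ≤ 1} Θ*_S(x)`. -/
noncomputable def ThetaBar (X : ℕ → Submodule ℝ E) : ℝ≥0∞ :=
  ⨆ x : {x : E // ‖x‖ ≤ 1}, ThetaStar X x

/-- `ρ_0(Y, Z) = sup {dist(y, Z) : y ∈ Y, ‖y‖ = 1}`. -/
noncomputable def rho0 (Y Z : Submodule ℝ E) : ℝ :=
  sSup {d : ℝ | ∃ y ∈ Y, ‖y‖ = 1 ∧ d = Metric.infDist y (Z : Set E)}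

/-!
Since `Θ̄_S < ∞`, every `x` lies within `δ` of a finite sum `∑ x_k` with `x_k ∈ X_k` whose partial
sums are at most `Θ̄_S ‖x‖ + δ`, so `‖x_k‖ ≤ 2 (Θ̄_S ‖x‖ + δ)`. Replacing each `x_k` by a nearby
point of `X̃_k` moves every partial sum by at most `2 Θ̄_S ρ ‖x‖ + O(δ)`, where
`ρ = ∑ ρ_0(X_k, X̃_k)`. Thus every `x` is approximated from the `X̃_k` up to `q ‖x‖` with
`q < 1`, by a sum whose partial sums are `O(‖x‖)`. Applying this to the successive residuals,
whose norms decay like `q ^ i`, and adding up the resulting blocks termwise (dominated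
convergence) gives a convergent expansion of `x` itself.
-/

open Topology Metric Pointwise

lemma sum_range_eq_sum_range_min {M : Type*} [AddCommMonoid M] {g : ℕ → M} {n : ℕ}
    (hg : ∀ k, n ≤ k → g k = 0) (m : ℕ) :
    ∑ k ∈ range m, g k = ∑ k ∈ range (min m n), g k :=
  (sum_subset (range_subset_range.mpr (min_le_left m n)) fun k hkm hkn => hg k <| by
    simp only [mem_range, lt_min_iff, not_and, not_lt] at hkm hkn; exact hkn hkm).symm

lemma norm_le_two_mul_of_norm_sum_range_le {F : Type*} [SeminormedAddCommGroup F] {f : ℕ → F}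
    {B : ℝ} {k : ℕ} (hk1 : ‖∑ j ∈ range (k + 1), f j‖ ≤ B) (hk : ‖∑ j ∈ range k, f j‖ ≤ B) :
    ‖f k‖ ≤ 2 * B := by
  rw [← sum_range_succ_sub_sum f]
  linarith [norm_sub_le (∑ j ∈ range (k + 1), f j) (∑ j ∈ range k, f j)]

lemma Submodule.smul_coe_eq_self {K M : Type*} [DivisionRing K] [AddCommGroup M] [Module K M]
    (Z : Submodule K M) {c : K} (hc : c ≠ 0) : c • (Z : Set M) = Z :=
  Set.ext fun _ =>
    (Set.mem_smul_set_iff_inv_smul_mem₀ hc _ _).trans (Z.smul_mem_iff (inv_ne_zero hc))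

lemma ENNReal.toReal_mul_lt_one_of_ofReal_lt_inv {a : ℝ≥0∞} (ha : a ≠ ⊤) {t : ℝ} (ht : 0 ≤ t)
    (h : ENNReal.ofReal t < a⁻¹) : a.toReal * t < 1 := by
  rw [← one_div, ENNReal.lt_div_iff_mul_lt (Or.inr ENNReal.ofReal_ne_top) (Or.inl ha),
    ← ENNReal.ofReal_toReal ha, ← ENNReal.ofReal_mul ht, ENNReal.ofReal_lt_one] at h
  linarith

lemma rho0_bddAbove (Y Z : Submodule ℝ E) :
    BddAbove {d : ℝ | ∃ y ∈ Y, ‖y‖ = 1 ∧ d = infDist y (Z : Set E)} := by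
  refine ⟨1, ?_⟩
  rintro d ⟨y, -, hy, rfl⟩
  simpa [hy] using infDist_le_dist_of_mem (x := y) Z.zero_mem

lemma rho0_nonneg (Y Z : Submodule ℝ E) : 0 ≤ rho0 Y Z :=
  Real.sSup_nonneg fun _ ⟨_, _, _, hd⟩ => hd ▸ infDist_nonneg

lemma infDist_le_rho0_mul_norm {Y Z : Submodule ℝ E} {y : E} (hy : y ∈ Y) :
    infDist y (Z : Set E) ≤ rho0 Y Z * ‖y‖ := by
  rcases eq_or_ne y 0 with rfl | hy0
  · simp [infDist_zero_of_mem Z.zero_mem]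
  have hc : ‖y‖ ≠ 0 := norm_ne_zero_iff.mpr hy0
  set u := ‖y‖⁻¹ • y
  have hu : ‖u‖ = 1 := by simp [u, norm_smul, hc]
  have hyu : ‖y‖ • u = y := by simp [u, smul_smul, hc]
  calc infDist y (Z : Set E) = infDist (‖y‖ • u) (‖y‖ • (Z : Set E)) := by
        rw [hyu, Z.smul_coe_eq_self hc]
    _ = ‖y‖ * infDist u (Z : Set E) := by rw [infDist_smul₀ hc, norm_norm]
    _ ≤ ‖y‖ * rho0 Y Z :=
        mul_le_mul_of_nonneg_left (le_csSup (rho0_bddAbove Y Z) ⟨u, Y.smul_mem _ hy, hu, rfl⟩)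
          (norm_nonneg y)
    _ = rho0 Y Z * ‖y‖ := mul_comm _ _

lemma exists_mem_norm_sub_lt_rho0 {Y Z : Submodule ℝ E} {y : E} (hy : y ∈ Y) {δ : ℝ}
    (hδ : 0 < δ) : ∃ z ∈ Z, ‖y - z‖ < rho0 Y Z * ‖y‖ + δ := by
  obtain ⟨z, hz, h⟩ := (infDist_lt_iff ⟨0, Z.zero_mem⟩).mp
    ((infDist_le_rho0_mul_norm hy).trans_lt (lt_add_of_pos_right _ hδ))
  exact ⟨z, hz, by rwa [dist_eq_norm] at h⟩

lemma norm_sum_range_le_of_ThetaP_le {F : Type*} [NormedAddCommGroup F] {n : ℕ} {f : ℕ → F}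
    {B : ℝ} (hB : 0 ≤ B) (h : ThetaP n f ≤ ENNReal.ofReal B) : ∀ m ≤ n, ‖∑ j ∈ range m, f j‖ ≤ B
  | 0, _ => by simpa using hB
  | m + 1, hm => (ENNReal.ofReal_le_ofReal_iff hB).mp <|
      (le_sup (f := fun k => ENNReal.ofReal ‖∑ j ∈ range (k + 1), f j‖) (mem_range.mpr hm)).trans h

section ThetaBar

variable {X : ℕ → Submodule ℝ E}

lemma Theta_le_ThetaBar {u : E} (hu : ‖u‖ ≤ 1) {ε : ℝ} (hε : 0 < ε) :
    Theta X u ε ≤ ThetaBar X :=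
  (le_iSup (fun e : {ε : ℝ // 0 < ε} => Theta X u e) ⟨ε, hε⟩).trans
    (le_iSup (fun z : {x : E // ‖x‖ ≤ 1} => ThetaStar X z) ⟨u, hu⟩)

lemma exists_approx_of_norm_le_one (hfin : ThetaBar X ≠ ⊤) {u : E} (hu : ‖u‖ ≤ 1) {ε : ℝ}
    (hε : 0 < ε) : ∃ n, ∃ f : ℕ → E, (∀ k < n, f k ∈ X k) ∧
      ‖∑ j ∈ range n, f j - u‖ ≤ ε ∧ ∀ m ≤ n, ‖∑ j ∈ range m, f j‖ ≤ (ThetaBar X).toReal + ε := by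
  have hlt : Theta X u ε < ENNReal.ofReal ((ThetaBar X).toReal + ε) := by
    refine (Theta_le_ThetaBar hu hε).trans_lt ?_
    rw [ENNReal.ofReal_add ENNReal.toReal_nonneg hε.le, ENNReal.ofReal_toReal hfin]
    exact ENNReal.lt_add_right hfin (by simpa using hε)
  obtain ⟨⟨⟨n, f⟩, hfX, hfu⟩, hθ⟩ := iInf_lt_iff.mp hlt
  exact ⟨n, f, hfX, hfu, norm_sum_range_le_of_ThetaP_le (by positivity) hθ.le⟩

lemma exists_approx_of_ThetaBar_ne_top (hfin : ThetaBar X ≠ ⊤) (x : E) {δ : ℝ} (hδ : 0 < δ) :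
    ∃ n, ∃ f : ℕ → E, (∀ k < n, f k ∈ X k) ∧ ‖∑ j ∈ range n, f j - x‖ ≤ δ ∧
      ∀ m ≤ n, ‖∑ j ∈ range m, f j‖ ≤ (ThetaBar X).toReal * ‖x‖ + δ := by
  rcases eq_or_ne x 0 with rfl | hx0
  · exact ⟨0, 0, by simp, by simpa using hδ.le, by simpa using hδ.le⟩
  have hx : 0 < ‖x‖ := norm_pos_iff.mpr hx0
  set c := ‖x‖
  set u := c⁻¹ • x
  have hu : ‖u‖ = 1 := by simp [u, c, norm_smul, hx.ne']
  have hcu : c • u = x := by simp [u, smul_smul, hx.ne']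
  obtain ⟨n, f, hfX, hfu, hfT⟩ := exists_approx_of_norm_le_one hfin hu.le (div_pos hδ hx)
  refine ⟨n, fun k => c • f k, fun k hk => (X k).smul_mem c (hfX k hk), ?_, fun m hm => ?_⟩
  · rw [← smul_sum, ← hcu, ← smul_sub, norm_smul, norm_norm]
    calc c * ‖∑ j ∈ range n, f j - u‖ ≤ c * (δ / c) := mul_le_mul_of_nonneg_left hfu hx.le
      _ = δ := mul_div_cancel₀ δ hx.ne'
  · rw [← smul_sum, norm_smul, norm_norm]
    calc c * ‖∑ j ∈ range m, f j‖ ≤ c * ((ThetaBar X).toReal + δ / c) :=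
          mul_le_mul_of_nonneg_left (hfT m hm) hx.le
      _ = (ThetaBar X).toReal * c + δ := by field_simp

end ThetaBar

section Perturbation

variable {X Xt : ℕ → Submodule ℝ E}

lemma exists_perturbation (hsum : Summable fun k => rho0 (X k) (Xt k)) {n : ℕ} {f : ℕ → E}
    (hfX : ∀ k < n, f k ∈ X k) {B : ℝ} (hB : 0 ≤ B) (hfB : ∀ k < n, ‖f k‖ ≤ B) {δ : ℝ}
    (hδ : 0 < δ) : ∃ g : ℕ → E, (∀ k, g k ∈ Xt k) ∧ (∀ k, n ≤ k → g k = 0) ∧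
      ∀ m ≤ n, ‖∑ j ∈ range m, g j - ∑ j ∈ range m, f j‖ ≤
        B * ∑' k, rho0 (X k) (Xt k) + δ := by
  have hδn : 0 < δ / (n + 1) := by positivity
  choose! z hzXt hfz using fun k (hk : k < n) =>
    exists_mem_norm_sub_lt_rho0 (Z := Xt k) (hfX k hk) hδn
  refine ⟨fun k => if k < n then z k else 0, fun k => ?_, fun k hk => if_neg hk.not_gt,
    fun m hm => ?_⟩
  · dsimp only
    split_ifs with hk
    exacts [hzXt k hk, zero_mem _]
  have hterm : ∀ j ∈ range m, ‖f j - (if j < n then z j else 0)‖ ≤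
      B * rho0 (X j) (Xt j) + δ / (n + 1) := fun j hj => by
    have hjn : j < n := (mem_range.mp hj).trans_le hm
    rw [if_pos hjn]
    nlinarith [hfz j hjn, hfB j hjn, rho0_nonneg (X j) (Xt j)]
  calc ‖∑ j ∈ range m, (if j < n then z j else 0) - ∑ j ∈ range m, f j‖
      = ‖∑ j ∈ range m, (f j - if j < n then z j else 0)‖ := by
        rw [← norm_neg, neg_sub, sum_sub_distrib]
    _ ≤ ∑ j ∈ range m, (B * rho0 (X j) (Xt j) + δ / (n + 1)) := norm_sum_le_of_le _ hterm
    _ = B * ∑ j ∈ range m, rho0 (X j) (Xt j) + m * (δ / (n + 1)) := by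
        rw [sum_add_distrib, mul_sum, sum_const, card_range, nsmul_eq_mul]
    _ ≤ B * ∑' k, rho0 (X k) (Xt k) + δ := by
        gcongr
        · exact hsum.sum_le_tsum _ fun k _ => rho0_nonneg _ _
        · rw [mul_div_assoc', div_le_iff₀ (by positivity)]
          nlinarith [(Nat.cast_le (α := ℝ)).mpr hm]

lemma exists_approx_of_rho0 (hfin : ThetaBar X ≠ ⊤) (hsum : Summable fun k => rho0 (X k) (Xt k))
    (x : E) {δ : ℝ} (hδ : 0 < δ) : ∃ g : ℕ → E, ∃ s, (∀ k, g k ∈ Xt k) ∧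
      Tendsto (fun m => ∑ k ∈ range m, g k) atTop (𝓝 s) ∧
      ‖s - x‖ ≤ 2 * (ThetaBar X).toReal * (∑' k, rho0 (X k) (Xt k)) * ‖x‖ + δ ∧
      ∀ m, ‖∑ k ∈ range m, g k‖ ≤
        (ThetaBar X).toReal * (1 + 2 * ∑' k, rho0 (X k) (Xt k)) * ‖x‖ + δ := by
  set T := (ThetaBar X).toReal
  set ρ := ∑' k, rho0 (X k) (Xt k)
  have hT : 0 ≤ T := ENNReal.toReal_nonneg
  have hρ : 0 ≤ ρ := tsum_nonneg fun k => rho0_nonneg _ _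
  set η := δ / (2 * ρ + 2)
  have hη : 0 < η := by positivity
  have hηδ : η * (2 * ρ + 2) = δ := div_mul_cancel₀ δ (by positivity)
  obtain ⟨n, f, hfX, hfx, hfM⟩ := exists_approx_of_ThetaBar_ne_top hfin x hη
  set M := T * ‖x‖ + η
  obtain ⟨g, hgXt, hg0, hgf⟩ := exists_perturbation hsum hfX (B := 2 * M) (by positivity)
    (fun k hk => norm_le_two_mul_of_norm_sum_range_le (hfM _ hk) (hfM _ hk.le)) hη
  refine ⟨g, ∑ k ∈ range n, g k, hgXt,
    tendsto_atTop_of_eventually_const (i₀ := n) fun m hm => ?_, ?_, fun m => ?_⟩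
  · rw [sum_range_eq_sum_range_min hg0, min_eq_right hm]
  · calc ‖∑ k ∈ range n, g k - x‖
        ≤ ‖∑ k ∈ range n, g k - ∑ k ∈ range n, f k‖ + ‖∑ k ∈ range n, f k - x‖ :=
          norm_sub_le_norm_sub_add_norm_sub _ _ _
      _ ≤ 2 * M * ρ + η + η := add_le_add (hgf n le_rfl) hfx
      _ = 2 * T * ρ * ‖x‖ + δ := by rw [← hηδ]; ring
  · rw [sum_range_eq_sum_range_min hg0]
    have hmn := min_le_right m n
    calc ‖∑ k ∈ range (min m n), g k‖
        ≤ ‖∑ k ∈ range (min m n), f k‖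
          + ‖∑ k ∈ range (min m n), g k - ∑ k ∈ range (min m n), f k‖ :=
          norm_le_norm_add_norm_sub' _ _
      _ ≤ M + (2 * M * ρ + η) := add_le_add (hfM _ hmn) (hgf _ hmn)
      _ = T * (1 + 2 * ρ) * ‖x‖ + δ := by rw [← hηδ]; ring

end Perturbation

section Blocks

variable {F : Type*} [NormedAddCommGroup F] [CompleteSpace F] {G : ℕ → ℕ → F} {b : ℕ → ℝ}

lemma summable_of_norm_sum_range_le (hb : Summable b)
    (hG : ∀ i m, ‖∑ k ∈ range m, G i k‖ ≤ b i) (k : ℕ) : Summable fun i => G i k :=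
  (hb.mul_left 2).of_norm_bounded fun i => norm_le_two_mul_of_norm_sum_range_le (hG i _) (hG i _)

lemma tendsto_sum_range_tsum_of_blocks {s : ℕ → F} {x : F} (hb : Summable b)
    (hG : ∀ i m, ‖∑ k ∈ range m, G i k‖ ≤ b i)
    (hs : ∀ i, Tendsto (fun m => ∑ k ∈ range m, G i k) atTop (𝓝 (s i))) (hsx : HasSum s x) :
    Tendsto (fun m => ∑ k ∈ range m, ∑' i, G i k) atTop (𝓝 x) := by
  have h := tendsto_tsum_of_dominated_convergence hb hs (Eventually.of_forall fun m i => hG i m)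
  rw [hsx.tsum_eq] at h
  refine h.congr fun m => ?_
  exact Summable.tsum_finsetSum fun k _ => summable_of_norm_sum_range_le hb hG k

end Blocks

lemma hasSum_sub_succ_of_norm_le_geometric {F : Type*} [NormedAddCommGroup F] [CompleteSpace F]
    {r : ℕ → F} {c q : ℝ} (hq0 : 0 ≤ q) (hq1 : q < 1) (hr : ∀ i, ‖r i‖ ≤ c * q ^ i) :
    HasSum (fun i => r i - r (i + 1)) (r 0) := by
  have hgeom := summable_geometric_of_lt_one hq0 hq1
  have hsum : Summable fun i => r i - r (i + 1) := by
    refine (hgeom.mul_left (2 * c)).of_norm_bounded fun i => ?_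
    have hqi : q ^ (i + 1) ≤ q ^ i := pow_le_pow_of_le_one hq0 hq1.le i.le_succ
    have hc : 0 ≤ c := by simpa using (norm_nonneg _).trans (hr 0)
    linarith [norm_sub_le (r i) (r (i + 1)), hr i, hr (i + 1), mul_le_mul_of_nonneg_left hqi hc]
  have hr0 : Tendsto r atTop (𝓝 0) :=
    squeeze_zero_norm hr <| by
      simpa using (tendsto_pow_atTop_nhds_zero_of_lt_one hq0 hq1).const_mul c
  rw [hsum.hasSum_iff_tendsto_nat]
  simp_rw [sum_range_sub']
  simpa using tendsto_const_nhds.sub hr0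

theorem exists_tendsto_sum_of_approx [CompleteSpace E] {V : ℕ → Submodule ℝ E}
    (hV : ∀ k, IsClosed (V k : Set E)) {q C : ℝ} (hq0 : 0 ≤ q) (hq1 : q < 1) (hC : 0 ≤ C)
    (happrox : ∀ x ≠ (0 : E), ∃ g : ℕ → E, ∃ s, (∀ k, g k ∈ V k) ∧
      Tendsto (fun m => ∑ k ∈ range m, g k) atTop (𝓝 s) ∧ ‖s - x‖ ≤ q * ‖x‖ ∧
      ∀ m, ‖∑ k ∈ range m, g k‖ ≤ C * ‖x‖)
    (x : E) : ∃ f : ℕ → E, (∀ k, f k ∈ V k) ∧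
      Tendsto (fun n => ∑ k ∈ range n, f k) atTop (𝓝 x) := by
  have happrox' : ∀ y : E, ∃ g : ℕ → E, ∃ s, (∀ k, g k ∈ V k) ∧
      Tendsto (fun m => ∑ k ∈ range m, g k) atTop (𝓝 s) ∧ ‖s - y‖ ≤ q * ‖y‖ ∧
      ∀ m, ‖∑ k ∈ range m, g k‖ ≤ C * ‖y‖ := fun y => by
    rcases eq_or_ne y 0 with rfl | hy
    · exact ⟨0, 0, fun k => zero_mem _, by simp, by simp, by simp⟩
    · exact happrox y hy
  choose g s hgV hgs hsy hgC using happrox'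
  set r : ℕ → E := fun i => (fun y => y - s y)^[i] x
  have hr_succ : ∀ i, r i - r (i + 1) = s (r i) := fun i => by
    simp only [r, Function.iterate_succ_apply', sub_sub_cancel]
  have hr : ∀ i, ‖r i‖ ≤ ‖x‖ * q ^ i := by
    intro i
    induction i with
    | zero => simp [r]
    | succ i ih =>
      calc ‖r (i + 1)‖ = ‖s (r i) - r i‖ := by
            rw [← hr_succ, norm_sub_rev, sub_sub_cancel]
        _ ≤ q * ‖r i‖ := hsy (r i)
        _ ≤ ‖x‖ * q ^ (i + 1) := by rw [pow_succ]; nlinarith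
  have hG : ∀ i m, ‖∑ k ∈ range m, g (r i) k‖ ≤ C * ‖x‖ * q ^ i := fun i m =>
    (hgC (r i) m).trans (by rw [mul_assoc]; exact mul_le_mul_of_nonneg_left (hr i) hC)
  have hb := (summable_geometric_of_lt_one hq0 hq1).mul_left (C * ‖x‖)
  have hsx : HasSum (fun i => s (r i)) x := by
    have h := hasSum_sub_succ_of_norm_le_geometric hq0 hq1 hr
    simp only [hr_succ] at h
    exact h
  refine ⟨fun k => ∑' i, g (r i) k, fun k => tsum_mem (hV k) fun i => hgV (r i) k, ?_⟩
  exact tendsto_sum_range_tsum_of_blocks hb hG (fun i => hgs (r i)) hsx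

theorem rss_stability_general [CompleteSpace E] (X Xt : ℕ → Submodule ℝ E)
    (hXt : ∀ k, IsClosed (Xt k : Set E))
    (hfin : ThetaBar X ≠ ⊤)
    (hsum : Summable fun k => rho0 (X k) (Xt k))
    (hlt : ENNReal.ofReal (∑' k, rho0 (X k) (Xt k)) < (2 * ThetaBar X)⁻¹) :
    ∀ x : E, ∃ f : ℕ → E, (∀ k, f k ∈ Xt k) ∧
      Tendsto (fun n => ∑ k ∈ Finset.range n, f k) atTop (nhds x) := by
  set T := (ThetaBar X).toReal
  set ρ := ∑' k, rho0 (X k) (Xt k)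
  have hT : 0 ≤ T := ENNReal.toReal_nonneg
  have hρ : 0 ≤ ρ := tsum_nonneg fun k => rho0_nonneg _ _
  have hTρ : 2 * T * ρ < 1 := by
    simpa [T, ENNReal.toReal_mul] using
      ENNReal.toReal_mul_lt_one_of_ofReal_lt_inv
        (ENNReal.mul_ne_top ENNReal.ofNat_ne_top hfin) hρ hlt
  -- Choosing `δ = (1 - 2Tρ)/2 ‖y‖` gives the contraction factor `q = (1 + 2Tρ)/2 < 1`.
  refine exists_tendsto_sum_of_approx hXt (q := (1 + 2 * T * ρ) / 2) (C := T * (1 + 2 * ρ) + 1)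
    (by positivity) (by linarith) (by positivity) fun y hy => ?_
  have hy' : 0 < ‖y‖ := norm_pos_iff.mpr hy
  obtain ⟨g, s, hgXt, hgs, hsy, hgC⟩ :=
    exists_approx_of_rho0 hfin hsum y (δ := (1 - 2 * T * ρ) / 2 * ‖y‖) (by nlinarith)
  refine ⟨g, s, hgXt, hgs, hsy.trans_eq (by ring), fun m => (hgC m).trans ?_⟩
  nlinarith [mul_nonneg hT hρ]

/-- Stability of representing systems of subspaces: if `S = (X_k)` is a representing
system of subspaces with `Θ̄_S < ∞` and `Σ_k ρ_0(X_k, X̃_k) < 1/(2 Θ̄_S)`, then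
`(X̃_k)` is also a representing system of subspaces in `X`. -/
theorem rss_stability [CompleteSpace E] (X Xt : ℕ → Submodule ℝ E)
    (hX : ∀ k, IsClosed (X k : Set E)) (hXt : ∀ k, IsClosed (Xt k : Set E))
    (hS : ∀ x : E, ∃ f : ℕ → E, (∀ k, f k ∈ X k) ∧
      Tendsto (fun n => ∑ k ∈ Finset.range n, f k) atTop (nhds x))
    (hfin : ThetaBar X ≠ ⊤)
    (hsum : Summable fun k => rho0 (X k) (Xt k))
    (hlt : ENNReal.ofReal (∑' k, rho0 (X k) (Xt k)) < (2 * ThetaBar X)⁻¹) :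
    ∀ x : E, ∃ f : ℕ → E, (∀ k, f k ∈ Xt k) ∧
      Tendsto (fun n => ∑ k ∈ Finset.range n, f k) atTop (nhds x) :=
  rss_stability_general X Xt hXt hfin hsum hlt
end

section
/- Let X be a Banach space and (X_k)_{k≥1} closed subspaces. The system is an absolutely representing system of subspaces (every x ∈ X equals Σ x_k with x_k ∈ X_k and Σ ‖x_k‖ < ∞) if and only if there exists ε > 0 such that for every φ ∈ X*, sup_k ‖φ|_{X_k}‖ ≥ ε‖φ‖. -/
set_option maxHeartbeats 1000000
set_option synthInstance.maxHeartbeats 400000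

open Filter Finset

/-- `S = (X_k)` is an absolutely representing system of subspaces: every `x` is the sum
of an absolutely convergent series with `k`-th term in `X_k`. -/
def IsARSS {E : Type*} [NormedAddCommGroup E] [NormedSpace ℝ E]
    (X : ℕ → Submodule ℝ E) : Prop :=
  ∀ x : E, ∃ f : ℕ → E, (∀ k, f k ∈ X k) ∧ (Summable fun k => ‖f k‖) ∧
    Tendsto (fun n => ∑ k ∈ Finset.range n, f k) atTop (nhds x)

namespace ARSSAux

variable {E : Type*} [NormedAddCommGroup E] [NormedSpace ℝ E]

/-- Finite sums of elements of the `X k` with total norm at most `c`. -/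
def repSet (X : ℕ → Submodule ℝ E) (c : ℝ) : Set E :=
  {y | ∃ (t : Finset ℕ) (g : ℕ → E), (∀ k, g k ∈ X k) ∧ (∀ k ∉ t, g k = 0) ∧
    (∑ k ∈ t, ‖g k‖) ≤ c ∧ (∑ k ∈ t, g k) = y}

theorem sum_mem_repSet {X : ℕ → Submodule ℝ E} {c : ℝ} (t : Finset ℕ) (g : ℕ → E)
    (hg : ∀ k, g k ∈ X k) (hsum : (∑ k ∈ t, ‖g k‖) ≤ c) :
    (∑ k ∈ t, g k) ∈ repSet X c := by
  refine ⟨t, fun k => if k ∈ t then g k else 0, ?_, fun k hk => if_neg hk, ?_, ?_⟩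
  · intro k
    by_cases hk : k ∈ t <;> simp [hk, hg k, (X k).zero_mem]
  · refine le_trans (le_of_eq (Finset.sum_congr rfl fun k hk => by simp [hk])) hsum
  · exact Finset.sum_congr rfl fun k hk => by simp [hk]

theorem zero_mem_repSet {X : ℕ → Submodule ℝ E} {c : ℝ} (hc : 0 ≤ c) : (0 : E) ∈ repSet X c := by
  have := sum_mem_repSet (X := X) (c := c) ∅ 0 (fun k => (X k).zero_mem) (by simpa using hc)
  simpa using this

theorem single_mem_repSet {X : ℕ → Submodule ℝ E} {c : ℝ} {k : ℕ} {z : E}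
    (hz : z ∈ X k) (hnorm : ‖z‖ ≤ c) : z ∈ repSet X c := by
  have := sum_mem_repSet (X := X) (c := c) {k} (fun j => if j = k then z else 0)
    (fun j => by by_cases hj : j = k <;> simp [hj, hz, (X j).zero_mem])
    (by simpa using hnorm)
  simpa using this

theorem neg_mem_repSet {X : ℕ → Submodule ℝ E} {c : ℝ} {y : E} (hy : y ∈ repSet X c) :
    -y ∈ repSet X c := by
  obtain ⟨t, g, hg, hg0, hsum, rfl⟩ := hy
  rw [← Finset.sum_neg_distrib]
  exact sum_mem_repSet t (fun k => -g k) (fun k => (X k).neg_mem (hg k))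
    (by simpa using hsum)

theorem convex_repSet (X : ℕ → Submodule ℝ E) (c : ℝ) : Convex ℝ (repSet X c) := by
  rintro y ⟨t, g, hg, hg0, hgs, rfl⟩ z ⟨s, h, hh, hh0, hhs, rfl⟩ a b ha hb hab
  have hgt : ∑ k ∈ t ∪ s, g k = ∑ k ∈ t, g k :=
    (Finset.sum_subset Finset.subset_union_left (fun k _ hk => hg0 k hk)).symm
  have hhs' : ∑ k ∈ t ∪ s, h k = ∑ k ∈ s, h k :=
    (Finset.sum_subset Finset.subset_union_right (fun k _ hk => hh0 k hk)).symm
  have hgtn : ∑ k ∈ t ∪ s, ‖g k‖ = ∑ k ∈ t, ‖g k‖ :=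
    (Finset.sum_subset Finset.subset_union_left (fun k _ hk => by rw [hg0 k hk, norm_zero])).symm
  have hhsn : ∑ k ∈ t ∪ s, ‖h k‖ = ∑ k ∈ s, ‖h k‖ :=
    (Finset.sum_subset Finset.subset_union_right (fun k _ hk => by rw [hh0 k hk, norm_zero])).symm
  have key : a • (∑ k ∈ t, g k) + b • (∑ k ∈ s, h k) = ∑ k ∈ t ∪ s, (a • g k + b • h k) := by
    rw [← hgt, ← hhs', Finset.sum_add_distrib, Finset.smul_sum, Finset.smul_sum]
  rw [key]
  refine sum_mem_repSet _ _ (fun k => (X k).add_mem ((X k).smul_mem a (hg k))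
    ((X k).smul_mem b (hh k))) ?_
  calc ∑ k ∈ t ∪ s, ‖a • g k + b • h k‖
      ≤ ∑ k ∈ t ∪ s, (a * ‖g k‖ + b * ‖h k‖) := by
        refine Finset.sum_le_sum fun k _ => ?_
        refine (norm_add_le _ _).trans ?_
        rw [norm_smul, norm_smul, Real.norm_eq_abs, Real.norm_eq_abs, abs_of_nonneg ha,
          abs_of_nonneg hb]
    _ = a * ∑ k ∈ t, ‖g k‖ + b * ∑ k ∈ s, ‖h k‖ := by
        rw [Finset.sum_add_distrib, ← Finset.mul_sum, ← Finset.mul_sum, hgtn, hhsn]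
    _ ≤ a * c + b * c := by
        have h1 : a * ∑ k ∈ t, ‖g k‖ ≤ a * c := mul_le_mul_of_nonneg_left hgs ha
        have h2 : b * ∑ k ∈ s, ‖h k‖ ≤ b * c := mul_le_mul_of_nonneg_left hhs hb
        linarith
    _ = c := by rw [← add_mul, hab, one_mul]

/-- The sup of the norms of the restrictions. -/
noncomputable def Msup (X : ℕ → Submodule ℝ E) (φ : E →L[ℝ] ℝ) : ℝ :=
  ⨆ k : ℕ, ‖φ.comp (X k).subtypeL‖

theorem norm_comp_le (X : ℕ → Submodule ℝ E) (φ : E →L[ℝ] ℝ) (k : ℕ) :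
    ‖φ.comp (X k).subtypeL‖ ≤ ‖φ‖ :=
  (φ.opNorm_comp_le _).trans (by
    have := Submodule.norm_subtypeL_le (X k)
    calc ‖φ‖ * ‖(X k).subtypeL‖ ≤ ‖φ‖ * 1 := by
          exact mul_le_mul_of_nonneg_left this (norm_nonneg φ)
      _ = ‖φ‖ := mul_one _)

theorem bddAbove_comp (X : ℕ → Submodule ℝ E) (φ : E →L[ℝ] ℝ) :
    BddAbove (Set.range fun k : ℕ => ‖φ.comp (X k).subtypeL‖) :=
  ⟨‖φ‖, by rintro _ ⟨k, rfl⟩; exact norm_comp_le X φ k⟩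

theorem le_Msup (X : ℕ → Submodule ℝ E) (φ : E →L[ℝ] ℝ) (k : ℕ) :
    ‖φ.comp (X k).subtypeL‖ ≤ Msup X φ :=
  le_ciSup (bddAbove_comp X φ) k

theorem Msup_nonneg (X : ℕ → Submodule ℝ E) (φ : E →L[ℝ] ℝ) : 0 ≤ Msup X φ :=
  (norm_nonneg (φ.comp (X 0).subtypeL)).trans (le_Msup X φ 0)

theorem abs_apply_le (X : ℕ → Submodule ℝ E) (φ : E →L[ℝ] ℝ) {k : ℕ} {z : E} (hz : z ∈ X k) :
    |φ z| ≤ ‖φ.comp (X k).subtypeL‖ * ‖z‖ := by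
  have := (φ.comp (X k).subtypeL).le_opNorm ⟨z, hz⟩
  simpa [Real.norm_eq_abs] using this

theorem abs_le_of_mem_repSet {X : ℕ → Submodule ℝ E} {c : ℝ} (φ : E →L[ℝ] ℝ) {y : E}
    (hy : y ∈ repSet X c) : |φ y| ≤ c * Msup X φ := by
  obtain ⟨t, g, hg, _hg0, hsum, rfl⟩ := hy
  calc |φ (∑ k ∈ t, g k)| = |∑ k ∈ t, φ (g k)| := by rw [map_sum]
    _ ≤ ∑ k ∈ t, |φ (g k)| := Finset.abs_sum_le_sum_abs _ _
    _ ≤ ∑ k ∈ t, Msup X φ * ‖g k‖ := by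
        refine Finset.sum_le_sum fun k _ => ?_
        exact (abs_apply_le X φ (hg k)).trans
          (mul_le_mul_of_nonneg_right (le_Msup X φ k) (norm_nonneg _))
    _ = Msup X φ * ∑ k ∈ t, ‖g k‖ := by rw [← Finset.mul_sum]
    _ ≤ Msup X φ * c := mul_le_mul_of_nonneg_left hsum (Msup_nonneg X φ)
    _ = c * Msup X φ := mul_comm _ _

theorem abs_le_of_mem_closure_repSet {X : ℕ → Submodule ℝ E} {c : ℝ} (φ : E →L[ℝ] ℝ) {y : E}
    (hy : y ∈ closure (repSet X c)) : |φ y| ≤ c * Msup X φ := by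
  have hcl : IsClosed {y : E | |φ y| ≤ c * Msup X φ} :=
    isClosed_le (continuous_abs.comp φ.continuous) continuous_const
  exact closure_minimal (fun z hz => abs_le_of_mem_repSet φ hz) hcl hy

/-- Key approximation lemma for the reverse direction: under the dual inequality every
vector is in the closure of the finite representable sums with total norm `‖y‖ / ε`. -/
theorem mem_closure_repSet {X : ℕ → Submodule ℝ E} {ε : ℝ} (hε : 0 < ε)
    (hdual : ∀ φ : E →L[ℝ] ℝ, ε * ‖φ‖ ≤ Msup X φ) (y : E) :
    y ∈ closure (repSet X (‖y‖ / ε)) := by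
  by_cases hy0 : y = 0
  · subst hy0
    exact subset_closure (zero_mem_repSet (by positivity))
  by_contra h
  obtain ⟨φ, u, hu1, hu2⟩ := geometric_hahn_banach_closed_point
    ((convex_repSet X _).closure) isClosed_closure h
  set c : ℝ := ‖y‖ / ε with hc
  have hcpos : 0 < c := by
    have : 0 < ‖y‖ := norm_pos_iff.2 hy0
    positivity
  have hu0 : 0 < u := by
    have := hu1 0 (subset_closure (zero_mem_repSet hcpos.le))
    simpa using this
  have habs : ∀ z ∈ repSet X c, |φ z| < u := by
    intro z hz
    have h1 := hu1 z (subset_closure hz)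
    have h2 := hu1 (-z) (subset_closure (neg_mem_repSet hz))
    rw [map_neg] at h2
    rcases abs_cases (φ z) with ⟨he, _⟩ | ⟨he, _⟩ <;> rw [he] <;> [exact h1; linarith]
  -- each restriction has norm at most u / c
  have hcomp : ∀ k, ‖φ.comp (X k).subtypeL‖ ≤ u / c := by
    intro k
    refine ContinuousLinearMap.opNorm_le_bound _ (by positivity) ?_
    rintro ⟨w, hw⟩
    by_cases hw0 : w = 0
    · simp [hw0]
    have hwpos : 0 < ‖w‖ := norm_pos_iff.2 hw0
    have hmem : (c / ‖w‖) • w ∈ repSet X c := by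
      refine single_mem_repSet ((X k).smul_mem _ hw) ?_
      rw [norm_smul, Real.norm_eq_abs, abs_of_nonneg (by positivity)]
      rw [div_mul_cancel₀ _ hwpos.ne']
    have := habs _ hmem
    rw [map_smul] at this
    have hz : |(c / ‖w‖) * φ w| < u := by simpa using this
    rw [abs_mul, abs_of_nonneg (by positivity : (0:ℝ) ≤ c / ‖w‖)] at hz
    have hnorm : ‖(φ.comp (X k).subtypeL) ⟨w, hw⟩‖ = |φ w| := by
      simp [Real.norm_eq_abs]
    rw [hnorm]
    have hns : ‖(⟨w, hw⟩ : X k)‖ = ‖w‖ := rfl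
    rw [hns]
    -- from (c/‖w‖) * |φ w| < u deduce |φ w| ≤ (u/c) * ‖w‖
    have hmul := mul_lt_mul_of_pos_right hz hwpos
    have heq2 : c / ‖w‖ * |φ w| * ‖w‖ = |φ w| * c := by field_simp
    rw [heq2] at hmul
    have hfin : |φ w| < u / c * ‖w‖ := by
      rw [div_mul_eq_mul_div, lt_div_iff₀ hcpos]
      exact hmul
    exact hfin.le
  have hM : Msup X φ ≤ u / c := ciSup_le hcomp
  have hφ := hdual φ
  have hφnorm : ‖φ‖ ≤ u / ‖y‖ := by
    have h1 : ε * ‖φ‖ ≤ u / c := hφ.trans hM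
    have hyn : 0 < ‖y‖ := norm_pos_iff.2 hy0
    have h2 : u / c = u * ε / ‖y‖ := by
      rw [hc]; field_simp
    rw [h2] at h1
    rw [le_div_iff₀ hyn]
    have h3 : ε * ‖φ‖ * ‖y‖ ≤ u * ε := by
      have := mul_le_mul_of_nonneg_right h1 (norm_nonneg y)
      rwa [div_mul_cancel₀ _ hyn.ne'] at this
    nlinarith [h3, hε]
  have : φ y ≤ u := by
    have h1 : φ y ≤ ‖φ‖ * ‖y‖ := by
      have := φ.le_opNorm y
      have h2 : φ y ≤ ‖φ y‖ := le_abs_self _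
      simpa [Real.norm_eq_abs] using h2.trans (by simpa [Real.norm_eq_abs] using this)
    have hyn : 0 ≤ ‖y‖ := norm_nonneg _
    calc φ y ≤ ‖φ‖ * ‖y‖ := h1
      _ ≤ (u / ‖y‖) * ‖y‖ := mul_le_mul_of_nonneg_right hφnorm hyn
      _ ≤ u := by
          rcases eq_or_lt_of_le hyn with he | hlt
          · simp [← he]; exact hu0.le
          · rw [div_mul_cancel₀ _ hlt.ne']
  exact absurd hu2 (not_lt.2 this)

end ARSSAux

open ARSSAux

/-- `(X_k)` is an absolutely representing system of subspaces of the Banach space `X`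
iff there is `ε > 0` with `sup_k ‖φ|_{X_k}‖ ≥ ε‖φ‖` for every `φ ∈ X*`. -/
theorem arss_iff_dual_inequality {E : Type*} [NormedAddCommGroup E] [NormedSpace ℝ E]
    [CompleteSpace E] (X : ℕ → Submodule ℝ E) (hX : ∀ k, IsClosed (X k : Set E)) :
    IsARSS X ↔ ∃ ε : ℝ, 0 < ε ∧ ∀ φ : E →L[ℝ] ℝ,
      ε * ‖φ‖ ≤ ⨆ k : ℕ, ‖φ.comp (X k).subtypeL‖ := by
  constructor
  · -- forward: ARSS implies dual inequality, via Baire category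
    intro hARSS
    have hcover : (⋃ n : ℕ, closure (repSet X (n : ℝ))) = Set.univ := by
      refine Set.eq_univ_of_forall fun x => ?_
      obtain ⟨f, hfmem, hfsum, hften⟩ := hARSS x
      set n : ℕ := ⌈∑' k, ‖f k‖⌉₊ with hn
      refine Set.mem_iUnion.2 ⟨n, ?_⟩
      refine mem_closure_of_tendsto hften (Filter.Eventually.of_forall fun m => ?_)
      refine sum_mem_repSet _ _ hfmem ?_
      calc ∑ k ∈ Finset.range m, ‖f k‖ ≤ ∑' k, ‖f k‖ :=
            Summable.sum_le_tsum _ (fun k _ => norm_nonneg _) hfsum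
        _ ≤ n := Nat.le_ceil _
    obtain ⟨n, hne⟩ := nonempty_interior_of_iUnion_of_closed
      (fun n : ℕ => isClosed_closure) hcover
    obtain ⟨x₀, hx₀⟩ := hne
    obtain ⟨r, hr, hball⟩ := Metric.isOpen_iff.1 isOpen_interior x₀ hx₀
    have hball' : Metric.ball x₀ r ⊆ closure (repSet X (n : ℝ)) :=
      hball.trans interior_subset
    -- the ball of radius r around 0 is inside the closure
    have hball0 : ∀ v : E, ‖v‖ < r → v ∈ closure (repSet X (n : ℝ)) := by
      intro v hv
      have h1 : x₀ + v ∈ closure (repSet X (n : ℝ)) := by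
        refine hball' ?_
        rw [Metric.mem_ball, dist_eq_norm]
        simpa using hv
      have h2 : x₀ - v ∈ closure (repSet X (n : ℝ)) := by
        refine hball' ?_
        rw [Metric.mem_ball, dist_eq_norm]
        have hxy : x₀ - v - x₀ = -v := by abel
        rw [hxy, norm_neg]
        exact hv
      have h2' : -(x₀ - v) ∈ closure (repSet X (n : ℝ)) := by
        rw [Metric.mem_closure_iff] at h2 ⊢
        intro δ hδ
        obtain ⟨b, hb, hbd⟩ := h2 δ hδ
        exact ⟨-b, neg_mem_repSet hb, by rwa [dist_neg_neg]⟩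
      have hconv := ((convex_repSet X (n : ℝ)).closure)
      have := hconv h1 h2' (by norm_num : (0:ℝ) ≤ 1/2) (by norm_num : (0:ℝ) ≤ 1/2)
        (by norm_num)
      have heq : (1/2 : ℝ) • (x₀ + v) + (1/2 : ℝ) • (-(x₀ - v)) = v := by
        module
      rwa [heq] at this
    refine ⟨r / (2 * (n + 1)), by positivity, fun φ => ?_⟩
    have hbound : ∀ x : E, |φ x| ≤ (2 * (n + 1) / r) * Msup X φ * ‖x‖ := by
      intro x
      by_cases hx0 : x = 0
      · simp [hx0]
      have hxpos : 0 < ‖x‖ := norm_pos_iff.2 hx0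
      set w : E := (r / (2 * ‖x‖)) • x with hw
      have hwnorm : ‖w‖ = r / 2 := by
        rw [hw, norm_smul, Real.norm_eq_abs, abs_of_nonneg (by positivity)]
        field_simp
      have hwin : w ∈ closure (repSet X (n : ℝ)) := hball0 w (by rw [hwnorm]; linarith)
      have hwb := abs_le_of_mem_closure_repSet φ hwin
      have hφw : φ w = (r / (2 * ‖x‖)) * φ x := by rw [hw, map_smul]; rfl
      rw [hφw, abs_mul, abs_of_nonneg (by positivity : (0:ℝ) ≤ r / (2 * ‖x‖))] at hwb
      -- hwb : (r / (2‖x‖)) * |φ x| ≤ n * Msup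
      have hM0 := Msup_nonneg X φ
      have key : |φ x| ≤ (n : ℝ) * Msup X φ * (2 * ‖x‖ / r) := by
        have heq3 : r / (2 * ‖x‖) * |φ x| * (2 * ‖x‖ / r) = |φ x| := by
          field_simp
        have := mul_le_mul_of_nonneg_right hwb
          (le_of_lt (by positivity : (0:ℝ) < 2 * ‖x‖ / r))
        calc |φ x| = r / (2 * ‖x‖) * |φ x| * (2 * ‖x‖ / r) := heq3.symm
          _ ≤ (n : ℝ) * Msup X φ * (2 * ‖x‖ / r) := this
      calc |φ x| ≤ (n : ℝ) * Msup X φ * (2 * ‖x‖ / r) := key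
        _ ≤ ((n : ℝ) + 1) * Msup X φ * (2 * ‖x‖ / r) := by
            have : (n : ℝ) ≤ (n : ℝ) + 1 := by linarith
            have h2 : (0:ℝ) ≤ 2 * ‖x‖ / r := by positivity
            nlinarith [mul_nonneg hM0 h2]
        _ = (2 * ((n : ℝ) + 1) / r) * Msup X φ * ‖x‖ := by field_simp
    have hφle : ‖φ‖ ≤ (2 * ((n : ℝ) + 1) / r) * Msup X φ := by
      refine ContinuousLinearMap.opNorm_le_bound _ ?_ fun x => ?_
      · have := Msup_nonneg X φ
        positivity
      · rw [Real.norm_eq_abs]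
        exact hbound x
    have hfinal : (r / (2 * ((n : ℝ) + 1))) * ‖φ‖ ≤ Msup X φ := by
      have := mul_le_mul_of_nonneg_left hφle
        (le_of_lt (by positivity : (0:ℝ) < r / (2 * ((n : ℝ) + 1))))
      calc (r / (2 * ((n : ℝ) + 1))) * ‖φ‖
          ≤ (r / (2 * ((n : ℝ) + 1))) * ((2 * ((n : ℝ) + 1) / r) * Msup X φ) := this
        _ = Msup X φ := by
            have hrne : r ≠ 0 := ne_of_gt hr
            have hnne : (2 * ((n:ℝ)+1)) ≠ 0 := by positivity
            field_simp
    exact hfinal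
  · -- reverse: dual inequality implies ARSS
    rintro ⟨ε, hε, hdual⟩ x
    -- approximation with control
    have hrep : ∀ (y : E) (n : ℕ), ∃ g : ℕ → E, (∀ k, g k ∈ X k) ∧
        (Summable fun k => ‖g k‖) ∧ (∑' k, ‖g k‖) ≤ ‖y‖ / ε ∧
        ‖y - ∑' k, g k‖ < (‖x‖ + 1) / 2 ^ (n + 1) := by
      intro y n
      have hδ : (0:ℝ) < (‖x‖ + 1) / 2 ^ (n + 1) := by positivity
      have hy := mem_closure_repSet hε hdual y
      rw [Metric.mem_closure_iff] at hy
      obtain ⟨b, hb, hbd⟩ := hy _ hδ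
      obtain ⟨t, g, hg, hg0, hsum, rfl⟩ := hb
      have hgsummable : Summable fun k => ‖g k‖ :=
        summable_of_ne_finset_zero (s := t) fun k hk => by rw [hg0 k hk, norm_zero]
      have htsum_norm : (∑' k, ‖g k‖) = ∑ k ∈ t, ‖g k‖ :=
        tsum_eq_sum fun k hk => by rw [hg0 k hk, norm_zero]
      have htsum : (∑' k, g k) = ∑ k ∈ t, g k := tsum_eq_sum fun k hk => hg0 k hk
      refine ⟨g, hg, hgsummable, ?_, ?_⟩
      · rw [htsum_norm]; exact hsum
      · rw [htsum]
        rw [dist_eq_norm] at hbd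
        exact hbd
    choose G hGmem hGsum hGle hGclose using hrep
    -- iterate
    let y : ℕ → E := fun n => Nat.rec x (fun n yn => yn - ∑' k, G yn n k) n
    have hy0 : y 0 = x := rfl
    have hystep : ∀ n, y (n + 1) = y n - ∑' k, G (y n) n k := fun n => rfl
    set h : ℕ → ℕ → E := fun n => G (y n) n with hh
    have hynorm : ∀ n, ‖y n‖ ≤ (‖x‖ + 1) / 2 ^ n := by
      intro n
      induction n with
      | zero =>
          rw [hy0, pow_zero, div_one]
          linarith [norm_nonneg x]
      | succ n _ =>
          rw [hystep n]
          exact (hGclose (y n) n).le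
    set C : ℝ := (‖x‖ + 1) / ε with hC
    have hCpos : 0 < C := by positivity
    have hrowsum_le : ∀ n, (∑' k, ‖h n k‖) ≤ C * (1 / 2) ^ n := by
      intro n
      have h2 : C * (1 / 2 : ℝ) ^ n = ((‖x‖ + 1) / 2 ^ n) / ε := by
        rw [hC, div_pow, one_pow, div_mul_div_comm, mul_one, div_div, mul_comm]
      calc (∑' k, ‖h n k‖) ≤ ‖y n‖ / ε := hGle (y n) n
        _ ≤ ((‖x‖ + 1) / 2 ^ n) / ε := by gcongr; exact hynorm n
        _ = C * (1 / 2) ^ n := h2.symm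
    have hgeom : Summable fun n : ℕ => C * (1 / 2 : ℝ) ^ n :=
      (summable_geometric_two).mul_left C
    -- the double family of norms is summable
    set u : ℕ × ℕ → ℝ := fun p => ‖h p.1 p.2‖ with hu
    have hrow : ∀ n, Summable fun k => u (n, k) := fun n => hGsum (y n) n
    have hU : Summable u := by
      refine (summable_prod_of_nonneg fun p => norm_nonneg _).2 ⟨hrow, ?_⟩
      refine Summable.of_nonneg_of_le (fun n => tsum_nonneg fun k => norm_nonneg _)
        (fun n => hrowsum_le n) hgeom
    have hcolle : ∀ n k, ‖h n k‖ ≤ C * (1 / 2 : ℝ) ^ n := fun n k =>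
      (Summable.le_tsum (hrow n) k fun j _ => norm_nonneg _).trans (hrowsum_le n)
    have hcol : ∀ k, Summable fun n => ‖h n k‖ := fun k =>
      Summable.of_nonneg_of_le (fun n => norm_nonneg _) (fun n => hcolle n k) hgeom
    have hcolE : ∀ k, Summable fun n => h n k := fun k => Summable.of_norm (hcol k)
    set f : ℕ → E := fun k => ∑' n, h n k with hf
    have hfmem : ∀ k, f k ∈ X k := by
      intro k
      have hhs := (hcolE k).hasSum
      have htend := hhs.tendsto_sum_nat
      refine (hX k).mem_of_tendsto htend (Filter.Eventually.of_forall fun N => ?_)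
      exact Submodule.sum_mem _ fun n _ => hGmem (y n) n k
    -- summability of k ↦ ‖f k‖
    have hUswap : Summable fun p : ℕ × ℕ => u p.swap := hU.prod_symm
    have hbsum : Summable fun k => ∑' n, u (n, k) := by
      have := (summable_prod_of_nonneg (f := fun p : ℕ × ℕ => u p.swap)
        (fun p => norm_nonneg _)).1 hUswap
      exact this.2
    have hfnorm : Summable fun k => ‖f k‖ := by
      refine Summable.of_nonneg_of_le (fun k => norm_nonneg _) (fun k => ?_) hbsum
      exact norm_tsum_le_tsum_norm (hcol k)
    -- the sum of f is x
    set s : ℕ → E := fun n => ∑' k, h n k with hs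
    have hsnorm : ∀ n, ‖s n‖ ≤ C * (1 / 2 : ℝ) ^ n := fun n =>
      (norm_tsum_le_tsum_norm (hrow n)).trans (hrowsum_le n)
    have hssum : Summable s := by
      refine Summable.of_norm ?_
      exact Summable.of_nonneg_of_le (fun n => norm_nonneg _) hsnorm hgeom
    have hpartial : ∀ N, ∑ n ∈ Finset.range N, s n = x - y N := by
      intro N
      induction N with
      | zero => simp [hy0]
      | succ N ih =>
          rw [Finset.sum_range_succ, ih, hystep N]
          simp only [hs]
          abel
    have hylim : Tendsto y atTop (nhds 0) := by
      refine squeeze_zero_norm hynorm ?_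
      have : Tendsto (fun n : ℕ => (‖x‖ + 1) * (1 / 2 : ℝ) ^ n) atTop (nhds 0) := by
        simpa using (tendsto_pow_atTop_nhds_zero_of_lt_one (by norm_num : (0:ℝ) ≤ 1/2)
          (by norm_num : (1/2 : ℝ) < 1)).const_mul (‖x‖ + 1)
      refine this.congr fun n => ?_
      rw [div_pow, one_pow, mul_div_assoc', mul_one]
    have htsum_s : (∑' n, s n) = x := by
      have h1 := hssum.hasSum.tendsto_sum_nat
      have h2 : Tendsto (fun N => ∑ n ∈ Finset.range N, s n) atTop (nhds x) := by
        have : Tendsto (fun N => x - y N) atTop (nhds (x - 0)) :=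
          (tendsto_const_nhds).sub hylim
        rw [sub_zero] at this
        exact this.congr fun N => (hpartial N).symm
      exact tendsto_nhds_unique h1 h2
    have hH : Summable (Function.uncurry h) := by
      refine Summable.of_norm ?_
      exact hU
    have hswap : (∑' k, f k) = ∑' n, s n := Summable.tsum_comm hH
    have hfx : (∑' k, f k) = x := hswap.trans htsum_s
    refine ⟨f, hfmem, hfnorm, ?_⟩
    have := (Summable.of_norm hfnorm).hasSum.tendsto_sum_nat
    rwa [hfx] at this
end

section
/- Let X be a Banach space and (X_k)_{k≥1} closed subspaces with λ_S = sup_{‖x‖=1} inf_{k≥1} dist(x, X_k) < 1. Then (X_k) is an absolutely representing system of subspaces: every x ∈ X can be written x = Σ_{k=1}^∞ z_k with z_k ∈ X_k and Σ ‖z_k‖ ≤ ((1+λ)/(1−λ))‖x‖ for any λ ∈ (λ_S, 1). -/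
open Filter Finset

/-- `λ_S = sup_{‖x‖ = 1} inf_k dist(x, X_k)`. -/
noncomputable def lambdaS {E : Type*} [NormedAddCommGroup E] [NormedSpace ℝ E]
    (X : ℕ → Submodule ℝ E) : ℝ :=
  sSup {d : ℝ | ∃ x : E, ‖x‖ = 1 ∧ d = ⨅ k : ℕ, Metric.infDist x (X k : Set E)}

/-!
Since `λ_S < l`, every `v` lies within `l‖v‖` of some `X_k`. Subtracting such an approximation
repeatedly leaves residuals `r_n` with `‖r_n‖ ≤ lⁿ‖x‖`, so the subtracted pieces, each of norm at
most `(1 + l)‖r_n‖`, form a series summing to `x` with total norm at most `(1 + l)/(1 - l)‖x‖`.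
Pieces that fall into the same `X_k` are then merged; closedness of `X_k` keeps the merged sums
in `X_k`.
-/

section Greedy

variable {E : Type*} [SeminormedAddCommGroup E] {l : ℝ} {f : E → E}

def greedyResidual (f : E → E) (x : E) (n : ℕ) : E :=
  (fun v => v - f v)^[n] x

lemma greedyResidual_succ (x : E) (n : ℕ) :
    greedyResidual f x (n + 1) = greedyResidual f x n - f (greedyResidual f x n) :=
  Function.iterate_succ_apply' _ _ _

lemma sum_range_greedyResidual (x : E) (n : ℕ) :
    ∑ i ∈ range n, f (greedyResidual f x i) = x - greedyResidual f x n := by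
  induction n with
  | zero => simp [greedyResidual]
  | succ n ih => rw [sum_range_succ, ih, greedyResidual_succ]; abel

lemma norm_greedyResidual_le (hf : ∀ v, ‖v - f v‖ ≤ l * ‖v‖) (hl : 0 ≤ l) (x : E) (n : ℕ) :
    ‖greedyResidual f x n‖ ≤ l ^ n * ‖x‖ := by
  induction n with
  | zero => simp [greedyResidual]
  | succ n ih =>
    rw [greedyResidual_succ, pow_succ', mul_assoc]
    exact (hf _).trans (mul_le_mul_of_nonneg_left ih hl)

lemma norm_apply_le_of_norm_sub_le (hf : ∀ v, ‖v - f v‖ ≤ l * ‖v‖) (v : E) :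
    ‖f v‖ ≤ (1 + l) * ‖v‖ :=
  calc ‖f v‖ = ‖v - (v - f v)‖ := by rw [sub_sub_cancel]
    _ ≤ ‖v‖ + ‖v - f v‖ := norm_sub_le _ _
    _ ≤ (1 + l) * ‖v‖ := by linarith [hf v]

lemma norm_greedy_le (hf : ∀ v, ‖v - f v‖ ≤ l * ‖v‖) (hl : 0 ≤ l) (x : E) (n : ℕ) :
    ‖f (greedyResidual f x n)‖ ≤ (1 + l) * ‖x‖ * l ^ n :=
  calc ‖f (greedyResidual f x n)‖ ≤ (1 + l) * ‖greedyResidual f x n‖ :=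
        norm_apply_le_of_norm_sub_le hf _
    _ ≤ (1 + l) * (l ^ n * ‖x‖) :=
        mul_le_mul_of_nonneg_left (norm_greedyResidual_le hf hl x n) (by linarith)
    _ = (1 + l) * ‖x‖ * l ^ n := by ring

lemma summable_norm_greedy (hf : ∀ v, ‖v - f v‖ ≤ l * ‖v‖) (hl : 0 ≤ l) (hl1 : l < 1) (x : E) :
    Summable fun n => ‖f (greedyResidual f x n)‖ :=
  .of_nonneg_of_le (fun _ => norm_nonneg _) (norm_greedy_le hf hl x)
    ((summable_geometric_of_lt_one hl hl1).mul_left _)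

lemma tsum_norm_greedy_le (hf : ∀ v, ‖v - f v‖ ≤ l * ‖v‖) (hl : 0 ≤ l) (hl1 : l < 1) (x : E) :
    ∑' n, ‖f (greedyResidual f x n)‖ ≤ (1 + l) / (1 - l) * ‖x‖ :=
  calc ∑' n, ‖f (greedyResidual f x n)‖ ≤ ∑' n : ℕ, (1 + l) * ‖x‖ * l ^ n :=
        (summable_norm_greedy hf hl hl1 x).tsum_le_tsum (norm_greedy_le hf hl x)
          ((summable_geometric_of_lt_one hl hl1).mul_left _)
    _ = (1 + l) / (1 - l) * ‖x‖ := by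
        rw [tsum_mul_left, tsum_geometric_of_lt_one hl hl1, div_eq_mul_inv]; ring

lemma hasSum_greedy (hf : ∀ v, ‖v - f v‖ ≤ l * ‖v‖) (hl : 0 ≤ l) (hl1 : l < 1) (x : E) :
    HasSum (fun n => f (greedyResidual f x n)) x := by
  rw [hasSum_iff_tendsto_nat_of_summable_norm (summable_norm_greedy hf hl hl1 x)]
  simp only [sum_range_greedyResidual]
  have hr : Tendsto (greedyResidual f x) atTop (nhds 0) := by
    rw [tendsto_zero_iff_norm_tendsto_zero]
    refine squeeze_zero (fun _ => norm_nonneg _) (norm_greedyResidual_le hf hl x) ?_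
    simpa using (tendsto_pow_atTop_nhds_zero_of_lt_one hl hl1).mul_const ‖x‖
  simpa using tendsto_const_nhds.sub hr

end Greedy

lemma exists_hasSum_mem_of_summable_norm {E ι : Type*} [NormedAddCommGroup E]
    [NormedSpace ℝ E] [CompleteSpace E] (X : ι → Submodule ℝ E)
    (hX : ∀ k, IsClosed (X k : Set E)) {κ : ℕ → ι} {y : ℕ → E} (hy : ∀ n, y n ∈ X (κ n))
    (hsum : Summable fun n => ‖y n‖) :
    ∃ z : ι → E, (∀ k, z k ∈ X k) ∧ HasSum z (∑' n, y n) ∧ (Summable fun k => ‖z k‖) ∧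
      ∑' k, ‖z k‖ ≤ ∑' n, ‖y n‖ := by
  have hnorm := hsum.hasSum.tsum_fiberwise κ
  have hle : ∀ k, ‖∑' n : (κ ⁻¹' {k} : Set ℕ), y n‖ ≤ ∑' n : (κ ⁻¹' {k} : Set ℕ), ‖y n‖ :=
    fun k => norm_tsum_le_tsum_norm (hsum.subtype _)
  have hz : Summable fun k => ‖∑' n : (κ ⁻¹' {k} : Set ℕ), y n‖ :=
    .of_nonneg_of_le (fun _ => norm_nonneg _) hle hnorm.summable
  refine ⟨fun k => ∑' n : (κ ⁻¹' {k} : Set ℕ), y n, fun k => tsum_mem (hX k) ?_,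
    hsum.of_norm.hasSum.tsum_fiberwise κ, hz, hnorm.tsum_eq ▸ hz.tsum_le_tsum hle hnorm.summable⟩
  rintro ⟨n, rfl : κ n = k⟩
  exact hy n

section lambdaS

variable {E : Type*} [NormedAddCommGroup E] [NormedSpace ℝ E] (X : ℕ → Submodule ℝ E)

lemma lambdaS_nonneg : 0 ≤ lambdaS X :=
  Real.sSup_nonneg <| by
    rintro _ ⟨x, -, rfl⟩
    exact Real.iInf_nonneg fun _ => Metric.infDist_nonneg

lemma iInf_infDist_le_lambdaS {x : E} (hx : ‖x‖ = 1) :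
    ⨅ k, Metric.infDist x (X k : Set E) ≤ lambdaS X := by
  refine le_csSup ⟨1, ?_⟩ ⟨x, hx, rfl⟩
  rintro _ ⟨w, hw, rfl⟩
  calc ⨅ k, Metric.infDist w (X k : Set E) ≤ Metric.infDist w (X 0 : Set E) :=
        ciInf_le ⟨0, by rintro _ ⟨k, rfl⟩; exact Metric.infDist_nonneg⟩ 0
    _ ≤ dist w 0 := Metric.infDist_le_dist_of_mem (X 0).zero_mem
    _ = 1 := by simp [hw]

lemma exists_mem_norm_sub_le_of_lambdaS_lt {l : ℝ} (hl : lambdaS X < l) (v : E) :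
    ∃ k, ∃ y ∈ X k, ‖v - y‖ ≤ l * ‖v‖ := by
  rcases eq_or_ne v 0 with rfl | hv
  · exact ⟨0, 0, (X 0).zero_mem, by simp⟩
  have hnv : ‖v‖ ≠ 0 := norm_ne_zero_iff.mpr hv
  have hu : ‖‖v‖⁻¹ • v‖ = 1 := by rw [norm_smul, norm_inv, norm_norm, inv_mul_cancel₀ hnv]
  obtain ⟨k, hk⟩ := exists_lt_of_ciInf_lt ((iInf_infDist_le_lambdaS X hu).trans_lt hl)
  obtain ⟨y, hyX, hyd⟩ := (Metric.infDist_lt_iff ⟨0, (X k).zero_mem⟩).mp hk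
  refine ⟨k, ‖v‖ • y, (X k).smul_mem _ hyX, ?_⟩
  calc ‖v - ‖v‖ • y‖ = ‖‖v‖ • (‖v‖⁻¹ • v - y)‖ := by
        rw [smul_sub, smul_smul, mul_inv_cancel₀ hnv, one_smul]
    _ = dist (‖v‖⁻¹ • v) y * ‖v‖ := by rw [norm_smul, norm_norm, dist_eq_norm, mul_comm]
    _ ≤ l * ‖v‖ := by gcongr

end lambdaS

theorem arss_of_lambda_lt_one_general {E : Type*} [NormedAddCommGroup E] [NormedSpace ℝ E]
    [CompleteSpace E] (X : ℕ → Submodule ℝ E) (hX : ∀ k, IsClosed (X k : Set E)) :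
    ∀ l : ℝ, lambdaS X < l → l < 1 → ∀ x : E,
      ∃ z : ℕ → E, (∀ k, z k ∈ X k) ∧ (Summable fun k => ‖z k‖) ∧
        (∑' k, ‖z k‖) ≤ (1 + l) / (1 - l) * ‖x‖ ∧
        Tendsto (fun n => ∑ k ∈ Finset.range n, z k) atTop (nhds x) := by
  intro l hl hl1 x
  have hl0 : 0 ≤ l := (lambdaS_nonneg X).trans hl.le
  choose κ f hfX hf using exists_mem_norm_sub_le_of_lambdaS_lt X hl
  obtain ⟨z, hzX, hzx, hz, hzle⟩ := exists_hasSum_mem_of_summable_norm X hX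
    (fun n => hfX (greedyResidual f x n)) (summable_norm_greedy hf hl0 hl1 x)
  rw [(hasSum_greedy hf hl0 hl1 x).tsum_eq] at hzx
  exact ⟨z, hzX, hz, hzle.trans (tsum_norm_greedy_le hf hl0 hl1 x), hzx.tendsto_sum_nat⟩

/-- If `λ_S < 1`, then `(X_k)` is an absolutely representing system of subspaces:
for every `λ ∈ (λ_S, 1)`, every `x` equals an absolutely convergent series `Σ z_k`,
`z_k ∈ X_k`, with `Σ ‖z_k‖ ≤ ((1+λ)/(1−λ))‖x‖`. -/
theorem arss_of_lambda_lt_one {E : Type*} [NormedAddCommGroup E] [NormedSpace ℝ E]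
    [CompleteSpace E] (X : ℕ → Submodule ℝ E) (hX : ∀ k, IsClosed (X k : Set E))
    (hlS : lambdaS X < 1) :
    ∀ l : ℝ, lambdaS X < l → l < 1 → ∀ x : E,
      ∃ z : ℕ → E, (∀ k, z k ∈ X k) ∧ (Summable fun k => ‖z k‖) ∧
        (∑' k, ‖z k‖) ≤ (1 + l) / (1 - l) * ‖x‖ ∧
        Tendsto (fun n => ∑ k ∈ Finset.range n, z k) atTop (nhds x) :=
  arss_of_lambda_lt_one_general X hX
end
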